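/- arXiv:2011.14955 — 9 statements merged into one kernel-verified Lean document; each statement's English description precedes it below -/
import Mathlib

section
/- Let Γ be a simplicial complex on a finite ground set E (a collection of subsets of E closed under taking subsets and containing the empty set). Then Γ is a matroid independence complex — i.e., Γ satisfies the augmentation axiom: for all γ, β ∈ Γ with |γ| > |β| there exists x ∈ γ ∖ β such that β ∪ {x} ∈ Γ — if and only if Γ is link-invariant: for every X ⊆ E and every two facets σ, τ of the restriction Γ|X, one has link_Γ(σ) = link_Γ(τ). -/
/-!
Augmentation ⇒ link invariance: the facets of `Γ|X` all have the same size, and a face `β` in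
the link of one facet `σ` is disjoint from `X`. Augmenting another facet `τ` from `β ∪ σ`
gives a face that meets `X` exactly in `τ` (maximality) and has at least `|β| + |τ|`
elements, so it is `β ∪ τ`.

Link invariance ⇒ augmentation: `Γ|X` is pure, by induction on `X`. For facets `a, b` of
`Γ|X` and `s ∈ a \ b`, extend `a \ {s}` to a facet `a'` of `Γ|(X \ {s})`, of which `b` is
also a facet. As `{s}` is not in the link of `b`, it is not in the link of `a'`, so
`a'` strictly contains `a \ {s}` and `|a| ≤ |a'| = |b|`. Augmentation of `β` from `γ` then
follows from purity of `Γ|(β ∪ γ)`.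
-/

variable {α : Type*} [DecidableEq α]

/-- `Γ` is a simplicial complex on the finite ground set `E`: it contains the empty set,
all its faces are subsets of `E`, and it is closed under taking subsets. -/
def IsComplexOn (E : Finset α) (Γ : Set (Finset α)) : Prop :=
  (∅ : Finset α) ∈ Γ ∧ (∀ γ ∈ Γ, γ ⊆ E) ∧ ∀ γ ∈ Γ, ∀ β ⊆ γ, β ∈ Γ

/-- `φ` is a facet (maximal face) of `Γ`. -/
def IsFacetOf (Γ : Set (Finset α)) (φ : Finset α) : Prop :=
  φ ∈ Γ ∧ ∀ ψ ∈ Γ, φ ⊆ ψ → ψ = φ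

/-- The restriction `Γ|S` of a simplicial complex. -/
def restrictC (Γ : Set (Finset α)) (S : Finset α) : Set (Finset α) :=
  {γ ∈ Γ | γ ⊆ S}

/-- The link of a face `σ` in `Γ`. -/
def linkC (Γ : Set (Finset α)) (σ : Finset α) : Set (Finset α) :=
  {β | Disjoint β σ ∧ β ∪ σ ∈ Γ}

def HasAugmentation (Γ : Set (Finset α)) : Prop :=
  ∀ γ ∈ Γ, ∀ β ∈ Γ, β.card < γ.card → ∃ x ∈ γ \ β, insert x β ∈ Γ

def IsPure (Γ : Set (Finset α)) : Prop :=
  ∀ σ τ, IsFacetOf Γ σ → IsFacetOf Γ τ → σ.card = τ.card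

omit [DecidableEq α] in
lemma isPure_of_card_le {Γ : Set (Finset α)}
    (h : ∀ σ τ, IsFacetOf Γ σ → IsFacetOf Γ τ → σ.card ≤ τ.card) : IsPure Γ :=
  fun σ τ hσ hτ => (h σ τ hσ hτ).antisymm (h τ σ hτ hσ)

omit [DecidableEq α] in
lemma IsComplexOn.isLowerSet {E : Finset α} {Γ : Set (Finset α)} (hΓ : IsComplexOn E Γ) :
    IsLowerSet Γ :=
  fun _ _ hβγ hγ => hΓ.2.2 _ hγ _ hβγ

section

variable {Γ : Set (Finset α)} {X Y σ : Finset α}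

lemma IsFacetOf.insert_notMem (hσ : IsFacetOf (restrictC Γ X) σ) {x : α} (hxX : x ∈ X)
    (hxσ : x ∉ σ) : insert x σ ∉ Γ := fun hins =>
  hxσ (hσ.2 _ ⟨hins, Finset.insert_subset hxX hσ.1.2⟩ (Finset.subset_insert x σ) ▸
    Finset.mem_insert_self x σ)

omit [DecidableEq α] in
lemma IsFacetOf.restrictC_anti (hσ : IsFacetOf (restrictC Γ X) σ) (hYX : Y ⊆ X) (hσY : σ ⊆ Y) :
    IsFacetOf (restrictC Γ Y) σ :=
  ⟨⟨hσ.1.1, hσY⟩, fun ψ hψ => hσ.2 ψ ⟨hψ.1, hψ.2.trans hYX⟩⟩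

omit [DecidableEq α] in
lemma exists_isFacetOf_restrictC_superset {A : Finset α} (hA : A ∈ Γ) (hAX : A ⊆ X) :
    ∃ φ, A ⊆ φ ∧ IsFacetOf (restrictC Γ X) φ := by
  have hfin : (restrictC Γ X).Finite :=
    X.powerset.finite_toSet.subset fun γ hγ => Finset.mem_powerset.mpr hγ.2
  obtain ⟨φ, hAφ, hφ⟩ := hfin.exists_le_maximal (show A ∈ restrictC Γ X from ⟨hA, hAX⟩)
  exact ⟨φ, hAφ, hφ.prop, fun ψ hψ hφψ => (hφ.le_of_ge hψ hφψ).antisymm hφψ⟩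

lemma disjoint_of_mem_linkC (hΓ : IsLowerSet Γ) (hσ : IsFacetOf (restrictC Γ X) σ)
    {β : Finset α} (hβ : β ∈ linkC Γ σ) : Disjoint β X :=
  Finset.disjoint_left.mpr fun _ hxβ hxX =>
    hσ.insert_notMem hxX (Finset.disjoint_left.mp hβ.1 hxβ) <|
      hΓ (Finset.insert_subset (Finset.mem_union_left _ hxβ) Finset.subset_union_right) hβ.2

lemma singleton_mem_linkC {s : α} : {s} ∈ linkC Γ σ ↔ s ∉ σ ∧ insert s σ ∈ Γ := by
  simp only [linkC, Set.mem_ofPred_eq, Finset.disjoint_singleton_left, ← Finset.insert_eq]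

end

namespace HasAugmentation

variable {Γ : Set (Finset α)}

lemma exists_superset_card_le (haug : HasAugmentation Γ) {A B : Finset α} (hA : A ∈ Γ)
    (hB : B ∈ Γ) :
    ∃ C ∈ Γ, A ⊆ C ∧ C ⊆ A ∪ B ∧ B.card ≤ C.card := by
  induction h : B.card - A.card generalizing A with
  | zero => exact ⟨A, hA, subset_rfl, Finset.subset_union_left, by omega⟩
  | succ n ih =>
    obtain ⟨x, hx, hxA⟩ := haug B hB A hA (by omega)
    obtain ⟨hxB, hxA'⟩ := Finset.mem_sdiff.mp hx
    obtain ⟨C, hC, hxAC, hCxAB, hBC⟩ :=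
      ih hxA (by rw [Finset.card_insert_of_notMem hxA']; omega)
    refine ⟨C, hC, (Finset.subset_insert x A).trans hxAC, hCxAB.trans ?_, hBC⟩
    exact Finset.union_subset (Finset.insert_subset (Finset.mem_union_right _ hxB)
      Finset.subset_union_left) Finset.subset_union_right

lemma isPure_restrictC (haug : HasAugmentation Γ) (X : Finset α) : IsPure (restrictC Γ X) :=
  isPure_of_card_le fun σ τ hσ hτ => not_lt.mp fun hlt => by
    obtain ⟨x, hx, hxτ⟩ := haug σ hσ.1.1 τ hτ.1.1 hlt
    obtain ⟨hxσ, hxτ'⟩ := Finset.mem_sdiff.mp hx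
    exact hτ.insert_notMem (hσ.1.2 hxσ) hxτ' hxτ

lemma linkC_subset (haug : HasAugmentation Γ) (hΓ : IsLowerSet Γ) {X σ τ : Finset α}
    (hσ : IsFacetOf (restrictC Γ X) σ) (hτ : IsFacetOf (restrictC Γ X) τ) :
    linkC Γ σ ⊆ linkC Γ τ := by
  intro β hβ
  have hβX := disjoint_of_mem_linkC hΓ hσ hβ
  obtain ⟨C, hC, hτC, hCτβσ, hβσC⟩ := haug.exists_superset_card_le hτ.1.1 hβ.2
  have hCX : C ∩ X = τ := hτ.2 _ ⟨hΓ Finset.inter_subset_left hC, Finset.inter_subset_right⟩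
    (Finset.subset_inter hτC hτ.1.2)
  have hCβτ : C ⊆ β ∪ τ := by
    intro y hy
    by_cases hyX : y ∈ X
    · exact Finset.mem_union_right _ (hCX ▸ Finset.mem_inter.mpr ⟨hy, hyX⟩)
    · rcases Finset.mem_union.mp (hCτβσ hy) with hyτ | hyβσ
      · exact absurd (hτ.1.2 hyτ) hyX
      · rcases Finset.mem_union.mp hyβσ with hyβ | hyσ
        · exact Finset.mem_union_left _ hyβ
        · exact absurd (hσ.1.2 hyσ) hyX
  have hβτC : (β ∪ τ).card ≤ C.card := by
    rwa [Finset.card_union_of_disjoint (hβX.mono_right hτ.1.2),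
      ← haug.isPure_restrictC X σ τ hσ hτ,
      ← Finset.card_union_of_disjoint (hβX.mono_right hσ.1.2)]
  exact ⟨hβX.mono_right hτ.1.2, Finset.eq_of_subset_of_card_le hCβτ hβτC ▸ hC⟩

end HasAugmentation

section

variable {Γ : Set (Finset α)}

lemma IsFacetOf.card_le_of_erase (hΓ : IsLowerSet Γ) {X a b : Finset α} {s : α}
    (ha : IsFacetOf (restrictC Γ X) a) (hb : IsFacetOf (restrictC Γ X) b) (hsa : s ∈ a)
    (hsb : s ∉ b) (hpure : IsPure (restrictC Γ (X.erase s)))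
    (hlink : ∀ σ τ, IsFacetOf (restrictC Γ (X.erase s)) σ →
      IsFacetOf (restrictC Γ (X.erase s)) τ → linkC Γ σ = linkC Γ τ) :
    a.card ≤ b.card := by
  have hb' : IsFacetOf (restrictC Γ (X.erase s)) b :=
    hb.restrictC_anti (X.erase_subset s) (Finset.subset_erase.mpr ⟨hb.1.2, hsb⟩)
  obtain ⟨a', haa', ha'⟩ := exists_isFacetOf_restrictC_superset
    (hΓ (a.erase_subset s) ha.1.1) (Finset.erase_subset_erase s ha.1.2)
  have hsa' : s ∉ a' := fun h => Finset.notMem_erase s X (ha'.1.2 h)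
  have hs_link : {s} ∉ linkC Γ a' := hlink a' b ha' hb' ▸ fun h =>
    hb.insert_notMem (ha.1.2 hsa) hsb (singleton_mem_linkC.mp h).2
  have haa's : a.erase s ⊂ a' := haa'.ssubset_of_ne fun h => hs_link <|
    singleton_mem_linkC.mpr ⟨hsa', h ▸ (Finset.insert_erase hsa).symm ▸ ha.1.1⟩
  have hlt := Finset.card_lt_card haa's
  rw [Finset.card_erase_of_mem hsa] at hlt
  have := hpure a' b ha' hb'
  omega

lemma isPure_restrictC_of_linkC_eq (hΓ : IsLowerSet Γ) (X : Finset α)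
    (hlink : ∀ Y ⊆ X, ∀ σ τ, IsFacetOf (restrictC Γ Y) σ → IsFacetOf (restrictC Γ Y) τ →
      linkC Γ σ = linkC Γ τ) :
    IsPure (restrictC Γ X) := by
  induction X using Finset.strongInduction with
  | H X ih =>
  refine isPure_of_card_le fun σ τ hσ hτ => ?_
  by_cases hστ : σ ⊆ τ
  · exact Finset.card_le_card hστ
  obtain ⟨s, hsσ, hsτ⟩ := Finset.not_subset.mp hστ
  have hsX : X.erase s ⊂ X := Finset.erase_ssubset (hσ.1.2 hsσ)
  exact hσ.card_le_of_erase hΓ hτ hsσ hsτ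
    (ih _ hsX fun Y hY => hlink Y (hY.trans hsX.subset)) (hlink _ hsX.subset)

lemma hasAugmentation_of_isPure_restrictC (hΓ : IsLowerSet Γ)
    (hpure : ∀ β ∈ Γ, ∀ γ ∈ Γ, IsPure (restrictC Γ (β ∪ γ))) : HasAugmentation Γ := by
  intro γ hγ β hβ hlt
  obtain ⟨φ, hβφ, hφ⟩ :=
    exists_isFacetOf_restrictC_superset hβ (Finset.subset_union_left (s₂ := γ))
  obtain ⟨ψ, hγψ, hψ⟩ :=
    exists_isFacetOf_restrictC_superset hγ (Finset.subset_union_right (s₁ := β))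
  have hβφ' : β ⊂ φ := hβφ.ssubset_of_ne <| by
    rintro rfl
    have := hpure β hβ γ hγ β ψ hφ hψ
    have := Finset.card_le_card hγψ
    omega
  obtain ⟨x, hxφ, hxβ⟩ := Finset.exists_of_ssubset hβφ'
  exact ⟨x, Finset.mem_sdiff.mpr ⟨(Finset.mem_union.mp (hφ.1.2 hxφ)).resolve_left hxβ, hxβ⟩,
    hΓ (Finset.insert_subset hxφ hβφ) hφ.1.1⟩

end

/-- A simplicial complex `Γ` on a finite ground set `E` is a matroid independence complex
(i.e., satisfies the augmentation axiom) if and only if it is link-invariant: for every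
`X ⊆ E`, any two facets of `Γ|X` have the same link in `Γ`. -/
theorem matroid_iff_link_invariant (E : Finset α) (Γ : Set (Finset α))
    (hΓ : IsComplexOn E Γ) :
    (∀ γ ∈ Γ, ∀ β ∈ Γ, β.card < γ.card → ∃ x ∈ γ \ β, insert x β ∈ Γ) ↔
    (∀ X ⊆ E, ∀ σ τ : Finset α, IsFacetOf (restrictC Γ X) σ →
      IsFacetOf (restrictC Γ X) τ → linkC Γ σ = linkC Γ τ) := by
  constructor
  · rintro (haug : HasAugmentation Γ) X - σ τ hσ hτ
    exact (haug.linkC_subset hΓ.isLowerSet hσ hτ).antisymm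
      (haug.linkC_subset hΓ.isLowerSet hτ hσ)
  · refine fun hlink => hasAugmentation_of_isPure_restrictC hΓ.isLowerSet fun β hβ γ hγ => ?_
    have hβγE : β ∪ γ ⊆ E := Finset.union_subset (hΓ.2.1 β hβ) (hΓ.2.1 γ hγ)
    exact isPure_restrictC_of_linkC_eq hΓ.isLowerSet _ fun Y hY => hlink Y (hY.trans hβγE)
end

section
/- Let (w,Γ) be an ordered complex on a finite vertex set V, and suppose that I and I ⊔ J are both initial segments of w (where J is disjoint from I). Then: (1) (w,Γ)|I = ((w,Γ)|(I⊔J))|I; (2) ((w,Γ)/I)|J = ((w,Γ)|(I⊔J))/I; (3) ((w,Γ)/I)/J = (w,Γ)/(I⊔J). In particular, for (3), the lexicographically minimal facet of Γ|(I⊔J) equals φ_I ∪ φ_J, where φ_I is the lexicographically minimal facet of Γ|I and φ_J is the lexicographically minimal facet of (link_Γ(φ_I))|J. -/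
variable {α : Type*} [DecidableEq α]

/-- Strict lexicographic order on finite subsets with respect to the linear order `w`:
the first element at which `s` and `t` differ (in `w`-increasing lists) belongs to `s`. -/
def lexLT (w : LinearOrder α) (s t : Finset α) : Prop :=
  ∃ m, m ∈ s ∧ m ∉ t ∧ ∀ x, w.lt x m → (x ∈ s ↔ x ∈ t)

def lexLE (w : LinearOrder α) (s t : Finset α) : Prop :=
  s = t ∨ lexLT w s t

/-- `φ` is the lexicographically minimal facet of `Γ` with respect to `w`. -/
def IsLexMinFacet (w : LinearOrder α) (Γ : Set (Finset α)) (φ : Finset α) : Prop :=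
  IsFacetOf Γ φ ∧ ∀ ψ, IsFacetOf Γ ψ → lexLE w φ ψ

/-- `A` is an initial segment of the linear order `w` on the ground set `E`. -/
def IsInitialSeg (w : LinearOrder α) (E A : Finset α) : Prop :=
  A ⊆ E ∧ ∀ x ∈ A, ∀ y ∈ E, w.le y x → y ∈ A

open scoped symmDiff in
/-- Lexicographic comparability of distinct finsets. -/
theorem lexLT_total (w : LinearOrder α) {s t : Finset α} (h : s ≠ t) :
    lexLT w s t ∨ lexLT w t s := by
  letI := w
  have hne : (s ∆ t).Nonempty := by
    rw [Finset.nonempty_iff_ne_empty]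
    intro h0
    exact h (by simpa [symmDiff_eq_bot] using h0)
  set m := (s ∆ t).min' hne with hm
  have hmem : m ∈ s ∆ t := Finset.min'_mem _ hne
  have hagree : ∀ x, w.lt x m → (x ∈ s ↔ x ∈ t) := by
    intro x hx
    by_contra hiff
    have hxmem : x ∈ s ∆ t := by
      rw [Finset.mem_symmDiff]; tauto
    exact absurd (Finset.min'_le _ _ hxmem) (not_le_of_gt hx)
  rw [Finset.mem_symmDiff] at hmem
  rcases hmem with ⟨h1, h2⟩ | ⟨h1, h2⟩
  · exact Or.inl ⟨m, h1, h2, hagree⟩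
  · exact Or.inr ⟨m, h1, h2, fun x hx => (hagree x hx).symm⟩

/-- Every face of a complex with bounded ground set extends to a facet. -/
theorem exists_facet_superset (Γ' : Set (Finset α)) (S : Finset α)
    (hsub : ∀ γ ∈ Γ', γ ⊆ S) {σ : Finset α} (hσ : σ ∈ Γ') :
    ∃ τ, IsFacetOf Γ' τ ∧ σ ⊆ τ := by
  have hfin : {τ ∈ Γ' | σ ⊆ τ}.Finite := by
    apply Set.Finite.subset (S.powerset.finite_toSet)
    intro τ hτ
    simpa using hsub τ hτ.1
  obtain ⟨τ, hτ, hmax⟩ := Set.Finite.exists_maximalFor Finset.card _ hfin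
    ⟨σ, hσ, subset_rfl⟩
  refine ⟨τ, ⟨hτ.1, ?_⟩, hτ.2⟩
  intro ρ hρ hsub'
  exact (Finset.eq_of_subset_of_card_le hsub'
    (hmax (j := ρ) ⟨hρ, hτ.2.trans hsub'⟩ (Finset.card_le_card hsub'))).symm

/-- The lex-minimal facet is lexicographically at most every face. -/
theorem lexmin_facet_not_gt_face (w : LinearOrder α) (Γ' : Set (Finset α)) (S : Finset α)
    (hsub : ∀ γ ∈ Γ', γ ⊆ S) {φ σ : Finset α}
    (hφ : IsLexMinFacet w Γ' φ) (hσ : σ ∈ Γ') : ¬ lexLT w σ φ := by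
  letI := w
  rintro ⟨m, hms, hmφ, hagree⟩
  obtain ⟨τ, hτfac, hστ⟩ := exists_facet_superset Γ' S hsub hσ
  have hne : φ ≠ τ := fun h => hmφ (h ▸ hστ hms)
  rcases hφ.2 τ hτfac with h | ⟨m', h1, h2, hag'⟩
  · exact hne h
  · rcases lt_trichotomy m' m with hlt | heq | hgt
    · exact h2 (hστ ((hagree m' hlt).mpr h1))
    · exact hmφ (heq ▸ h1)
    · exact hmφ ((hag' m hgt).mpr (hστ hms))

/-- Restriction/contraction relations for an ordered complex `(w,Γ)` on ground set `E`:
if `I` and `I ⊔ J` are initial segments of `w`, `φ` is the lex-minimal facet of `Γ|I` and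
`ψ` is the lex-minimal facet of `(Γ/I)|J = (link_Γ φ)|J`, then
(1) `(w,Γ)|I = ((w,Γ)|(I⊔J))|I`;
(2) `((w,Γ)/I)|J = ((w,Γ)|(I⊔J))/I`;
(3) `((w,Γ)/I)/J = (w,Γ)/(I⊔J)`, and in particular the lex-minimal facet of `Γ|(I⊔J)`
is `φ ∪ ψ`. -/
theorem restriction_contraction_relations
    (w : LinearOrder α) (E : Finset α) (Γ : Set (Finset α))
    (hΓ : IsComplexOn E Γ)
    (I J : Finset α) (hdisj : Disjoint I J)
    (hI : IsInitialSeg w E I) (hIJ : IsInitialSeg w E (I ∪ J))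
    (φ : Finset α) (hφ : IsLexMinFacet w (restrictC Γ I) φ)
    (ψ : Finset α) (hψ : IsLexMinFacet w (restrictC (linkC Γ φ) J) ψ) :
    restrictC Γ I = restrictC (restrictC Γ (I ∪ J)) I ∧
    restrictC (linkC Γ φ) J = linkC (restrictC Γ (I ∪ J)) φ ∧
    IsLexMinFacet w (restrictC Γ (I ∪ J)) (φ ∪ ψ) ∧
    linkC (linkC Γ φ) ψ = linkC Γ (φ ∪ ψ) := by
  letI := w
  obtain ⟨hemp, hE, hclosed⟩ := hΓ
  simp only [IsLexMinFacet, IsFacetOf, restrictC, linkC, Set.mem_setOf_eq] at hφ hψ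
  obtain ⟨⟨⟨hφΓ, hφI⟩, hφmax⟩, hφmin⟩ := hφ
  obtain ⟨⟨⟨⟨hψdisj, hψφΓ⟩, hψJ⟩, hψmax⟩, hψmin⟩ := hψ
  -- every element of I is w-below every element of J
  have hIJlt : ∀ a ∈ I, ∀ b ∈ J, w.lt a b := by
    intro a ha b hb
    by_contra h
    exact Finset.disjoint_left.mp hdisj
      (hI.2 a ha b (hIJ.1 (Finset.mem_union_right I hb)) (le_of_not_gt h)) hb
  -- Part 1
  have part1 : restrictC Γ I = restrictC (restrictC Γ (I ∪ J)) I := by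
    ext γ
    simp only [restrictC, Set.mem_setOf_eq]
    constructor
    · rintro ⟨h1, h2⟩
      exact ⟨⟨h1, h2.trans Finset.subset_union_left⟩, h2⟩
    · rintro ⟨⟨h1, _⟩, h2⟩
      exact ⟨h1, h2⟩
  -- key fact for part 2: faces compatible with φ avoid I
  have key2 : ∀ β : Finset α, Disjoint β φ → β ∪ φ ∈ Γ → β ⊆ I ∪ J → β ⊆ J := by
    intro β hd hβ hsub x hx
    rcases Finset.mem_union.mp (hsub hx) with hxI | hxJ
    · exfalso
      have hins : insert x φ ∈ Γ := by
        apply hclosed _ hβ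
        intro y hy
        rcases Finset.mem_insert.mp hy with rfl | hy
        · exact Finset.mem_union_left _ hx
        · exact Finset.mem_union_right _ hy
      have hinsI : insert x φ ⊆ I := by
        intro y hy
        rcases Finset.mem_insert.mp hy with rfl | hy
        · exact hxI
        · exact hφI hy
      have heq := hφmax (insert x φ) ⟨hins, hinsI⟩ (Finset.subset_insert _ _)
      exact Finset.disjoint_left.mp hd hx (heq ▸ Finset.mem_insert_self x φ)
    · exact hxJ
  -- Part 2
  have part2 : restrictC (linkC Γ φ) J = linkC (restrictC Γ (I ∪ J)) φ := by
    ext β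
    simp only [restrictC, linkC, Set.mem_setOf_eq]
    constructor
    · rintro ⟨⟨hd, hβ⟩, hsub⟩
      exact ⟨hd, hβ, Finset.union_subset (hsub.trans Finset.subset_union_right)
        (hφI.trans Finset.subset_union_left)⟩
    · rintro ⟨hd, hβ, hsub⟩
      exact ⟨⟨hd, hβ⟩, key2 β hd hβ (Finset.subset_union_left.trans hsub)⟩
  -- Part 3: φ ∪ ψ is a facet of Γ|(I∪J)
  have hφψΓ : φ ∪ ψ ∈ Γ := by rwa [Finset.union_comm]
  have hfacet : IsFacetOf (restrictC Γ (I ∪ J)) (φ ∪ ψ) := by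
    refine ⟨⟨hφψΓ, Finset.union_subset_union hφI hψJ⟩, ?_⟩
    rintro χ ⟨hχΓ, hχIJ⟩ hsubχ
    have hφχ : φ ⊆ χ := Finset.subset_union_left.trans hsubχ
    have hχI : χ ∩ I = φ := by
      apply hφmax
      · exact ⟨hclosed _ hχΓ _ Finset.inter_subset_left, Finset.inter_subset_right⟩
      · intro y hy
        exact Finset.mem_inter.mpr ⟨hφχ hy, hφI hy⟩
    have hχdiff : χ \ φ = ψ := by
      apply hψmax
      · refine ⟨⟨Finset.sdiff_disjoint, ?_⟩, ?_⟩
        · rwa [Finset.sdiff_union_self_eq_union, Finset.union_eq_left.mpr hφχ]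
        · intro x hx
          obtain ⟨hxχ, hxφ⟩ := Finset.mem_sdiff.mp hx
          rcases Finset.mem_union.mp (hχIJ hxχ) with hxI | hxJ
          · exact absurd (hχI ▸ Finset.mem_inter.mpr ⟨hxχ, hxI⟩) hxφ
          · exact hxJ
      · intro y hy
        exact Finset.mem_sdiff.mpr ⟨hsubχ (Finset.mem_union_right _ hy),
          Finset.disjoint_left.mp hψdisj hy⟩
    rw [← hχdiff]
    exact (Finset.union_sdiff_of_subset hφχ).symm
  have part3 : IsLexMinFacet w (restrictC Γ (I ∪ J)) (φ ∪ ψ) := by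
    refine ⟨hfacet, ?_⟩
    intro χ hχfac
    obtain ⟨⟨hχΓ, hχIJ⟩, hχmax⟩ := hχfac
    by_cases hcase : χ ∩ I = φ
    · -- I-part of χ equals φ; compare J-parts
      have hφχ : φ ⊆ χ := hcase ▸ Finset.inter_subset_left
      have hχeq : φ ∪ (χ \ φ) = χ := Finset.union_sdiff_of_subset hφχ
      have hχJsub : χ \ φ ⊆ J := by
        intro x hx
        obtain ⟨hxχ, hxφ⟩ := Finset.mem_sdiff.mp hx
        rcases Finset.mem_union.mp (hχIJ hxχ) with hxI | hxJ
        · exact absurd (hcase ▸ Finset.mem_inter.mpr ⟨hxχ, hxI⟩) hxφ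
        · exact hxJ
      have hχJfac : IsFacetOf (restrictC (linkC Γ φ) J) (χ \ φ) := by
        refine ⟨⟨⟨Finset.sdiff_disjoint, by rwa [Finset.sdiff_union_self_eq_union,
          Finset.union_eq_left.mpr hφχ]⟩, hχJsub⟩, ?_⟩
        rintro τ ⟨⟨hτd, hτΓ⟩, hτJ⟩ hsubτ
        have hτχ : τ ∪ φ = χ := by
          apply hχmax
          · exact ⟨hτΓ, Finset.union_subset (hτJ.trans Finset.subset_union_right)
              (hφI.trans Finset.subset_union_left)⟩
          · rw [← hχeq]
            rw [Finset.union_comm τ φ]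
            exact Finset.union_subset_union subset_rfl hsubτ
        apply subset_antisymm
        · intro x hx
          exact Finset.mem_sdiff.mpr ⟨hτχ ▸ Finset.mem_union_left _ hx,
            Finset.disjoint_left.mp hτd hx⟩
        · exact hsubτ
      rcases hψmin (χ \ φ) (by simpa only [IsLexMinFacet, IsFacetOf, restrictC, linkC,
          Set.mem_setOf_eq] using hχJfac) with heq | ⟨m, hm1, hm2, hag⟩
      · exact Or.inl (by rw [← heq] at hχeq; exact hχeq)
      · refine Or.inr ⟨m, Finset.mem_union_right _ hm1, ?_, ?_⟩
        · intro hmχ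
          rw [← hχeq] at hmχ
          rcases Finset.mem_union.mp hmχ with h | h
          · exact Finset.disjoint_left.mp hdisj (hφI h) (hψJ hm1)
          · exact hm2 h
        · intro x hx
          rw [← hχeq]
          simp only [Finset.mem_union, hag x hx]
    · -- I-parts differ: φ is lex-smaller already on I
      have hχIface : χ ∩ I ∈ restrictC Γ I :=
        ⟨hclosed _ hχΓ _ Finset.inter_subset_left, Finset.inter_subset_right⟩
      have hφlex : IsLexMinFacet w (restrictC Γ I) φ := by
        refine ⟨⟨?_, hφmax⟩, hφmin⟩
        exact ⟨hφΓ, hφI⟩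
      have hnot : ¬ lexLT w (χ ∩ I) φ :=
        lexmin_facet_not_gt_face w (restrictC Γ I) I (fun γ hγ => hγ.2) hφlex hχIface
      have hlt : lexLT w φ (χ ∩ I) := by
        rcases lexLT_total w (fun h : φ = χ ∩ I => hcase h.symm) with h | h
        · exact h
        · exact absurd h hnot
      obtain ⟨m, hm1, hm2, hag⟩ := hlt
      refine Or.inr ⟨m, Finset.mem_union_left _ hm1, ?_, ?_⟩
      · intro hmχ
        exact hm2 (Finset.mem_inter.mpr ⟨hmχ, hφI hm1⟩)
      · intro x hx
        constructor
        · intro hxφψ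
          rcases Finset.mem_union.mp hxφψ with hxφ | hxψ
          · exact Finset.mem_inter.mp ((hag x hx).mp hxφ) |>.1
          · exact absurd hx (asymm (hIJlt m (hφI hm1) x (hψJ hxψ)))
        · intro hxχ
          rcases Finset.mem_union.mp (hχIJ hxχ) with hxI | hxJ
          · exact Finset.mem_union_left _
              ((hag x hx).mpr (Finset.mem_inter.mpr ⟨hxχ, hxI⟩))
          · exact absurd hx (asymm (hIJlt m (hφI hm1) x hxJ))
  -- Part 4
  have part4 : linkC (linkC Γ φ) ψ = linkC Γ (φ ∪ ψ) := by
    ext β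
    simp only [linkC, Set.mem_setOf_eq]
    have hu : β ∪ ψ ∪ φ = β ∪ (φ ∪ ψ) := by
      ext x
      simp only [Finset.mem_union]
      tauto
    constructor
    · rintro ⟨hβψ, hβψφ, hmem⟩
      obtain ⟨hβφ, _⟩ := Finset.disjoint_union_left.mp hβψφ
      exact ⟨Finset.disjoint_union_right.mpr ⟨hβφ, hβψ⟩, by rwa [← hu]⟩
    · rintro ⟨hd, hmem⟩
      obtain ⟨hβφ, hβψ⟩ := Finset.disjoint_union_right.mp hd
      exact ⟨hβψ, Finset.disjoint_union_left.mpr ⟨hβφ, hψdisj⟩, by rwa [hu]⟩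
  exact ⟨part1, part2, part3, part4⟩
end

section
/- Let (w1,Γ1,I1) and (w2,Γ2,I2) be ordered complexes on disjoint vertex sets, let A1 be an initial segment of w1 and A2 an initial segment of w2, and let w be a shuffle of w1 and w2 such that A1 ⊔ A2 is an initial segment of w. Let ŵ and w̌ denote the restrictions of w to A1 ⊔ A2 and to (I1∖A1) ⊔ (I2∖A2), respectively. Then: (1) ((w1,Γ1) *_w (w2,Γ2)) | (A1⊔A2) = ((w1,Γ1)|A1) *_{ŵ} ((w2,Γ2)|A2); and (2) ((w1,Γ1) *_w (w2,Γ2)) / (A1⊔A2) = ((w1,Γ1)/A1) *_{w̌} ((w2,Γ2)/A2). -/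
variable {α : Type*} [DecidableEq α]

/-- The join of two simplicial complexes on disjoint vertex sets. -/
def joinC (Γ1 Γ2 : Set (Finset α)) : Set (Finset α) :=
  {γ | ∃ γ1 ∈ Γ1, ∃ γ2 ∈ Γ2, γ = γ1 ∪ γ2}

/-- `w` is a shuffle of `w1` and `w2` (with respect to the disjoint sets `I1`, `I2`):
it restricts to `w1` on `I1` and to `w2` on `I2`. -/
def IsShuffle (w1 w2 w : LinearOrder α) (I1 I2 : Finset α) : Prop :=
  (∀ x ∈ I1, ∀ y ∈ I1, w.le x y ↔ w1.le x y) ∧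
  (∀ x ∈ I2, ∀ y ∈ I2, w.le x y ↔ w2.le x y)

/-!
Faces of `Γ1` and `Γ2` live on the disjoint sets `I1` and `I2`, so a set supported on `I1 ∪ I2`
splits uniquely into its traces on `I1` and `I2`, and inclusions and equalities between such
unions hold componentwise. Restrictions, facets and links of the join therefore decompose
componentwise. Under a shuffle the lexicographic comparison of `s1 ∪ s2` with `t1 ∪ t2` is
componentwise too: their first difference is the earlier of the first differences of the
components. Hence `φ1 ∪ φ2` is the lexicographically minimal facet of the restricted join, and its
link is the join of the links of `φ1` and `φ2`.
-/

namespace Finset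

variable {I1 I2 s1 s2 t1 t2 : Finset α}

theorem union_inter_eq_left_of_disjoint (hI : Disjoint I1 I2) (hs1 : s1 ⊆ I1) (hs2 : s2 ⊆ I2) :
    (s1 ∪ s2) ∩ I1 = s1 := by
  rw [union_inter_distrib_right, inter_eq_left.2 hs1,
    disjoint_iff_inter_eq_empty.1 (hI.symm.mono_left hs2), union_empty]

theorem union_inter_eq_right_of_disjoint (hI : Disjoint I1 I2) (hs1 : s1 ⊆ I1) (hs2 : s2 ⊆ I2) :
    (s1 ∪ s2) ∩ I2 = s2 := by
  rw [union_comm]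
  exact union_inter_eq_left_of_disjoint hI.symm hs2 hs1

theorem union_subset_union_iff_of_disjoint (hI : Disjoint I1 I2) (hs1 : s1 ⊆ I1)
    (hs2 : s2 ⊆ I2) (ht1 : t1 ⊆ I1) (ht2 : t2 ⊆ I2) :
    s1 ∪ s2 ⊆ t1 ∪ t2 ↔ s1 ⊆ t1 ∧ s2 ⊆ t2 := by
  refine ⟨fun h => ⟨?_, ?_⟩, fun h => union_subset_union h.1 h.2⟩
  · rw [← union_inter_eq_left_of_disjoint hI hs1 hs2, ← union_inter_eq_left_of_disjoint hI ht1 ht2]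
    exact inter_subset_inter_right h
  · rw [← union_inter_eq_right_of_disjoint hI hs1 hs2,
      ← union_inter_eq_right_of_disjoint hI ht1 ht2]
    exact inter_subset_inter_right h

theorem union_eq_union_iff_of_disjoint (hI : Disjoint I1 I2) (hs1 : s1 ⊆ I1)
    (hs2 : s2 ⊆ I2) (ht1 : t1 ⊆ I1) (ht2 : t2 ⊆ I2) :
    s1 ∪ s2 = t1 ∪ t2 ↔ s1 = t1 ∧ s2 = t2 := by
  refine ⟨fun h => ⟨?_, ?_⟩, fun h => h.1 ▸ h.2 ▸ rfl⟩
  · rw [← union_inter_eq_left_of_disjoint hI hs1 hs2, h,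
      union_inter_eq_left_of_disjoint hI ht1 ht2]
  · rw [← union_inter_eq_right_of_disjoint hI hs1 hs2, h,
      union_inter_eq_right_of_disjoint hI ht1 ht2]

end Finset

open Finset

section Join

variable {I1 I2 : Finset α} {Γ1 Γ2 : Set (Finset α)}

theorem restrictC_joinC (hΓ1 : ∀ γ ∈ Γ1, γ ⊆ I1) (hΓ2 : ∀ γ ∈ Γ2, γ ⊆ I2)
    (hI : Disjoint I1 I2) {S1 S2 : Finset α} (hS1 : S1 ⊆ I1) (hS2 : S2 ⊆ I2) :
    restrictC (joinC Γ1 Γ2) (S1 ∪ S2) = joinC (restrictC Γ1 S1) (restrictC Γ2 S2) := by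
  ext γ
  constructor
  · rintro ⟨⟨γ1, hγ1, γ2, hγ2, rfl⟩, hγS⟩
    obtain ⟨h1, h2⟩ :=
      (union_subset_union_iff_of_disjoint hI (hΓ1 γ1 hγ1) (hΓ2 γ2 hγ2) hS1 hS2).1 hγS
    exact ⟨γ1, ⟨hγ1, h1⟩, γ2, ⟨hγ2, h2⟩, rfl⟩
  · rintro ⟨γ1, ⟨hγ1, h1⟩, γ2, ⟨hγ2, h2⟩, rfl⟩
    exact ⟨⟨γ1, hγ1, γ2, hγ2, rfl⟩, union_subset_union h1 h2⟩

theorem isFacetOf_joinC_union_iff (hΓ1 : ∀ γ ∈ Γ1, γ ⊆ I1) (hΓ2 : ∀ γ ∈ Γ2, γ ⊆ I2)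
    (hI : Disjoint I1 I2) {φ1 φ2 : Finset α} (hφ1 : φ1 ∈ Γ1) (hφ2 : φ2 ∈ Γ2) :
    IsFacetOf (joinC Γ1 Γ2) (φ1 ∪ φ2) ↔ IsFacetOf Γ1 φ1 ∧ IsFacetOf Γ2 φ2 := by
  constructor
  · rintro ⟨-, hmax⟩
    refine ⟨⟨hφ1, fun ψ1 hψ1 h => ?_⟩, ⟨hφ2, fun ψ2 hψ2 h => ?_⟩⟩
    · exact ((union_eq_union_iff_of_disjoint hI (hΓ1 ψ1 hψ1) (hΓ2 φ2 hφ2) (hΓ1 φ1 hφ1)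
        (hΓ2 φ2 hφ2)).1 (hmax _ ⟨ψ1, hψ1, φ2, hφ2, rfl⟩ (union_subset_union_left h))).1
    · exact ((union_eq_union_iff_of_disjoint hI (hΓ1 φ1 hφ1) (hΓ2 ψ2 hψ2) (hΓ1 φ1 hφ1)
        (hΓ2 φ2 hφ2)).1 (hmax _ ⟨φ1, hφ1, ψ2, hψ2, rfl⟩ (union_subset_union_right h))).2
  · rintro ⟨⟨-, hmax1⟩, ⟨-, hmax2⟩⟩
    refine ⟨⟨φ1, hφ1, φ2, hφ2, rfl⟩, ?_⟩
    rintro _ ⟨ψ1, hψ1, ψ2, hψ2, rfl⟩ h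
    obtain ⟨h1, h2⟩ := (union_subset_union_iff_of_disjoint hI (hΓ1 φ1 hφ1) (hΓ2 φ2 hφ2)
      (hΓ1 ψ1 hψ1) (hΓ2 ψ2 hψ2)).1 h
    rw [hmax1 ψ1 hψ1 h1, hmax2 ψ2 hψ2 h2]

theorem linkC_joinC_union (hΓ1 : ∀ γ ∈ Γ1, γ ⊆ I1) (hΓ2 : ∀ γ ∈ Γ2, γ ⊆ I2)
    (hI : Disjoint I1 I2) {φ1 φ2 : Finset α} (hφ1 : φ1 ⊆ I1) (hφ2 : φ2 ⊆ I2) :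
    linkC (joinC Γ1 Γ2) (φ1 ∪ φ2) = joinC (linkC Γ1 φ1) (linkC Γ2 φ2) := by
  ext β
  constructor
  · rintro ⟨hβφ, γ1, hγ1, γ2, hγ2, hβγ⟩
    have hβI : β ⊆ I1 ∪ I2 := calc
      β ⊆ β ∪ (φ1 ∪ φ2) := subset_union_left
      _ = γ1 ∪ γ2 := hβγ
      _ ⊆ I1 ∪ I2 := union_subset_union (hΓ1 γ1 hγ1) (hΓ2 γ2 hγ2)
    have hsplit : β = β ∩ I1 ∪ β ∩ I2 := by
      rw [← inter_union_distrib_left, inter_eq_left.2 hβI]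
    obtain ⟨h1, h2⟩ := (union_eq_union_iff_of_disjoint hI
      (union_subset inter_subset_right hφ1) (union_subset inter_subset_right hφ2)
      (hΓ1 γ1 hγ1) (hΓ2 γ2 hγ2)).1 (by rw [union_union_union_comm, ← hsplit, hβγ])
    refine ⟨β ∩ I1, ⟨?_, h1 ▸ hγ1⟩, β ∩ I2, ⟨?_, h2 ▸ hγ2⟩, hsplit⟩
    · exact (hβφ.mono_left inter_subset_left).mono_right subset_union_left
    · exact (hβφ.mono_left inter_subset_left).mono_right subset_union_right
  · rintro ⟨β1, ⟨hβφ1, hβ1⟩, β2, ⟨hβφ2, hβ2⟩, rfl⟩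
    have hβ1I : β1 ⊆ I1 := subset_union_left.trans (hΓ1 _ hβ1)
    have hβ2I : β2 ⊆ I2 := subset_union_left.trans (hΓ2 _ hβ2)
    refine ⟨?_, β1 ∪ φ1, hβ1, β2 ∪ φ2, hβ2, union_union_union_comm β1 β2 φ1 φ2⟩
    exact disjoint_union_left.2 ⟨disjoint_union_right.2 ⟨hβφ1, hI.mono hβ1I hφ2⟩,
      disjoint_union_right.2 ⟨hI.symm.mono hβ2I hφ1, hβφ2⟩⟩

end Join

section Order

omit [DecidableEq α]

variable (w : LinearOrder α) {s t : Finset α}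

theorem lexLT_asymm (h : lexLT w s t) : ¬lexLT w t s := by
  rintro ⟨m', hm't, hm's, hm'⟩
  obtain ⟨m, hms, hmt, hm⟩ := h
  let := w
  rcases lt_trichotomy m m' with hlt | rfl | hlt
  · exact hmt ((hm' m hlt).2 hms)
  · exact hm's hms
  · exact hm's ((hm m' hlt).2 hm't)

theorem lexLE_antisymm (h : lexLE w s t) (h' : lexLE w t s) : s = t := by
  rcases h with rfl | h
  · rfl
  · rcases h' with rfl | h'
    · rfl
    · exact absurd h' (lexLT_asymm w h)

theorem IsLexMinFacet.unique {Γ : Set (Finset α)} {φ ψ : Finset α} (hφ : IsLexMinFacet w Γ φ)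
    (hψ : IsLexMinFacet w Γ ψ) : φ = ψ :=
  lexLE_antisymm w (hφ.2 ψ hψ.1) (hψ.2 φ hφ.1)

end Order

section Shuffle

omit [DecidableEq α]

variable {w1 w2 w : LinearOrder α} {I1 I2 : Finset α}

theorem IsShuffle.lt_imp_lt_left (hsh : IsShuffle w1 w2 w I1 I2) :
    ∀ x ∈ I1, ∀ y ∈ I1, w.lt x y → w1.lt x y := by
  intro x hx y hy
  rw [@lt_iff_not_ge _ w, @lt_iff_not_ge _ w1, hsh.1 y hy x hx]
  exact id

theorem IsShuffle.lt_imp_lt_right (hsh : IsShuffle w1 w2 w I1 I2) :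
    ∀ x ∈ I2, ∀ y ∈ I2, w.lt x y → w2.lt x y := by
  intro x hx y hy
  rw [@lt_iff_not_ge _ w, @lt_iff_not_ge _ w2, hsh.2 y hy x hx]
  exact id

end Shuffle

section Lex

variable (w : LinearOrder α) {s t : Finset α}

theorem lexLE_of_lt_imp_lt {w' : LinearOrder α} {I : Finset α} (hs : s ⊆ I) (ht : t ⊆ I)
    (hw : ∀ x ∈ I, ∀ y ∈ I, w.lt x y → w'.lt x y) (h : lexLE w' s t) : lexLE w s t := by
  rcases h with rfl | ⟨m, hms, hmt, hm⟩
  · exact Or.inl rfl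
  refine Or.inr ⟨m, hms, hmt, fun x hx => ?_⟩
  by_cases hxI : x ∈ I
  · exact hm x (hw x hxI m (hs hms) hx)
  · exact iff_of_false (fun h => hxI (hs h)) (fun h => hxI (ht h))

theorem lexLT_union {s1 s2 t1 t2 : Finset α} {m : α} (hms : m ∈ s1) (hmt : m ∉ t1 ∪ t2)
    (h1 : ∀ x, w.lt x m → (x ∈ s1 ↔ x ∈ t1)) (h2 : ∀ x, w.lt x m → (x ∈ s2 ↔ x ∈ t2)) :
    lexLT w (s1 ∪ s2) (t1 ∪ t2) :=
  ⟨m, mem_union_left _ hms, hmt, fun x hx => by simp only [mem_union, h1 x hx, h2 x hx]⟩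

theorem lexLE_union {I1 I2 s1 s2 t1 t2 : Finset α} (hI : Disjoint I1 I2) (hs1 : s1 ⊆ I1)
    (hs2 : s2 ⊆ I2) (ht1 : t1 ⊆ I1) (ht2 : t2 ⊆ I2) (h1 : lexLE w s1 t1)
    (h2 : lexLE w s2 t2) : lexLE w (s1 ∪ s2) (t1 ∪ t2) := by
  have h12 : ∀ x ∈ s1, x ∉ t2 := fun x hx h => disjoint_left.1 hI (hs1 hx) (ht2 h)
  have h21 : ∀ x ∈ s2, x ∉ t1 := fun x hx h => disjoint_left.1 hI (ht1 h) (hs2 hx)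
  let := w
  rcases h1 with rfl | ⟨m1, hm1s, hm1t, hm1⟩ <;> rcases h2 with rfl | ⟨m2, hm2s, hm2t, hm2⟩
  · exact Or.inl rfl
  · rw [union_comm s1 s2, union_comm s1 t2]
    exact Or.inr (lexLT_union w hm2s (notMem_union.2 ⟨hm2t, h21 m2 hm2s⟩) hm2 fun _ _ => Iff.rfl)
  · exact Or.inr (lexLT_union w hm1s (notMem_union.2 ⟨hm1t, h12 m1 hm1s⟩) hm1 fun _ _ => Iff.rfl)
  · right
    rcases le_total m1 m2 with hle | hle
    · exact lexLT_union w hm1s (notMem_union.2 ⟨hm1t, h12 m1 hm1s⟩) hm1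
        fun x hx => hm2 x (lt_of_lt_of_le hx hle)
    · rw [union_comm s1 s2, union_comm t1 t2]
      exact lexLT_union w hm2s (notMem_union.2 ⟨hm2t, h21 m2 hm2s⟩) hm2
        fun x hx => hm1 x (lt_of_lt_of_le hx hle)

end Lex

theorem isLexMinFacet_joinC_union {w1 w2 w : LinearOrder α} {I1 I2 : Finset α}
    {Γ1 Γ2 : Set (Finset α)} (hΓ1 : ∀ γ ∈ Γ1, γ ⊆ I1) (hΓ2 : ∀ γ ∈ Γ2, γ ⊆ I2)
    (hI : Disjoint I1 I2) (hsh : IsShuffle w1 w2 w I1 I2) {φ1 φ2 : Finset α}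
    (hφ1 : IsLexMinFacet w1 Γ1 φ1) (hφ2 : IsLexMinFacet w2 Γ2 φ2) :
    IsLexMinFacet w (joinC Γ1 Γ2) (φ1 ∪ φ2) := by
  obtain ⟨hf1, hmin1⟩ := hφ1
  obtain ⟨hf2, hmin2⟩ := hφ2
  refine ⟨(isFacetOf_joinC_union_iff hΓ1 hΓ2 hI hf1.1 hf2.1).2 ⟨hf1, hf2⟩, fun ψ hψ => ?_⟩
  obtain ⟨ψ1, hψ1, ψ2, hψ2, rfl⟩ := hψ.1
  obtain ⟨hg1, hg2⟩ := (isFacetOf_joinC_union_iff hΓ1 hΓ2 hI hψ1 hψ2).1 hψ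
  exact lexLE_union w hI (hΓ1 _ hf1.1) (hΓ2 _ hf2.1) (hΓ1 _ hψ1) (hΓ2 _ hψ2)
    (lexLE_of_lt_imp_lt w (hΓ1 _ hf1.1) (hΓ1 _ hψ1) hsh.lt_imp_lt_left (hmin1 ψ1 hg1))
    (lexLE_of_lt_imp_lt w (hΓ2 _ hf2.1) (hΓ2 _ hψ2) hsh.lt_imp_lt_right (hmin2 ψ2 hg2))

theorem orderedJoin_restriction_contraction_general
    (w1 w2 w : LinearOrder α) (I1 I2 : Finset α) (Γ1 Γ2 : Set (Finset α))
    (h1 : IsComplexOn I1 Γ1) (h2 : IsComplexOn I2 Γ2) (hdisj : Disjoint I1 I2)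
    (A1 A2 : Finset α)
    (hA1 : IsInitialSeg w1 I1 A1) (hA2 : IsInitialSeg w2 I2 A2)
    (hsh : IsShuffle w1 w2 w I1 I2) :
    restrictC (joinC Γ1 Γ2) (A1 ∪ A2) = joinC (restrictC Γ1 A1) (restrictC Γ2 A2) ∧
    ∀ φ1 φ2 φ : Finset α,
      IsLexMinFacet w1 (restrictC Γ1 A1) φ1 →
      IsLexMinFacet w2 (restrictC Γ2 A2) φ2 →
      IsLexMinFacet w (restrictC (joinC Γ1 Γ2) (A1 ∪ A2)) φ →
      linkC (joinC Γ1 Γ2) φ = joinC (linkC Γ1 φ1) (linkC Γ2 φ2) := by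
  have hres := restrictC_joinC h1.2.1 h2.2.1 hdisj hA1.1 hA2.1
  refine ⟨hres, fun φ1 φ2 φ hφ1 hφ2 hφ => ?_⟩
  obtain rfl : φ = φ1 ∪ φ2 := hφ.unique w <| hres ▸
    isLexMinFacet_joinC_union (fun γ hγ => h1.2.1 γ hγ.1) (fun γ hγ => h2.2.1 γ hγ.1)
      hdisj hsh hφ1 hφ2
  exact linkC_joinC_union h1.2.1 h2.2.1 hdisj (h1.2.1 _ hφ1.1.1.1) (h2.2.1 _ hφ2.1.1.1)

/-- Compatibility of the ordered join with initial restriction and initial contraction: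
(1) `((w1,Γ1) *_w (w2,Γ2)) | (A1⊔A2) = ((w1,Γ1)|A1) *_{ŵ} ((w2,Γ2)|A2)`;
(2) `((w1,Γ1) *_w (w2,Γ2)) / (A1⊔A2) = ((w1,Γ1)/A1) *_{w̌} ((w2,Γ2)/A2)`. -/
theorem orderedJoin_restriction_contraction
    (w1 w2 w : LinearOrder α) (I1 I2 : Finset α) (Γ1 Γ2 : Set (Finset α))
    (h1 : IsComplexOn I1 Γ1) (h2 : IsComplexOn I2 Γ2) (hdisj : Disjoint I1 I2)
    (A1 A2 : Finset α)
    (hA1 : IsInitialSeg w1 I1 A1) (hA2 : IsInitialSeg w2 I2 A2)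
    (hsh : IsShuffle w1 w2 w I1 I2)
    (hA : IsInitialSeg w (I1 ∪ I2) (A1 ∪ A2)) :
    restrictC (joinC Γ1 Γ2) (A1 ∪ A2) = joinC (restrictC Γ1 A1) (restrictC Γ2 A2) ∧
    ∀ φ1 φ2 φ : Finset α,
      IsLexMinFacet w1 (restrictC Γ1 A1) φ1 →
      IsLexMinFacet w2 (restrictC Γ2 A2) φ2 →
      IsLexMinFacet w (restrictC (joinC Γ1 Γ2) (A1 ∪ A2)) φ →
      linkC (joinC Γ1 Γ2) φ = joinC (linkC Γ1 φ1) (linkC Γ2 φ2) :=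
  orderedJoin_restriction_contraction_general w1 w2 w I1 I2 Γ1 Γ2 h1 h2 hdisj A1 A2 hA1 hA2 hsh
end

section
/- The class of prefix-pure ordered complexes is closed under the three Hopf-class operations: (i) if (w,Γ) is a prefix-pure ordered complex and A is an initial segment of w, then the initial restriction (w,Γ)|A and the initial contraction (w,Γ)/A are prefix-pure; (ii) if (w1,Γ1) and (w2,Γ2) are prefix-pure ordered complexes on disjoint vertex sets and w is any shuffle of w1 and w2, then the ordered join (w, Γ1 * Γ2) is prefix-pure. -/
variable {α : Type*} [DecidableEq α]

/-- A complex is pure if all facets have the same cardinality. -/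
def IsPureC (Γ : Set (Finset α)) : Prop :=
  ∀ φ ψ, IsFacetOf Γ φ → IsFacetOf Γ ψ → φ.card = ψ.card

/-- The ordered complex `(w,Γ)` on ground set `E` is prefix-pure: the restriction to
every initial segment of `w` is pure. -/
def PrefixPure (w : LinearOrder α) (E : Finset α) (Γ : Set (Finset α)) : Prop :=
  ∀ A, IsInitialSeg w E A → IsPureC (restrictC Γ A)

lemma pure_link {Γ : Set (Finset α)} {A B φ : Finset α}
    (hcl : ∀ γ ∈ Γ, ∀ β ⊆ γ, β ∈ Γ)
    (hφ : IsFacetOf (restrictC Γ A) φ)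
    (hpure : IsPureC (restrictC Γ (A ∪ B))) :
    IsPureC (restrictC (linkC Γ φ) B) := by
  obtain ⟨⟨hφΓ, hφA⟩, hφmax⟩ := hφ
  have key : ∀ β, IsFacetOf (restrictC (linkC Γ φ) B) β →
      IsFacetOf (restrictC Γ (A ∪ B)) (β ∪ φ) := by
    rintro β ⟨⟨⟨hdisj, hβφΓ⟩, hβB⟩, hβmax⟩
    refine ⟨⟨hβφΓ, Finset.union_subset (hβB.trans Finset.subset_union_right)
      (hφA.trans Finset.subset_union_left)⟩, ?_⟩
    rintro ψ ⟨hψΓ, hψAB⟩ hsub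
    have hφψ : φ ⊆ ψ := (Finset.subset_union_right).trans hsub
    have hβψ : β ⊆ ψ := (Finset.subset_union_left).trans hsub
    have hψA : ψ ∩ A = φ := by
      apply hφmax
      · exact ⟨hcl ψ hψΓ _ Finset.inter_subset_left, Finset.inter_subset_right⟩
      · exact Finset.subset_inter hφψ hφA
    have hδφ : (ψ \ φ) ∪ φ = ψ := Finset.sdiff_union_of_subset hφψ
    have hδB : ψ \ φ ⊆ B := by
      intro x hx
      have hxψ := (Finset.mem_sdiff.mp hx).1
      have hxφ := (Finset.mem_sdiff.mp hx).2
      rcases Finset.mem_union.mp (hψAB hxψ) with h | h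
      · exact absurd (hψA ▸ Finset.mem_inter.mpr ⟨hxψ, h⟩) hxφ
      · exact h
    have hβδ : β ⊆ ψ \ φ := fun x hx => Finset.mem_sdiff.mpr
      ⟨hβψ hx, fun hxφ => (Finset.disjoint_left.mp hdisj hx) hxφ⟩
    have hd : ψ \ φ = β :=
      hβmax (ψ \ φ) ⟨⟨Finset.sdiff_disjoint, by rw [hδφ]; exact hψΓ⟩, hδB⟩ hβδ
    rw [← hδφ, hd]
  intro β1 β2 h1 h2
  have c1 := hpure _ _ (key _ h1) (key _ h2)
  have d1 : Disjoint β1 φ := h1.1.1.1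
  have d2 : Disjoint β2 φ := h2.1.1.1
  rw [Finset.card_union_of_disjoint d1, Finset.card_union_of_disjoint d2] at c1
  omega

lemma pure_join {Δ1 Δ2 : Set (Finset α)} {B1 B2 : Finset α}
    (h1 : ∀ γ ∈ Δ1, γ ⊆ B1) (h2 : ∀ γ ∈ Δ2, γ ⊆ B2)
    (hd : Disjoint B1 B2)
    (p1 : IsPureC Δ1) (p2 : IsPureC Δ2) :
    IsPureC (joinC Δ1 Δ2) := by
  have key : ∀ γ, IsFacetOf (joinC Δ1 Δ2) γ →
      ∃ γ1 γ2, IsFacetOf Δ1 γ1 ∧ IsFacetOf Δ2 γ2 ∧ γ = γ1 ∪ γ2 ∧ Disjoint γ1 γ2 := by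
    rintro γ ⟨⟨γ1, hγ1, γ2, hγ2, rfl⟩, hmax⟩
    have dj : Disjoint γ1 γ2 := Disjoint.mono (h1 _ hγ1) (h2 _ hγ2) hd
    refine ⟨γ1, γ2, ⟨hγ1, ?_⟩, ⟨hγ2, ?_⟩, rfl, dj⟩
    · intro ψ hψ hsub
      have heq := hmax (ψ ∪ γ2) ⟨ψ, hψ, γ2, hγ2, rfl⟩
        (Finset.union_subset_union hsub (subset_refl _))
      apply Finset.Subset.antisymm _ hsub
      intro x hx
      have hxB1 : x ∈ B1 := h1 _ hψ hx
      have hmem : x ∈ γ1 ∪ γ2 := by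
        rw [← heq]; exact Finset.mem_union_left _ hx
      rcases Finset.mem_union.mp hmem with h | h
      · exact h
      · exact absurd (h2 _ hγ2 h) (Finset.disjoint_left.mp hd hxB1)
    · intro ψ hψ hsub
      have heq := hmax (γ1 ∪ ψ) ⟨γ1, hγ1, ψ, hψ, rfl⟩
        (Finset.union_subset_union (subset_refl _) hsub)
      apply Finset.Subset.antisymm _ hsub
      intro x hx
      have hxB2 : x ∈ B2 := h2 _ hψ hx
      have hmem : x ∈ γ1 ∪ γ2 := by
        rw [← heq]; exact Finset.mem_union_right _ hx
      rcases Finset.mem_union.mp hmem with h | h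
      · exact absurd (h1 _ hγ1 h) (Finset.disjoint_right.mp hd hxB2)
      · exact h
  intro γ δ hγ hδ
  obtain ⟨γ1, γ2, f1, f2, rfl, djγ⟩ := key _ hγ
  obtain ⟨δ1, δ2, g1, g2, rfl, djδ⟩ := key _ hδ
  rw [Finset.card_union_of_disjoint djγ, Finset.card_union_of_disjoint djδ,
    p1 _ _ f1 g1, p2 _ _ f2 g2]

/-- Prefix-pure ordered complexes are closed under the three Hopf-class operations:
(i) initial restriction and initial contraction; (ii) ordered join along any shuffle. -/
theorem prefixPure_closure :
    (∀ (w : LinearOrder α) (E : Finset α) (Γ : Set (Finset α)),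
       IsComplexOn E Γ → PrefixPure w E Γ →
       ∀ A, IsInitialSeg w E A →
         PrefixPure w A (restrictC Γ A) ∧
         ∀ φ, IsLexMinFacet w (restrictC Γ A) φ →
           PrefixPure w (E \ A) (linkC Γ φ)) ∧
    (∀ (w1 w2 w : LinearOrder α) (I1 I2 : Finset α) (Γ1 Γ2 : Set (Finset α)),
       IsComplexOn I1 Γ1 → IsComplexOn I2 Γ2 → Disjoint I1 I2 →
       PrefixPure w1 I1 Γ1 → PrefixPure w2 I2 Γ2 →
       IsShuffle w1 w2 w I1 I2 →
       PrefixPure w (I1 ∪ I2) (joinC Γ1 Γ2)) := by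
  constructor
  · intro w E Γ hΓ hP A hA
    obtain ⟨hAE, hAinit⟩ := hA
    constructor
    · intro B hB
      obtain ⟨hBA, hBinit⟩ := hB
      have hBE : IsInitialSeg w E B :=
        ⟨hBA.trans hAE, fun x hx y hy hle => hBinit x hx y (hAinit x (hBA hx) y hy hle) hle⟩
      have heq : restrictC (restrictC Γ A) B = restrictC Γ B := by
        ext γ
        constructor
        · rintro ⟨⟨hg, _⟩, h3⟩; exact ⟨hg, h3⟩
        · rintro ⟨hg, h3⟩; exact ⟨⟨hg, h3.trans hBA⟩, h3⟩
      rw [heq]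
      exact hP B hBE
    · intro φ hφ B hB
      obtain ⟨hBEA, hBinit⟩ := hB
      have hBE : B ⊆ E := hBEA.trans (Finset.sdiff_subset)
      have hAB : IsInitialSeg w E (A ∪ B) := by
        refine ⟨Finset.union_subset hAE hBE, ?_⟩
        intro x hx y hy hle
        rcases Finset.mem_union.mp hx with h | h
        · exact Finset.mem_union_left _ (hAinit x h y hy hle)
        · by_cases hyA : y ∈ A
          · exact Finset.mem_union_left _ hyA
          · exact Finset.mem_union_right _
              (hBinit x h y (Finset.mem_sdiff.mpr ⟨hy, hyA⟩) hle)
      exact pure_link hΓ.2.2 hφ.1 (hP _ hAB)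
  · intro w1 w2 w I1 I2 Γ1 Γ2 h1 h2 hdis hP1 hP2 hsh B hB
    obtain ⟨hBsub, hBinit⟩ := hB
    have hB1 : IsInitialSeg w1 I1 (B ∩ I1) := by
      refine ⟨Finset.inter_subset_right, ?_⟩
      intro x hx y hy hle
      have hxB := (Finset.mem_inter.mp hx).1
      have hxI := (Finset.mem_inter.mp hx).2
      have hle' : w.le y x := (hsh.1 y hy x hxI).mpr hle
      exact Finset.mem_inter.mpr ⟨hBinit x hxB y (Finset.mem_union_left _ hy) hle', hy⟩
    have hB2 : IsInitialSeg w2 I2 (B ∩ I2) := by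
      refine ⟨Finset.inter_subset_right, ?_⟩
      intro x hx y hy hle
      have hxB := (Finset.mem_inter.mp hx).1
      have hxI := (Finset.mem_inter.mp hx).2
      have hle' : w.le y x := (hsh.2 y hy x hxI).mpr hle
      exact Finset.mem_inter.mpr ⟨hBinit x hxB y (Finset.mem_union_right _ hy) hle', hy⟩
    have heq : restrictC (joinC Γ1 Γ2) B
        = joinC (restrictC Γ1 (B ∩ I1)) (restrictC Γ2 (B ∩ I2)) := by
      ext γ
      constructor
      · rintro ⟨⟨γ1, hγ1, γ2, hγ2, rfl⟩, hsub⟩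
        exact ⟨γ1, ⟨hγ1, Finset.subset_inter
            ((Finset.subset_union_left).trans hsub) (h1.2.1 γ1 hγ1)⟩,
          γ2, ⟨hγ2, Finset.subset_inter
            ((Finset.subset_union_right).trans hsub) (h2.2.1 γ2 hγ2)⟩, rfl⟩
      · rintro ⟨γ1, ⟨hγ1, hs1⟩, γ2, ⟨hγ2, hs2⟩, rfl⟩
        exact ⟨⟨γ1, hγ1, γ2, hγ2, rfl⟩,
          Finset.union_subset (hs1.trans Finset.inter_subset_left)
            (hs2.trans Finset.inter_subset_left)⟩
    rw [heq]
    exact pure_join (fun γ h => h.2) (fun γ h => h.2)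
      (Disjoint.mono Finset.inter_subset_right Finset.inter_subset_right hdis)
      (hP1 _ hB1) (hP2 _ hB2)
end

section
/- Let k ≥ 2 and let Γ be the Scrope complex on vertex set [k−1] associated to a nonempty finite list of pairs (x_1,y_1),…,(x_m,y_m) with 1 ≤ x_i < y_i ≤ k. Let |Γ| ⊆ ℝ^{k−1} denote the geometric realization of Γ: the union, over all nonempty faces γ ∈ Γ, of the convex hulls of the sets {e_j : j ∈ γ} of standard basis vectors. Then |Γ| is either empty, or contractible, or homotopy equivalent to a sphere S^q for some q ≥ 0. -/
/-- The Scrope complex on vertex set `{1,…,k−1}` associated to the list `z` of pairs: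
its faces are the subsets of `{1,…,k−1}` contained in `[1,x−1] ∪ [y,k−1]` for some
pair `(x,y) ∈ z`. -/
def scrope (k : ℕ) (z : List (ℕ × ℕ)) : Set (Finset ℕ) :=
  {γ | ∃ p ∈ z, γ ⊆ Finset.Icc 1 (p.1 - 1) ∪ Finset.Icc p.2 (k - 1)}

/-- The `j`-th standard basis vector of `ℝ^{k-1}` (for `1 ≤ j ≤ k−1`). -/
def basisVec (k : ℕ) (j : ℕ) : Fin (k - 1) → ℝ :=
  fun i => if (i : ℕ) + 1 = j then 1 else 0

/-- The geometric realization in `ℝ^{k-1}` of a simplicial complex on vertex set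
`{1,…,k−1}`: the union over all faces `γ` of the convex hull of the standard basis
vectors indexed by `γ`. -/
def realize (k : ℕ) (Γ : Set (Finset ℕ)) : Set (Fin (k - 1) → ℝ) :=
  ⋃ γ ∈ Γ, convexHull ℝ (basisVec k '' (γ : Set ℕ))

namespace ScropeAux

open Finset ContinuousMap

/-- The subsets-of-ground-avoiding-some-blocker complex. -/
def gam (V : Finset ℕ) (J : Finset (Finset ℕ)) : Set (Finset ℕ) :=
  {γ | γ ⊆ V ∧ ∃ T ∈ J, γ ∩ T = ∅}

def OrdConvex (V T : Finset ℕ) : Prop :=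
  ∀ a ∈ T, ∀ b ∈ T, ∀ c ∈ V, a ≤ c → c ≤ b → c ∈ T

variable {k : ℕ}

lemma idx_lt (hk : 2 ≤ k) {u : ℕ} (hu : u ∈ Finset.Icc 1 (k-1)) : u - 1 < k - 1 := by
  simp only [Finset.mem_Icc] at hu; omega

/-- characterization of the convex hull of basis vectors indexed by `γ`. -/
lemma convexHull_basis_eq (hk : 2 ≤ k) (γ : Finset ℕ) (hγ : γ ⊆ Finset.Icc 1 (k-1)) :
    convexHull ℝ (basisVec k '' (γ : Set ℕ)) =
      {x : Fin (k-1) → ℝ | (∀ i, 0 ≤ x i) ∧ (∑ i, x i) = 1 ∧ ∀ i, x i ≠ 0 → ((i:ℕ)+1) ∈ γ} := by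
  apply le_antisymm
  · apply convexHull_min
    · rintro - ⟨u, hu, rfl⟩
      have huI := hγ hu
      simp only [Finset.mem_Icc] at huI
      refine ⟨fun i => by unfold basisVec; positivity, ?_, fun i hi => ?_⟩
      · have : ∀ i : Fin (k-1), basisVec k u i = if i = ⟨u-1, idx_lt hk (hγ hu)⟩ then 1 else 0 := by
          intro i
          unfold basisVec
          congr 1
          simp only [eq_iff_iff, Fin.ext_iff]
          omega
        simp only [this, Finset.sum_ite_eq', Finset.mem_univ, if_true]
      · unfold basisVec at hi
        by_cases h : (i:ℕ) + 1 = u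
        · rwa [h]
        · simp [h] at hi
    · intro x hx y hy a b ha hb hab
      refine ⟨fun i => add_nonneg (mul_nonneg ha (hx.1 i)) (mul_nonneg hb (hy.1 i)), ?_, ?_⟩
      · simp only [Pi.add_apply, Pi.smul_apply, smul_eq_mul]
        rw [Finset.sum_add_distrib, ← Finset.mul_sum, ← Finset.mul_sum, hx.2.1, hy.2.1]
        simpa using hab
      · intro i hi
        simp only [Pi.add_apply, Pi.smul_apply, smul_eq_mul] at hi
        by_cases h1 : x i = 0
        · by_cases h2 : y i = 0
          · simp [h1, h2] at hi
          · exact hy.2.2 i h2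
        · exact hx.2.2 i h1
  · rintro x ⟨h0, h1, hsupp⟩
    have hw : ∀ u ∈ γ, (0:ℝ) ≤ ∑ i : Fin (k-1), (if (i:ℕ)+1 = u then x i else 0) := by
      intro u _
      apply Finset.sum_nonneg
      intro i _
      split <;> [exact h0 i; rfl]
    have hsum : ∑ u ∈ γ, (∑ i : Fin (k-1), (if (i:ℕ)+1 = u then x i else 0)) = 1 := by
      rw [Finset.sum_comm]
      rw [← h1]
      apply Finset.sum_congr rfl
      intro i _
      rw [Finset.sum_ite_eq γ ((i:ℕ)+1) (fun _ => x i)]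
      by_cases h : (i:ℕ)+1 ∈ γ
      · simp [h]
      · simp only [h, if_false]
        by_contra hne
        exact h (hsupp i (Ne.symm hne))
    have := Finset.centerMass_mem_convexHull (t := γ)
      (w := fun u => ∑ i : Fin (k-1), (if (i:ℕ)+1 = u then x i else 0))
      (z := fun u => basisVec k u) hw (by rw [hsum]; norm_num)
      (fun u hu => Set.mem_image_of_mem _ (Finset.mem_coe.mpr hu))
    rw [Finset.centerMass_eq_of_sum_1 _ _ hsum] at this
    convert this using 1
    funext i
    rw [Finset.sum_apply]
    by_cases h : (i:ℕ)+1 ∈ γ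
    · rw [Finset.sum_eq_single ((i:ℕ)+1)]
      · have : ∑ j : Fin (k-1), (if (j:ℕ)+1 = (i:ℕ)+1 then x j else 0) = x i := by
          rw [Finset.sum_eq_single i]
          · simp
          · intro j _ hj
            have : (j:ℕ)+1 ≠ (i:ℕ)+1 := by
              simp only [ne_eq, add_left_inj]
              exact fun hh => hj (Fin.ext hh)
            rw [if_neg this]
          · simp
        rw [this]
        simp [basisVec]
      · intro u hu hne
        simp only [Pi.smul_apply, smul_eq_mul, basisVec]
        rw [if_neg (fun hh => hne hh.symm)]
        ring
      · intro hni; exact absurd h hni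
    · rw [Finset.sum_eq_zero]
      · have : x i = 0 := by by_contra hne; exact h (hsupp i hne)
        rw [this]
      · intro u hu
        simp only [Pi.smul_apply, smul_eq_mul, basisVec]
        rw [if_neg]
        · ring
        · intro hh; rw [hh] at h; exact h hu

lemma realize_mono {k : ℕ} {Γ Γ' : Set (Finset ℕ)} (h : Γ ⊆ Γ') : realize k Γ ⊆ realize k Γ' := by
  intro x hx
  rcases Set.mem_iUnion₂.mp hx with ⟨γ, hγ, hxγ⟩
  exact Set.mem_biUnion (h hγ) hxγ

lemma realize_eq_empty {k : ℕ} (Γ : Set (Finset ℕ)) (h : ∀ γ ∈ Γ, γ = ∅) :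
    realize k Γ = ∅ := by
  apply Set.eq_empty_iff_forall_notMem.mpr
  intro x hx
  rcases Set.mem_iUnion₂.mp hx with ⟨γ, hγ, hxγ⟩
  rw [h γ hγ] at hxγ
  simp at hxγ

lemma cone_contractible (hk : 2 ≤ k) (Γ : Set (Finset ℕ))
    (u0 : ℕ) (hu0 : ({u0} : Finset ℕ) ∈ Γ) (hcone : ∀ γ ∈ Γ, insert u0 γ ∈ Γ) :
    ContractibleSpace (realize k Γ) := by
  have hpt : basisVec k u0 ∈ realize k Γ := by
    apply Set.mem_biUnion hu0
    apply subset_convexHull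
    simp
  have hstar : StarConvex ℝ (basisVec k u0) (realize k Γ) := by
    intro y hy a b ha hb hab
    rcases Set.mem_iUnion₂.mp hy with ⟨γ, hγ, hyγ⟩
    apply Set.mem_biUnion (hcone γ hγ)
    have hsub : convexHull ℝ (basisVec k '' (γ : Set ℕ)) ⊆
        convexHull ℝ (basisVec k '' ((insert u0 γ : Finset ℕ) : Set ℕ)) := by
      apply convexHull_mono
      apply Set.image_mono
      rw [Finset.coe_insert]
      exact Set.subset_insert _ _
    have h1 : basisVec k u0 ∈ convexHull ℝ (basisVec k '' ((insert u0 γ : Finset ℕ) : Set ℕ)) := by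
      apply subset_convexHull
      exact Set.mem_image_of_mem _ (by simp)
    exact (convex_convexHull ℝ _) h1 (hsub hyγ) ha hb hab
  exact hstar.contractibleSpace ⟨_, hpt⟩

noncomputable def Lw (k : ℕ) (w : ℕ → ℕ) : (Fin (k-1) → ℝ) →ₗ[ℝ] (Fin (k-1) → ℝ) where
  toFun x := fun i => ∑ j : Fin (k-1), if w ((j:ℕ)+1) = (i:ℕ)+1 then x j else 0
  map_add' x y := by
    funext i
    simp only [Pi.add_apply]
    rw [← Finset.sum_add_distrib]
    apply Finset.sum_congr rfl
    intro j _
    split <;> simp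
  map_smul' c x := by
    funext i
    simp only [Pi.smul_apply, smul_eq_mul, RingHom.id_apply]
    rw [Finset.mul_sum]
    apply Finset.sum_congr rfl
    intro j _
    split <;> simp

lemma Lw_apply {k : ℕ} (w : ℕ → ℕ) (x : Fin (k-1) → ℝ) (i : Fin (k-1)) :
    Lw k w x i = ∑ j : Fin (k-1), if w ((j:ℕ)+1) = (i:ℕ)+1 then x j else 0 := rfl

lemma Lw_basis {k : ℕ} (w : ℕ → ℕ) {u : ℕ} (hu : u ∈ Finset.Icc 1 (k-1)) :
    Lw k w (basisVec k u) = basisVec k (w u) := by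
  have hu' := Finset.mem_Icc.mp hu
  have hlt : u - 1 < k - 1 := by omega
  funext i
  rw [Lw_apply]
  rw [Finset.sum_eq_single (⟨u-1, hlt⟩ : Fin (k-1))]
  · have h1 : ((⟨u-1, hlt⟩ : Fin (k-1)) : ℕ) + 1 = u := by simp; omega
    rw [h1]
    have h2 : basisVec k u ⟨u-1, hlt⟩ = 1 := by
      show (if (u-1) + 1 = u then (1:ℝ) else 0) = 1
      rw [if_pos (by omega)]
    rw [h2]
    by_cases h : w u = (i:ℕ)+1 <;> simp [basisVec, h, eq_comm]
  · intro j _ hj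
    have hne : (j:ℕ)+1 ≠ u := by
      intro hh
      apply hj
      apply Fin.ext
      simp
      omega
    have : basisVec k u j = 0 := by simp [basisVec, hne]
    rw [this]
    split <;> rfl
  · intro h; exact absurd (Finset.mem_univ _) h

lemma reduction (hk : 2 ≤ k) (Γ : Set (Finset ℕ))
    (hV : ∀ γ ∈ Γ, γ ⊆ Finset.Icc 1 (k-1))
    (hdc : ∀ γ ∈ Γ, ∀ δ, δ ⊆ γ → δ ∈ Γ)
    (w : ℕ → ℕ) (hidem : ∀ u, w (w u) = w u)
    (hw : ∀ γ ∈ Γ, γ ∪ γ.image w ∈ Γ) :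
    Nonempty ((realize k Γ) ≃ₕ (realize k {γ | γ ∈ Γ ∧ ∀ u ∈ γ, w u = u})) := by
  classical
  set Γ' : Set (Finset ℕ) := {γ | γ ∈ Γ ∧ ∀ u ∈ γ, w u = u} with hΓ'def
  have hΓ'Γ : Γ' ⊆ Γ := fun γ h => h.1
  have hcont : Continuous (Lw k w) := LinearMap.continuous_on_pi _
  have himg : ∀ γ ∈ Γ, Lw k w '' (convexHull ℝ (basisVec k '' (γ : Set ℕ))) =
      convexHull ℝ (basisVec k '' ((γ.image w : Finset ℕ) : Set ℕ)) := by
    intro γ hγ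
    rw [(Lw k w).image_convexHull]
    congr 1
    rw [Set.image_image, Finset.coe_image, ← Set.image_comp]
    apply Set.image_congr
    intro u hu
    exact Lw_basis w (hV γ hγ hu)
  -- the image face is a fixed face
  have himgΓ' : ∀ γ ∈ Γ, (γ.image w : Finset ℕ) ∈ Γ' := by
    intro γ hγ
    constructor
    · exact hdc _ (hw γ hγ) _ Finset.subset_union_right
    · intro u hu
      rcases Finset.mem_image.mp hu with ⟨v, _, rfl⟩
      exact hidem v
  have hr : ∀ x ∈ realize k Γ, Lw k w x ∈ realize k Γ' := by
    intro x hx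
    rcases Set.mem_iUnion₂.mp hx with ⟨γ, hγ, hxγ⟩
    apply Set.mem_biUnion (himgΓ' γ hγ)
    rw [← himg γ hγ]
    exact Set.mem_image_of_mem _ hxγ
  have hfixed : ∀ x ∈ realize k Γ', Lw k w x = x := by
    intro x hx
    rcases Set.mem_iUnion₂.mp hx with ⟨γ, hγ, hxγ⟩
    have : convexHull ℝ (basisVec k '' (γ : Set ℕ)) ⊆ {y | Lw k w y = y} := by
      apply convexHull_min
      · rintro - ⟨u, hu, rfl⟩
        show Lw k w (basisVec k u) = basisVec k u
        rw [Lw_basis w (hV γ (hΓ'Γ hγ) hu)]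
        rw [hγ.2 u hu]
      · intro a ha b hb s t hs ht hst
        show Lw k w (s • a + t • b) = s • a + t • b
        rw [map_add, map_smul, map_smul, ha, hb]
    exact this hxγ
  have hseg : ∀ (x : Fin (k-1) → ℝ), x ∈ realize k Γ → ∀ s t : ℝ, 0 ≤ s → 0 ≤ t → s + t = 1 →
      s • (Lw k w x) + t • x ∈ realize k Γ := by
    intro x hx s t hs ht hst
    rcases Set.mem_iUnion₂.mp hx with ⟨γ, hγ, hxγ⟩
    apply Set.mem_biUnion (hw γ hγ)
    have hmono : convexHull ℝ (basisVec k '' (γ : Set ℕ)) ⊆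
        convexHull ℝ (basisVec k '' ((γ ∪ γ.image w : Finset ℕ) : Set ℕ)) := by
      apply convexHull_mono
      apply Set.image_mono
      simp only [Finset.coe_union]
      exact Set.subset_union_left
    have h1 : Lw k w x ∈ convexHull ℝ (basisVec k '' ((γ ∪ γ.image w : Finset ℕ) : Set ℕ)) := by
      have := himg γ hγ
      have h2 : Lw k w x ∈ convexHull ℝ (basisVec k '' ((γ.image w : Finset ℕ) : Set ℕ)) := by
        rw [← this]; exact Set.mem_image_of_mem _ hxγ
      apply convexHull_mono _ h2
      apply Set.image_mono
      simp only [Finset.coe_union]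
      exact Set.subset_union_right
    exact (convex_convexHull ℝ _) h1 (hmono hxγ) hs ht hst
  let r : C(realize k Γ, realize k Γ') :=
    ⟨fun x => ⟨Lw k w x.1, hr x.1 x.2⟩,
      (hcont.comp continuous_subtype_val).subtype_mk _⟩
  let ι : C(realize k Γ', realize k Γ) :=
    ⟨fun y => ⟨y.1, realize_mono hΓ'Γ y.2⟩,
      continuous_subtype_val.subtype_mk _⟩
  have H : ContinuousMap.Homotopy (ι.comp r) (ContinuousMap.id _) :=
    { toFun := fun p => ⟨(1 - (p.1 : ℝ)) • (Lw k w p.2.1) + (p.1 : ℝ) • p.2.1,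
        hseg p.2.1 p.2.2 _ _ (sub_nonneg.mpr p.1.2.2) p.1.2.1 (by ring)⟩
      continuous_toFun := by
        apply Continuous.subtype_mk
        apply Continuous.add
        · exact (continuous_const.sub (continuous_subtype_val.comp continuous_fst)).smul
            (hcont.comp (continuous_subtype_val.comp continuous_snd))
        · exact (continuous_subtype_val.comp continuous_fst).smul
            (continuous_subtype_val.comp continuous_snd)
      map_zero_left := fun x => Subtype.ext (by simp [r, ι])
      map_one_left := fun x => Subtype.ext (by simp [r, ι]) }
  have hri : r.comp ι = ContinuousMap.id _ :=
    ContinuousMap.ext fun y => Subtype.ext (hfixed y.1 y.2)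
  exact ⟨⟨r, ι, ⟨H⟩, by rw [hri]⟩⟩

lemma terminal_singletons (V : Finset ℕ) (J : Finset (Finset ℕ))
    (hTV : ∀ T ∈ J, T ⊆ V) (hconv : ∀ T ∈ J, OrdConvex V T)
    (hanti : ∀ T ∈ J, ∀ T' ∈ J, T ⊆ T' → T = T')
    (hrun : ∀ u ∈ V, ∃ T ∈ J, u ∈ T)
    (hinc : ∀ a ∈ V, ∀ b ∈ V, a ≠ b → ∃ T ∈ J, a ∈ T ∧ b ∉ T) :
    ∀ u ∈ V, ({u} : Finset ℕ) ∈ J := by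
  intro u
  induction u using Nat.strong_induction_on with
  | _ u IH =>
    intro hu
    by_cases hup : ∃ v ∈ V, u < v
    · -- u has a successor u' in V
      have hWne : (V.filter (fun v => u < v)).Nonempty := by
        obtain ⟨v, hv, hv'⟩ := hup
        exact ⟨v, Finset.mem_filter.mpr ⟨hv, hv'⟩⟩
      set u' := (V.filter (fun v => u < v)).min' hWne with hu'def
      have hu'mem := (V.filter (fun v => u < v)).min'_mem hWne
      rw [Finset.mem_filter] at hu'mem
      have hu'V : u' ∈ V := hu'mem.1
      have huu' : u < u' := hu'mem.2
      have hsucc : ∀ t ∈ V, u < t → u' ≤ t := by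
        intro t ht hlt
        exact Finset.min'_le (V.filter (fun v => u < v)) t (Finset.mem_filter.mpr ⟨ht, hlt⟩)
      obtain ⟨T, hTJ, huT, hu'T⟩ := hinc u hu u' hu'V (ne_of_lt huu')
      have hTeq : T = {u} := by
        apply Finset.Subset.antisymm
        · intro t ht
          rw [Finset.mem_singleton]
          by_contra hne
          rcases lt_or_gt_of_ne hne with hlt | hgt
          · -- t < u : then {t} ∈ J by IH, {t} ⊆ T, antichain forces T = {t}, contradiction
            have htV : t ∈ V := hTV T hTJ ht
            have h1 : ({t} : Finset ℕ) ∈ J := IH t hlt htV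
            have h2 : ({t} : Finset ℕ) ⊆ T := Finset.singleton_subset_iff.mpr ht
            have h3 := hanti _ h1 _ hTJ h2
            have : u ∈ ({t} : Finset ℕ) := h3 ▸ huT
            rw [Finset.mem_singleton] at this
            omega
          · -- t > u : then u' between u and t, convexity puts u' ∈ T, contradiction
            exact hu'T (hconv T hTJ u huT t ht u' hu'V (le_of_lt huu') (hsucc t (hTV T hTJ ht) hgt))
        · exact Finset.singleton_subset_iff.mpr huT
      rwa [← hTeq]
    · by_cases hdown : ∃ v ∈ V, v < u
      · -- u = max V, has a predecessor p
        have hWne : (V.filter (fun v => v < u)).Nonempty := by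
          obtain ⟨v, hv, hv'⟩ := hdown
          exact ⟨v, Finset.mem_filter.mpr ⟨hv, hv'⟩⟩
        set p := (V.filter (fun v => v < u)).max' hWne with hpdef
        have hpmem := (V.filter (fun v => v < u)).max'_mem hWne
        rw [Finset.mem_filter] at hpmem
        have hpV : p ∈ V := hpmem.1
        have hpu : p < u := hpmem.2
        have hpred : ∀ t ∈ V, t < u → t ≤ p := by
          intro t ht hlt
          exact Finset.le_max' (V.filter (fun v => v < u)) t (Finset.mem_filter.mpr ⟨ht, hlt⟩)
        obtain ⟨T, hTJ, huT, hpT⟩ := hinc u hu p hpV (by omega)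
        have hTeq : T = {u} := by
          apply Finset.Subset.antisymm
          · intro t ht
            rw [Finset.mem_singleton]
            by_contra hne
            have htV : t ∈ V := hTV T hTJ ht
            have hlt : t < u := by
              rcases lt_or_gt_of_ne hne with h | h
              · exact h
              · exact absurd ⟨t, htV, h⟩ hup
            have htp : t ≤ p := hpred t htV hlt
            rcases eq_or_lt_of_le htp with h | h
            · exact hpT (h ▸ ht)
            · exact hpT (hconv T hTJ t ht u huT p hpV (le_of_lt h) (le_of_lt hpu))
          · exact Finset.singleton_subset_iff.mpr huT
        rwa [← hTeq]
      · -- V = {u}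
        obtain ⟨T, hTJ, huT⟩ := hrun u hu
        have hTeq : T = {u} := by
          apply Finset.Subset.antisymm
          · intro t ht
            rw [Finset.mem_singleton]
            have htV : t ∈ V := hTV T hTJ ht
            by_contra hne
            rcases lt_or_gt_of_ne hne with h | h
            · exact hdown ⟨t, htV, h⟩
            · exact hup ⟨t, htV, h⟩
          · exact Finset.singleton_subset_iff.mpr huT
        rwa [← hTeq]

def bset (k : ℕ) (V : Finset ℕ) : Set (Fin (k-1) → ℝ) :=
  {x | (∀ i, 0 ≤ x i) ∧ (∑ i, x i) = 1 ∧ (∀ i, x i ≠ 0 → ((i:ℕ)+1) ∈ V) ∧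
       ∃ i : Fin (k-1), ((i:ℕ)+1 ∈ V ∧ x i = 0)}

lemma realize_boundary_eq (hk : 2 ≤ k) (V : Finset ℕ) (hV : V ⊆ Finset.Icc 1 (k-1)) :
    realize k {γ : Finset ℕ | γ ⊆ V ∧ γ ≠ V} = bset k V := by
  apply Set.eq_of_subset_of_subset
  · intro x hx
    rcases Set.mem_iUnion₂.mp hx with ⟨γ, hγ, hxγ⟩
    obtain ⟨hγV, hγne⟩ := hγ
    rw [convexHull_basis_eq hk γ (hγV.trans hV)] at hxγ
    obtain ⟨h0, h1, hsupp⟩ := hxγ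
    refine ⟨h0, h1, fun i hi => hγV (hsupp i hi), ?_⟩
    obtain ⟨u, huV, huγ⟩ : ∃ u ∈ V, u ∉ γ := by
      by_contra hcon
      push_neg at hcon
      exact hγne (Finset.Subset.antisymm hγV hcon)
    have huI := Finset.mem_Icc.mp (hV huV)
    have hlt : u - 1 < k - 1 := by omega
    have hco : ((⟨u-1, hlt⟩ : Fin (k-1)) : ℕ) + 1 = u := by simp; omega
    refine ⟨⟨u-1, hlt⟩, by rw [hco]; exact huV, ?_⟩
    by_contra hne
    exact huγ (hco ▸ hsupp _ hne)
  · rintro x ⟨h0, h1, hsupp, i0, hi0V, hi0⟩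
    classical
    set γ : Finset ℕ := (Finset.univ.filter (fun i : Fin (k-1) => x i ≠ 0)).image
      (fun i : Fin (k-1) => (i:ℕ)+1) with hγdef
    have hγV : γ ⊆ V := by
      intro u hu
      rcases Finset.mem_image.mp hu with ⟨i, hi, rfl⟩
      exact hsupp i (Finset.mem_filter.mp hi).2
    have hγne : γ ≠ V := by
      intro he
      have h2 : ((i0:ℕ)+1) ∈ γ := he ▸ hi0V
      rcases Finset.mem_image.mp h2 with ⟨j, hj, hj2⟩
      have hji : j = i0 := Fin.ext (by omega)
      exact (Finset.mem_filter.mp hj).2 (hji ▸ hi0)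
    apply Set.mem_biUnion (show γ ∈ {γ : Finset ℕ | γ ⊆ V ∧ γ ≠ V} from ⟨hγV, hγne⟩)
    rw [convexHull_basis_eq hk γ (hγV.trans hV)]
    exact ⟨h0, h1, fun i hi =>
      Finset.mem_image_of_mem _ (Finset.mem_filter.mpr ⟨Finset.mem_univ _, hi⟩)⟩

lemma bset_compact (hk : 2 ≤ k) (V : Finset ℕ) (hV : V ⊆ Finset.Icc 1 (k-1)) :
    IsCompact (bset k V) := by
  rw [← realize_boundary_eq hk V hV]
  apply Set.Finite.isCompact_biUnion
  · apply Set.Finite.subset (V.powerset : Finset (Finset ℕ)).finite_toSet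
    intro γ hγ
    simpa [Finset.mem_powerset] using hγ.1
  · intro γ _
    exact ((γ.finite_toSet).image _).isCompact_convexHull ℝ

def cornerB (m : ℕ) : Set (EuclideanSpace ℝ (Fin m)) :=
  {y | (∀ i, 0 ≤ y i) ∧ (∑ i, y i) ≤ 1 ∧ ((∃ i, y i = 0) ∨ (∑ i, y i) = 1)}

set_option maxHeartbeats 2000000 in
lemma corner_homeo_sphere {m : ℕ} (hm : 1 ≤ m) :
    Nonempty ((cornerB m) ≃ₜ (Metric.sphere (0 : EuclideanSpace ℝ (Fin m)) 1)) := by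
  classical
  have hconti : ∀ i : Fin m, Continuous (fun y : EuclideanSpace ℝ (Fin m) => y i) :=
    fun i => (EuclideanSpace.proj (𝕜 := ℝ) i).continuous
  have hcontsum : Continuous (fun y : EuclideanSpace ℝ (Fin m) => ∑ i, y i) := by
    apply continuous_finset_sum
    intro i _
    exact hconti i
  haveI hfinne : Nonempty (Fin m) := ⟨⟨0, by omega⟩⟩
  set A : ℝ := ((m:ℝ)+1)⁻¹ with hAdef
  have hm1pos : (0:ℝ) < (m:ℝ)+1 := by positivity
  have hA0 : 0 < A := by positivity
  have hmA1 : ((m:ℝ)+1) * A = 1 := mul_inv_cancel₀ (ne_of_gt hm1pos)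
  have hAm : (m:ℝ) * A < 1 := by nlinarith
  have hA1 : A ≤ 1 := by nlinarith
  set c : EuclideanSpace ℝ (Fin m) := (EuclideanSpace.equiv (Fin m) ℝ).symm (fun _ => A) with hcdef
  have hc : ∀ i, c i = A := fun i => rfl
  have hsumc : (∑ i, c i) = (m:ℝ) * A := by
    simp only [hc]
    rw [Finset.sum_const, Finset.card_univ, Fintype.card_fin, nsmul_eq_mul]
  -- c is not in cornerB
  have hcQ : c ∉ cornerB m := by
    rintro ⟨-, -, h | h⟩
    · obtain ⟨i, hi⟩ := h
      rw [hc i] at hi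
      exact (ne_of_gt hA0) hi
    · rw [hsumc] at h
      exact (ne_of_lt hAm) h
  have hyc : ∀ y ∈ cornerB m, y - c ≠ 0 := by
    intro y hy h
    exact hcQ (by rwa [sub_eq_zero.mp h] at hy)
  -- key strictness: interior points of the segment from c to a point of cornerB are not in cornerB
  have hkey : ∀ y ∈ cornerB m, ∀ l : ℝ, 0 < l → l < 1 → c + l • (y - c) ∉ cornerB m := by
    rintro y hy l hl0 hl1 ⟨hq1, hq2, hq3⟩
    have hcoord : ∀ i, (c + l • (y - c)) i = (1-l) * A + l * y i := by
      intro i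
      rw [PiLp.add_apply, PiLp.smul_apply, PiLp.sub_apply, hc i, smul_eq_mul]
      ring
    have hpos : ∀ i, 0 < (c + l • (y - c)) i := by
      intro i
      rw [hcoord i]
      have := hy.1 i
      nlinarith
    have hslt : (∑ i, (c + l • (y - c)) i) < 1 := by
      have heq : (∑ i, (c + l • (y - c)) i) = (1-l) * ((m:ℝ) * A) + l * (∑ i, y i) := by
        rw [show (∑ i, (c + l • (y - c)) i) = ∑ i, ((1-l) * A + l * y i) from
          Finset.sum_congr rfl (fun i _ => hcoord i)]
        rw [Finset.sum_add_distrib, ← Finset.mul_sum, ← Finset.mul_sum, Finset.sum_const,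
          Finset.card_univ, Fintype.card_fin, nsmul_eq_mul]
      rw [heq]
      have h2 := hy.2.1
      nlinarith
    rcases hq3 with h | h
    · obtain ⟨i, hi⟩ := h
      exact (ne_of_gt (hpos i)) hi
    · exact (ne_of_lt hslt) h
  -- the radial map
  set f0 : EuclideanSpace ℝ (Fin m) → EuclideanSpace ℝ (Fin m) :=
    fun y => ‖y - c‖⁻¹ • (y - c) with hf0def
  have hf0mem : ∀ y ∈ cornerB m, f0 y ∈ Metric.sphere (0 : EuclideanSpace ℝ (Fin m)) 1 := by
    intro y hy
    have h1 : ‖y - c‖ ≠ 0 := norm_ne_zero_iff.mpr (hyc y hy)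
    rw [mem_sphere_zero_iff_norm, hf0def]
    rw [norm_smul, norm_inv, norm_norm]
    exact inv_mul_cancel₀ h1
  -- injectivity auxiliary
  have hinjaux : ∀ y₁ ∈ cornerB m, ∀ y₂ ∈ cornerB m, f0 y₁ = f0 y₂ →
      ‖y₁ - c‖ ≤ ‖y₂ - c‖ → y₁ = y₂ := by
    intro y₁ hy₁ y₂ hy₂ hf hle
    have h1 : ‖y₁ - c‖ ≠ 0 := norm_ne_zero_iff.mpr (hyc y₁ hy₁)
    have h2 : ‖y₂ - c‖ ≠ 0 := norm_ne_zero_iff.mpr (hyc y₂ hy₂)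
    have h1p : 0 < ‖y₁ - c‖ := lt_of_le_of_ne (norm_nonneg _) (Ne.symm h1)
    have h2p : 0 < ‖y₂ - c‖ := lt_of_le_of_ne (norm_nonneg _) (Ne.symm h2)
    set l : ℝ := ‖y₁ - c‖ / ‖y₂ - c‖ with hldef
    have hl0 : 0 < l := div_pos h1p h2p
    have hl1 : l ≤ 1 := (div_le_one h2p).mpr hle
    have hveq : y₁ - c = l • (y₂ - c) := by
      have := congrArg (fun z => ‖y₁ - c‖ • z) hf
      simp only [hf0def] at this
      rw [smul_smul, smul_smul, mul_inv_cancel₀ h1, one_smul] at this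
      rw [this, hldef, div_eq_mul_inv, mul_comm]
    rcases eq_or_lt_of_le hl1 with h | h
    · rw [h, one_smul] at hveq
      exact sub_left_injective hveq
    · exfalso
      apply hkey y₂ hy₂ l hl0 h
      have : c + l • (y₂ - c) = y₁ := by rw [← hveq]; abel
      rw [this]
      exact hy₁
  -- surjectivity
  have hsurj : ∀ d : EuclideanSpace ℝ (Fin m), ‖d‖ = 1 → ∃ y ∈ cornerB m, f0 y = d := by
    intro d hd
    have habs : ∀ i, |d i| ≤ 1 := by
      intro i
      have h2 : (d i)^2 ≤ ∑ j, (d j)^2 :=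
        Finset.single_le_sum (f := fun j => (d j)^2) (fun j _ => sq_nonneg _) (Finset.mem_univ i)
      have h3 : Real.sqrt ((d i)^2) ≤ Real.sqrt (∑ j, (d j)^2) := Real.sqrt_le_sqrt h2
      rw [Real.sqrt_sq_eq_abs] at h3
      have h4 : Real.sqrt (∑ j, (d j)^2) = ‖d‖ := by
        rw [EuclideanSpace.norm_eq]
        congr 1
        apply Finset.sum_congr rfl
        intro j _
        rw [Real.norm_eq_abs, sq_abs]
      rw [h4, hd] at h3
      exact h3
    have hbd : ∀ i, -1 ≤ d i ∧ d i ≤ 1 := fun i => abs_le.mp (habs i)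
    have hsumd : (∑ i, d i) ≤ (m:ℝ) := by
      calc (∑ i, d i) ≤ ∑ i, (1:ℝ) := Finset.sum_le_sum (fun i _ => (hbd i).2)
      _ = (m:ℝ) := by rw [Finset.sum_const, Finset.card_univ, Fintype.card_fin, nsmul_eq_mul, mul_one]
    set S : Set ℝ := {t | 0 ≤ t ∧ (∀ i, 0 ≤ A + t * d i) ∧ (∑ i, (A + t * d i)) ≤ 1} with hSdef
    have hsumexp : ∀ t : ℝ, (∑ i, (A + t * d i)) = (m:ℝ) * A + t * (∑ i, d i) := by
      intro t
      rw [Finset.sum_add_distrib, ← Finset.mul_sum]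
      rw [Finset.sum_const, Finset.card_univ, Fintype.card_fin, nsmul_eq_mul]
    have h0S : (0:ℝ) ∈ S := by
      refine ⟨le_refl _, fun i => by simpa using le_of_lt hA0, ?_⟩
      rw [hsumexp]
      nlinarith
    have hSne : S.Nonempty := ⟨0, h0S⟩
    have hdne : ∃ i, d i ≠ 0 := by
      by_contra hcon
      push_neg at hcon
      have : d = 0 := by
        apply (EuclideanSpace.equiv (Fin m) ℝ).injective
        funext i
        exact hcon i
      rw [this, norm_zero] at hd
      exact zero_ne_one hd
    obtain ⟨i₀, hi₀⟩ := hdne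
    have hbdd : BddAbove S := by
      rcases lt_or_gt_of_ne hi₀ with hneg | hpos
      · refine ⟨A / (-(d i₀)), ?_⟩
        intro t ht
        have h1 := ht.2.1 i₀
        rw [le_div_iff₀ (by linarith)]
        nlinarith
      · refine ⟨(1 - A) / (d i₀), ?_⟩
        intro t ht
        have h1 : A + t * d i₀ ≤ ∑ i, (A + t * d i) :=
          Finset.single_le_sum (f := fun i => A + t * d i) (fun i _ => ht.2.1 i) (Finset.mem_univ i₀)
        have h2 := ht.2.2
        rw [le_div_iff₀ hpos]
        nlinarith
    have hSclosed : IsClosed S := by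
      have hSeq : S = (Set.Ici (0:ℝ)) ∩ ((⋂ i, {t : ℝ | 0 ≤ A + t * d i}) ∩
          {t : ℝ | (∑ i, (A + t * d i)) ≤ 1}) := by
        ext t
        constructor
        · rintro ⟨h1, h2, h3⟩
          exact ⟨h1, Set.mem_inter (Set.mem_iInter.mpr h2) h3⟩
        · rintro ⟨h1, h2, h3⟩
          exact ⟨h1, Set.mem_iInter.mp h2, h3⟩
      rw [hSeq]
      refine IsClosed.inter isClosed_Ici (IsClosed.inter ?_ ?_)
      · exact isClosed_iInter (fun i => isClosed_le continuous_const
          (continuous_const.add (continuous_id.mul continuous_const)))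
      · exact isClosed_le (continuous_finset_sum _ (fun i _ =>
          continuous_const.add (continuous_id.mul continuous_const))) continuous_const
    set t₀ : ℝ := sSup S with ht₀def
    have ht₀S : t₀ ∈ S := hSclosed.csSup_mem hSne hbdd
    have htAA : A * A ∈ S := by
      refine ⟨by positivity, ?_, ?_⟩
      · intro i
        have := (hbd i).1
        nlinarith
      · rw [hsumexp]
        have hAm' : (m:ℝ) * A ≤ 1 := le_of_lt hAm
        nlinarith
    have ht₀pos : 0 < t₀ := lt_of_lt_of_le (by positivity) (le_csSup hbdd htAA)
    set z : Fin m → ℝ := fun i => A + t₀ * d i with hzdef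
    have hz0 : ∀ i, 0 ≤ z i := ht₀S.2.1
    have hzsum : (∑ i, z i) ≤ 1 := ht₀S.2.2
    by_cases hbdry : (∃ i, z i = 0) ∨ (∑ i, z i) = 1
    · -- the boundary point maps to d
      set y : EuclideanSpace ℝ (Fin m) := c + t₀ • d with hydef
      have hyco : ∀ i, y i = z i := by
        intro i
        rw [hydef, PiLp.add_apply, PiLp.smul_apply, hc i]
        rfl
      have hyQ : y ∈ cornerB m := by
        refine ⟨fun i => by rw [hyco i]; exact hz0 i, ?_, ?_⟩
        · rw [show (∑ i, y i) = ∑ i, z i from Finset.sum_congr rfl (fun i _ => hyco i)]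
          exact hzsum
        · rcases hbdry with h | h
          · left
            obtain ⟨i, hi⟩ := h
            exact ⟨i, by rw [hyco i]; exact hi⟩
          · right
            rw [show (∑ i, y i) = ∑ i, z i from Finset.sum_congr rfl (fun i _ => hyco i)]
            exact h
      refine ⟨y, hyQ, ?_⟩
      have hsub : y - c = t₀ • d := by rw [hydef]; abel
      show ‖y - c‖⁻¹ • (y - c) = d
      rw [hsub, norm_smul, hd, mul_one, Real.norm_eq_abs,
        abs_of_pos ht₀pos, smul_smul, inv_mul_cancel₀ (ne_of_gt ht₀pos), one_smul]
    · -- otherwise we can go further, contradicting sSup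
      exfalso
      push_neg at hbdry
      obtain ⟨hz0', hzsum'⟩ := hbdry
      have hzpos : ∀ i, 0 < z i := fun i => lt_of_le_of_ne (hz0 i) (Ne.symm (hz0' i))
      have hzslt : (∑ i, z i) < 1 := lt_of_le_of_ne hzsum hzsum'
      set ε : ℝ := min (Finset.univ.inf' Finset.univ_nonempty z) ((1 - ∑ i, z i) / ((m:ℝ)+1))
        with hεdef
      have hε0 : 0 < ε := by
        apply lt_min
        · rw [Finset.lt_inf'_iff]
          intro i _
          exact hzpos i
        · apply div_pos (by linarith) hm1pos
      have hεinf : ∀ i, ε ≤ z i := by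
        intro i
        exact le_trans (min_le_left _ _) (Finset.inf'_le _ (Finset.mem_univ i))
      have hεsum : ε * ((m:ℝ)+1) ≤ 1 - ∑ i, z i := by
        have := min_le_right (Finset.univ.inf' Finset.univ_nonempty z)
          ((1 - ∑ i, z i) / ((m:ℝ)+1))
        calc ε * ((m:ℝ)+1) ≤ ((1 - ∑ i, z i) / ((m:ℝ)+1)) * ((m:ℝ)+1) := by
              apply mul_le_mul_of_nonneg_right _ (le_of_lt hm1pos)
              exact this
          _ = 1 - ∑ i, z i := div_mul_cancel₀ _ (ne_of_gt hm1pos)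
      have htε : t₀ + ε ∈ S := by
        refine ⟨by linarith, ?_, ?_⟩
        · intro i
          have h1 : A + (t₀ + ε) * d i = z i + ε * d i := by
            show A + (t₀ + ε) * d i = (A + t₀ * d i) + ε * d i
            ring
          rw [h1]
          have h2 := (hbd i).1
          have h3 := hεinf i
          have h4 : ε * (-1) ≤ ε * d i := mul_le_mul_of_nonneg_left h2 (le_of_lt hε0)
          linarith
        · have hzs : (∑ i, z i) = (m:ℝ) * A + t₀ * (∑ i, d i) := by
            rw [show (∑ i, z i) = ∑ i, (A + t₀ * d i) from Finset.sum_congr rfl (fun i _ => rfl)]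
            exact hsumexp t₀
          have h1 : (∑ i, (A + (t₀ + ε) * d i)) = (∑ i, z i) + ε * (∑ i, d i) := by
            rw [hsumexp (t₀ + ε), hzs]
            ring
          rw [h1]
          have h3 : ε * (∑ i, d i) ≤ ε * (m:ℝ) :=
            mul_le_mul_of_nonneg_left hsumd (le_of_lt hε0)
          have h4 : ε * ((m:ℝ)+1) = ε * (m:ℝ) + ε := by ring
          linarith
      have := le_csSup hbdd htε
      linarith
  -- compactness of cornerB
  have hQclosed : IsClosed (cornerB m) := by
    have hQeq : cornerB m = (⋂ i, {y : EuclideanSpace ℝ (Fin m) | 0 ≤ y i}) ∩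
        ({y : EuclideanSpace ℝ (Fin m) | (∑ i, y i) ≤ 1} ∩
          ((⋃ i, {y : EuclideanSpace ℝ (Fin m) | y i = 0}) ∪
            {y : EuclideanSpace ℝ (Fin m) | (∑ i, y i) = 1})) := by
      ext y
      constructor
      · rintro ⟨h1, h2, h3⟩
        refine ⟨Set.mem_iInter.mpr h1, h2, ?_⟩
        rcases h3 with h | h
        · obtain ⟨i, hi⟩ := h
          exact Or.inl (Set.mem_iUnion.mpr ⟨i, hi⟩)
        · exact Or.inr h
      · rintro ⟨h1, h2, h3⟩
        refine ⟨Set.mem_iInter.mp h1, h2, ?_⟩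
        rcases h3 with h | h
        · obtain ⟨i, hi⟩ := Set.mem_iUnion.mp h
          exact Or.inl ⟨i, hi⟩
        · exact Or.inr h
    rw [hQeq]
    refine IsClosed.inter (isClosed_iInter (fun i => isClosed_le continuous_const (hconti i)))
      (IsClosed.inter (isClosed_le hcontsum continuous_const) (IsClosed.union ?_ ?_))
    · exact isClosed_iUnion_of_finite (fun i => isClosed_eq (hconti i) continuous_const)
    · exact isClosed_eq hcontsum continuous_const
  have hQbdd : Bornology.IsBounded (cornerB m) := by
    apply Bornology.IsBounded.subset (Metric.isBounded_closedBall (x := (0 : EuclideanSpace ℝ (Fin m))) (r := 1))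
    rintro y ⟨h1, h2, -⟩
    rw [Metric.mem_closedBall, dist_zero_right]
    have hy1 : ∀ i, y i ≤ 1 := by
      intro i
      calc y i ≤ ∑ j, y j := Finset.single_le_sum (fun j _ => h1 j) (Finset.mem_univ i)
        _ ≤ 1 := h2
    rw [EuclideanSpace.norm_eq]
    have hsq : (∑ i, ‖y i‖^2) ≤ 1 := by
      calc (∑ i, ‖y i‖^2) ≤ ∑ i, y i := by
            apply Finset.sum_le_sum
            intro i _
            rw [Real.norm_eq_abs, sq_abs]
            nlinarith [h1 i, hy1 i]
        _ ≤ 1 := h2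
    calc Real.sqrt (∑ i, ‖y i‖^2) ≤ Real.sqrt 1 := Real.sqrt_le_sqrt hsq
      _ = 1 := Real.sqrt_one
  have hQcompact : IsCompact (cornerB m) := Metric.isCompact_of_isClosed_isBounded hQclosed hQbdd
  haveI : CompactSpace (cornerB m) := isCompact_iff_compactSpace.mp hQcompact
  set fS : cornerB m → (Metric.sphere (0 : EuclideanSpace ℝ (Fin m)) 1 : Set _) :=
    fun y => ⟨f0 y.1, hf0mem y.1 y.2⟩ with hfSdef
  have hbij : Function.Bijective fS := by
    constructor
    · intro y₁ y₂ h
      have h' : f0 y₁.1 = f0 y₂.1 := congrArg Subtype.val h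
      apply Subtype.ext
      rcases le_total ‖y₁.1 - c‖ ‖y₂.1 - c‖ with hle | hle
      · exact hinjaux _ y₁.2 _ y₂.2 h' hle
      · exact (hinjaux _ y₂.2 _ y₁.2 h'.symm hle).symm
    · rintro ⟨d, hd⟩
      obtain ⟨y, hyQ, hfy⟩ := hsurj d (mem_sphere_zero_iff_norm.mp hd)
      exact ⟨⟨y, hyQ⟩, Subtype.ext hfy⟩
  have hfc : Continuous fS := by
    apply Continuous.subtype_mk
    apply Continuous.fun_smul
    · apply Continuous.inv₀
      · exact continuous_norm.comp (continuous_subtype_val.sub continuous_const)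
      · intro y
        exact norm_ne_zero_iff.mpr (hyc y.1 y.2)
    · exact continuous_subtype_val.sub continuous_const
  exact ⟨Continuous.homeoOfEquivCompactToT2 (f := Equiv.ofBijective fS hbij) hfc⟩

set_option maxHeartbeats 2000000 in
lemma bset_homeo_corner (hk : 2 ≤ k) (V : Finset ℕ) (hV : V ⊆ Finset.Icc 1 (k-1))
    {m : ℕ} (hm : 1 ≤ m) (hcard : V.card = m + 1) :
    Nonempty ((bset k V) ≃ₜ (cornerB m)) := by
  classical
  set σ := V.orderIsoOfFin hcard with hσdef
  set vt : Fin (m+1) → ℕ := fun j => (σ j : ℕ) with hvtdef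
  have hvtV : ∀ j, vt j ∈ V := fun j => (σ j).2
  have hvtinj : Function.Injective vt := fun a b hab => σ.injective (Subtype.ext hab)
  have hvtrange : ∀ j, 1 ≤ vt j ∧ vt j ≤ k - 1 := fun j => Finset.mem_Icc.mp (hV (hvtV j))
  have hvlt : ∀ j : Fin (m+1), vt j - 1 < k - 1 := by
    intro j
    have := hvtrange j
    omega
  set vidx : Fin (m+1) → Fin (k-1) := fun j => ⟨vt j - 1, hvlt j⟩ with hvidxdef
  have hvidx1 : ∀ j, ((vidx j : Fin (k-1)) : ℕ) + 1 = vt j := by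
    intro j
    have := hvtrange j
    simp only [hvidxdef]
    omega
  have hvidxinj : Function.Injective vidx := by
    intro a b hab
    apply hvtinj
    have ha := hvidx1 a
    have hb := hvidx1 b
    rw [hab] at ha
    omega
  have hsurjV : ∀ u ∈ V, ∃ j, vt j = u := by
    intro u hu
    exact ⟨σ.symm ⟨u, hu⟩, by simp [hvtdef]⟩
  have hsum_reindex : ∀ x : Fin (k-1) → ℝ, (∀ i, x i ≠ 0 → ((i:ℕ)+1) ∈ V) →
      (∑ i, x i) = ∑ j : Fin (m+1), x (vidx j) := by
    intro x hx
    have h1 : ∑ i ∈ (Finset.univ.image vidx), x i = ∑ i, x i := by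
      apply Finset.sum_subset (Finset.subset_univ _)
      intro i _ hni
      by_contra hz
      apply hni
      obtain ⟨j, hj⟩ := hsurjV ((i:ℕ)+1) (hx i hz)
      refine Finset.mem_image.mpr ⟨j, Finset.mem_univ _, ?_⟩
      apply Fin.ext
      have h2 := hvidx1 j
      omega
    rw [← h1, Finset.sum_image (fun a _ b _ h => hvidxinj h)]
  have hmemrange : ∀ i : Fin (k-1), ((i:ℕ)+1) ∈ V → ∃ j, vidx j = i := by
    intro i hi
    obtain ⟨j, hj⟩ := hsurjV _ hi
    refine ⟨j, Fin.ext ?_⟩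
    have := hvidx1 j
    omega
  have hclne : ∀ j : Fin m, vidx (Fin.castSucc j) ≠ vidx (Fin.last m) := by
    intro j h
    exact (Fin.ne_last_of_lt (Fin.castSucc_lt_last j)) (hvidxinj h)
  -- the forward map on coordinates
  set F0 : (Fin (k-1) → ℝ) → (EuclideanSpace ℝ (Fin m)) :=
    fun x => (EuclideanSpace.equiv (Fin m) ℝ).symm (fun i => x (vidx (Fin.castSucc i)))
    with hF0def
  have hF0co : ∀ x i, F0 x i = x (vidx (Fin.castSucc i)) := fun x i => rfl
  have hsplit : ∀ x : Fin (k-1) → ℝ, (∀ i, x i ≠ 0 → ((i:ℕ)+1) ∈ V) →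
      (∑ i, x i) = (∑ i : Fin m, F0 x i) + x (vidx (Fin.last m)) := by
    intro x hx
    rw [hsum_reindex x hx, Fin.sum_univ_castSucc]
    rfl
  have hFmem : ∀ x ∈ bset k V, F0 x ∈ cornerB m := by
    rintro x ⟨h0, h1, hsupp, iw, hiwV, hiw0⟩
    have hsp := hsplit x hsupp
    rw [h1] at hsp
    refine ⟨fun i => h0 _, by have := h0 (vidx (Fin.last m)); linarith, ?_⟩
    obtain ⟨j, hj⟩ := hmemrange iw hiwV
    rcases Fin.eq_castSucc_or_eq_last j with ⟨j', rfl⟩ | rfl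
    · left
      exact ⟨j', by rw [hF0co, hj, hiw0]⟩
    · right
      rw [hj, hiw0] at hsp
      linarith
  -- the inverse map
  set G0 : (EuclideanSpace ℝ (Fin m)) → (Fin (k-1) → ℝ) :=
    fun y i => (∑ jj : Fin m, if vidx (Fin.castSucc jj) = i then y jj else 0) +
      (if vidx (Fin.last m) = i then 1 - ∑ jj, y jj else 0) with hG0def
  have hGat : ∀ y (j : Fin m), G0 y (vidx (Fin.castSucc j)) = y j := by
    intro y j
    have h2 : (if vidx (Fin.last m) = vidx (Fin.castSucc j) then 1 - ∑ jj, y jj else 0) = 0 :=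
      if_neg (fun h => hclne j h.symm)
    have h1 : (∑ jj : Fin m, if vidx (Fin.castSucc jj) = vidx (Fin.castSucc j) then y jj else 0)
        = y j := by
      rw [Finset.sum_eq_single j]
      · exact if_pos rfl
      · intro b _ hb
        exact if_neg (fun h => hb (Fin.castSucc_injective _ (hvidxinj h)))
      · intro h
        exact absurd (Finset.mem_univ _) h
    show (∑ jj : Fin m, if vidx (Fin.castSucc jj) = vidx (Fin.castSucc j) then y jj else 0) +
      (if vidx (Fin.last m) = vidx (Fin.castSucc j) then 1 - ∑ jj, y jj else 0) = y j
    rw [h1, h2, add_zero]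
  have hGlast : ∀ y, G0 y (vidx (Fin.last m)) = 1 - ∑ jj, y jj := by
    intro y
    have h1 : (∑ jj : Fin m, if vidx (Fin.castSucc jj) = vidx (Fin.last m) then y jj else 0) = 0 :=
      Finset.sum_eq_zero (fun b _ => if_neg (hclne b))
    show (∑ jj : Fin m, if vidx (Fin.castSucc jj) = vidx (Fin.last m) then y jj else 0) +
      (if vidx (Fin.last m) = vidx (Fin.last m) then 1 - ∑ jj, y jj else 0) = 1 - ∑ jj, y jj
    rw [h1, if_pos rfl, zero_add]
  have hGoff : ∀ y i, (∀ j, vidx j ≠ i) → G0 y i = 0 := by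
    intro y i hni
    have h1 : (∑ jj : Fin m, if vidx (Fin.castSucc jj) = i then y jj else 0) = 0 :=
      Finset.sum_eq_zero (fun b _ => if_neg (hni _))
    show (∑ jj : Fin m, if vidx (Fin.castSucc jj) = i then y jj else 0) +
      (if vidx (Fin.last m) = i then 1 - ∑ jj, y jj else 0) = 0
    rw [h1, if_neg (hni _), add_zero]
  have hGmem : ∀ y ∈ cornerB m, G0 y ∈ bset k V := by
    rintro y ⟨hy0, hy1, hy3⟩
    refine ⟨?_, ?_, ?_, ?_⟩
    · intro i
      apply add_nonneg
      · apply Finset.sum_nonneg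
        intro jj _
        split
        · exact hy0 jj
        · exact le_refl 0
      · split
        · linarith
        · exact le_refl 0
    · rw [hG0def]
      simp only
      rw [Finset.sum_add_distrib]
      rw [Finset.sum_comm]
      have hA : ∀ jj : Fin m, (∑ i : Fin (k-1), if vidx (Fin.castSucc jj) = i then y jj else 0)
          = y jj := by
        intro jj
        rw [Finset.sum_ite_eq]
        simp
      rw [Finset.sum_congr rfl (fun jj _ => hA jj)]
      rw [Finset.sum_ite_eq]
      simp
    · intro i hi
      by_contra hniV
      apply hi
      apply hGoff
      intro j hj
      apply hniV
      rw [← hj]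
      rw [hvidx1 j]
      exact hvtV j
    · rcases hy3 with ⟨i0, hi0⟩ | hsum
      · refine ⟨vidx (Fin.castSucc i0), ?_, ?_⟩
        · rw [hvidx1]; exact hvtV _
        · rw [hGat, hi0]
      · refine ⟨vidx (Fin.last m), ?_, ?_⟩
        · rw [hvidx1]; exact hvtV _
        · rw [hGlast, hsum]; ring
  have hFG : ∀ y ∈ cornerB m, F0 (G0 y) = y := by
    intro y hy
    apply (EuclideanSpace.equiv (Fin m) ℝ).injective
    funext i
    show F0 (G0 y) i = y i
    rw [hF0co, hGat]
  have hinj : ∀ x₁ ∈ bset k V, ∀ x₂ ∈ bset k V, F0 x₁ = F0 x₂ → x₁ = x₂ := by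
    intro x₁ hx₁ x₂ hx₂ hF
    have hco : ∀ i : Fin m, x₁ (vidx (Fin.castSucc i)) = x₂ (vidx (Fin.castSucc i)) := by
      intro i
      have := congrArg (fun z : EuclideanSpace ℝ (Fin m) => z i) hF
      simpa [hF0co] using this
    obtain ⟨h01, h11, hsupp1, -⟩ := hx₁
    obtain ⟨h02, h12, hsupp2, -⟩ := hx₂
    have hsp1 := hsplit x₁ hsupp1
    have hsp2 := hsplit x₂ hsupp2
    rw [h11] at hsp1
    rw [h12] at hsp2
    funext i
    by_cases hirange : ∃ j, vidx j = i
    · obtain ⟨j, rfl⟩ := hirange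
      rcases Fin.eq_castSucc_or_eq_last j with ⟨j', rfl⟩ | rfl
      · exact hco j'
      · have hsame : (∑ i : Fin m, F0 x₁ i) = ∑ i : Fin m, F0 x₂ i := by
          apply Finset.sum_congr rfl
          intro i _
          rw [hF0co, hF0co]
          exact hco i
        linarith
    · push_neg at hirange
      have hz1 : x₁ i = 0 := by
        by_contra h
        exact absurd (hmemrange i (hsupp1 i h)) (by push_neg; exact hirange)
      have hz2 : x₂ i = 0 := by
        by_contra h
        exact absurd (hmemrange i (hsupp2 i h)) (by push_neg; exact hirange)
      rw [hz1, hz2]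
  -- assemble
  haveI : CompactSpace (bset k V) := isCompact_iff_compactSpace.mp (bset_compact hk V hV)
  set fS : (bset k V) → (cornerB m) := fun x => ⟨F0 x.1, hFmem x.1 x.2⟩ with hfSdef
  have hbij : Function.Bijective fS := by
    constructor
    · intro x₁ x₂ h
      exact Subtype.ext (hinj _ x₁.2 _ x₂.2 (congrArg Subtype.val h))
    · rintro ⟨y, hy⟩
      exact ⟨⟨G0 y, hGmem y hy⟩, Subtype.ext (hFG y hy)⟩
  have hfc : Continuous fS := by
    apply Continuous.subtype_mk
    apply Continuous.comp (EuclideanSpace.equiv (Fin m) ℝ).symm.continuous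
    apply continuous_pi
    intro i
    exact (continuous_apply (vidx (Fin.castSucc i))).comp continuous_subtype_val
  exact ⟨Continuous.homeoOfEquivCompactToT2 (f := Equiv.ofBijective fS hbij) hfc⟩

lemma boundary_homeo_sphere (hk : 2 ≤ k) (V : Finset ℕ) (hV : V ⊆ Finset.Icc 1 (k-1))
    {m : ℕ} (hm : 1 ≤ m) (hcard : V.card = m + 1) :
    Nonempty ((realize k {γ : Finset ℕ | γ ⊆ V ∧ γ ≠ V}) ≃ₜ
      (Metric.sphere (0 : EuclideanSpace ℝ (Fin m)) 1)) := by
  obtain ⟨h1⟩ := bset_homeo_corner hk V hV hm hcard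
  obtain ⟨h2⟩ := corner_homeo_sphere hm
  exact ⟨(Homeomorph.setCongr (realize_boundary_eq hk V hV)).trans (h1.trans h2)⟩

def Tri (k : ℕ) (Γ : Set (Finset ℕ)) : Prop :=
  realize k Γ = ∅ ∨ ContractibleSpace (realize k Γ) ∨
    ∃ q : ℕ, Nonempty ((realize k Γ) ≃ₕ (Metric.sphere (0 : EuclideanSpace ℝ (Fin (q + 1))) 1))

lemma tri_congr {k : ℕ} {Γ Γ' : Set (Finset ℕ)} (h : Γ = Γ') : Tri k Γ' → Tri k Γ := by
  rw [h]; exact id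

lemma tri_of_hequiv {k : ℕ} {Γ Γ' : Set (Finset ℕ)}
    (e : Nonempty ((realize k Γ) ≃ₕ (realize k Γ'))) : Tri k Γ' → Tri k Γ := by
  obtain ⟨e⟩ := e
  rintro (h | h | ⟨q, ⟨hq⟩⟩)
  · left
    have hie : IsEmpty (realize k Γ') := by rw [h]; exact Set.isEmpty_coe_sort.mpr rfl
    rw [Set.eq_empty_iff_forall_notMem]
    intro x hx
    exact hie.false (e.toFun ⟨x, hx⟩)
  · right; left
    haveI := h
    exact e.contractibleSpace
  · right; right
    exact ⟨q, ⟨e.trans hq⟩⟩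

lemma gam_dc (V : Finset ℕ) (J : Finset (Finset ℕ)) :
    ∀ γ ∈ gam V J, ∀ δ, δ ⊆ γ → δ ∈ gam V J := by
  rintro γ ⟨hγV, T, hTJ, hγT⟩ δ hδ
  exact ⟨hδ.trans hγV, T, hTJ,
    Finset.subset_empty.mp (hγT ▸ Finset.inter_subset_inter hδ (Finset.Subset.refl T))⟩

set_option maxHeartbeats 2000000 in
lemma driver (hk : 2 ≤ k) : ∀ N : ℕ, ∀ V : Finset ℕ, ∀ J : Finset (Finset ℕ),
    V.card + J.card ≤ N → V ⊆ Finset.Icc 1 (k-1) →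
    (∀ T ∈ J, T ⊆ V) → (∀ T ∈ J, OrdConvex V T) → Tri k (gam V J) := by
  intro N
  induction N with
  | zero =>
    intro V J hcard hV hTV hconv
    left
    apply realize_eq_empty
    rintro γ ⟨hsub, T, hT, -⟩
    have hJ : J = ∅ := Finset.card_eq_zero.mp (by omega)
    rw [hJ] at hT
    simp at hT
  | succ n IH =>
    intro V J hcard hV hTV hconv
    by_cases hface : ∃ γ ∈ gam V J, γ.Nonempty
    swap
    · left
      apply realize_eq_empty
      intro γ hγ
      by_contra hne
      exact hface ⟨γ, hγ, Finset.nonempty_iff_ne_empty.mpr hne⟩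
    obtain ⟨γ₀, hγ₀, hγ₀ne⟩ := hface
    obtain ⟨hγ₀V, T₀, hT₀J, hT₀⟩ := hγ₀
    have hVne : V.Nonempty := ⟨hγ₀ne.choose, hγ₀V hγ₀ne.choose_spec⟩
    by_cases hc1 : ∅ ∈ J
    · obtain ⟨u0, hu0⟩ := hVne
      right; left
      apply cone_contractible hk _ u0
      · exact ⟨Finset.singleton_subset_iff.mpr hu0, ∅, hc1, Finset.inter_empty _⟩
      · rintro γ ⟨hγV, T, hTJ, hγT⟩
        exact ⟨Finset.insert_subset hu0 hγV, ∅, hc1, Finset.inter_empty _⟩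
    by_cases hc2 : ∃ u ∈ V, ∀ T ∈ J, u ∉ T
    · obtain ⟨u0, hu0V, hu0⟩ := hc2
      right; left
      apply cone_contractible hk _ u0
      · exact ⟨Finset.singleton_subset_iff.mpr hu0V, T₀, hT₀J,
          Finset.singleton_inter_of_notMem (hu0 T₀ hT₀J)⟩
      · rintro γ ⟨hγV, T, hTJ, hγT⟩
        refine ⟨Finset.insert_subset hu0V hγV, T, hTJ, ?_⟩
        rw [Finset.insert_inter_of_notMem (hu0 T hTJ), hγT]
    by_cases hc3 : ∃ T ∈ J, ∃ T' ∈ J, T ⊆ T' ∧ T ≠ T'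
    · obtain ⟨T, hTJ, T', hT'J, hsub, hne⟩ := hc3
      have hgameq : gam V J = gam V (J.erase T') := by
        ext γ
        constructor
        · rintro ⟨hγV, S, hSJ, hγS⟩
          by_cases hS : S = T'
          · subst hS
            refine ⟨hγV, T, Finset.mem_erase.mpr ⟨hne, hTJ⟩, ?_⟩
            exact Finset.subset_empty.mp
              (hγS ▸ Finset.inter_subset_inter (Finset.Subset.refl γ) hsub)
          · exact ⟨hγV, S, Finset.mem_erase.mpr ⟨hS, hSJ⟩, hγS⟩
        · rintro ⟨hγV, S, hSJ, hγS⟩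
          exact ⟨hγV, S, Finset.mem_of_mem_erase hSJ, hγS⟩
      apply tri_congr hgameq
      apply IH V (J.erase T') ?_ hV
        (fun S hS => hTV S (Finset.mem_of_mem_erase hS))
        (fun S hS => hconv S (Finset.mem_of_mem_erase hS))
      have h1 := Finset.card_erase_of_mem hT'J
      have h2 : 1 ≤ J.card := Finset.card_pos.mpr ⟨T', hT'J⟩
      omega
    by_cases hc4 : ∃ u ∈ V, ∃ u' ∈ V, u ≠ u' ∧ ∀ T ∈ J, u' ∈ T → u ∈ T
    · obtain ⟨u, huV, u', hu'V, hneu, hdom⟩ := hc4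
      classical
      set w : ℕ → ℕ := fun v => if v = u then u' else v with hwdef
      have hwu : w u = u' := if_pos rfl
      have hwother : ∀ v, v ≠ u → w v = v := fun v hv => if_neg hv
      have hidem : ∀ v, w (w v) = w v := by
        intro v
        by_cases h : v = u
        · rw [h, hwu, hwother u' (Ne.symm hneu)]
        · rw [hwother v h, hwother v h]
      have hnotTmem : ∀ (γ T : Finset ℕ), γ ∩ T = ∅ → ∀ a ∈ γ, a ∉ T := by
        intro γ T hγT a ha hT
        exact Finset.eq_empty_iff_forall_notMem.mp hγT a (Finset.mem_inter.mpr ⟨ha, hT⟩)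
      have hwmem : ∀ γ ∈ gam V J, γ ∪ γ.image w ∈ gam V J := by
        rintro γ ⟨hγV, T, hTJ, hγT⟩
        refine ⟨?_, T, hTJ, ?_⟩
        · apply Finset.union_subset hγV
          intro v hv
          rcases Finset.mem_image.mp hv with ⟨a, ha, rfl⟩
          by_cases h : a = u
          · rw [h, hwu]; exact hu'V
          · rw [hwother a h]; exact hγV ha
        · apply Finset.eq_empty_of_forall_notMem
          intro v hv
          rw [Finset.mem_inter, Finset.mem_union] at hv
          obtain ⟨hv1, hvT⟩ := hv
          rcases hv1 with h | h
          · exact hnotTmem γ T hγT v h hvT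
          · rcases Finset.mem_image.mp h with ⟨a, ha, rfl⟩
            by_cases hau : a = u
            · subst hau
              rw [hwu] at hvT
              exact hnotTmem γ T hγT a ha (hdom T hTJ hvT)
            · rw [hwother a hau] at hvT
              exact hnotTmem γ T hγT a ha hvT
      have hred := reduction hk (gam V J) (fun γ hγ => hγ.1.trans hV) (gam_dc V J) w hidem hwmem
      have hfixeq : {γ | γ ∈ gam V J ∧ ∀ v ∈ γ, w v = v} =
          gam (V.erase u) (J.image (fun T => T.erase u)) := by
        ext γ
        constructor
        · rintro ⟨⟨hγV, T, hTJ, hγT⟩, hfix⟩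
          have hunotin : u ∉ γ := by
            intro hu
            have h1 := hfix u hu
            rw [hwu] at h1
            exact hneu h1.symm
          refine ⟨fun a ha => Finset.mem_erase.mpr ⟨fun h => hunotin (h ▸ ha), hγV ha⟩,
            T.erase u, Finset.mem_image_of_mem _ hTJ, ?_⟩
          apply Finset.eq_empty_of_forall_notMem
          intro v hv
          rw [Finset.mem_inter, Finset.mem_erase] at hv
          exact hnotTmem γ T hγT v hv.1 hv.2.2
        · rintro ⟨hγV', T', hT'J, hγT'⟩
          rcases Finset.mem_image.mp hT'J with ⟨T, hTJ, rfl⟩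
          have hunotin : u ∉ γ := fun h => (Finset.mem_erase.mp (hγV' h)).1 rfl
          refine ⟨⟨fun a ha => (Finset.mem_erase.mp (hγV' ha)).2, T, hTJ, ?_⟩, ?_⟩
          · apply Finset.eq_empty_of_forall_notMem
            intro v hv
            rw [Finset.mem_inter] at hv
            have hvne : v ≠ u := fun h => hunotin (h ▸ hv.1)
            exact hnotTmem γ (T.erase u) hγT' v hv.1 (Finset.mem_erase.mpr ⟨hvne, hv.2⟩)
          · intro v hv
            exact hwother v (fun h => hunotin (h ▸ hv))
      rw [hfixeq] at hred
      apply tri_of_hequiv hred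
      apply IH (V.erase u) (J.image (fun T => T.erase u)) ?_ ((Finset.erase_subset _ _).trans hV) ?_ ?_
      · have h1 := Finset.card_erase_of_mem huV
        have h2 : (J.image (fun T => T.erase u)).card ≤ J.card := Finset.card_image_le
        have h3 : 1 ≤ V.card := Finset.card_pos.mpr ⟨u, huV⟩
        omega
      · rintro S hS
        rcases Finset.mem_image.mp hS with ⟨T, hTJ, rfl⟩
        intro a ha
        rw [Finset.mem_erase] at ha ⊢
        exact ⟨ha.1, hTV T hTJ ha.2⟩
      · rintro S hS
        rcases Finset.mem_image.mp hS with ⟨T, hTJ, rfl⟩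
        intro a haS b hbS c hcV hac hcb
        rw [Finset.mem_erase] at haS hbS hcV ⊢
        exact ⟨hcV.1, hconv T hTJ a haS.2 b hbS.2 c hcV.2 hac hcb⟩
    -- terminal case
    · have hne' : ∀ T ∈ J, T.Nonempty :=
        fun T hT => Finset.nonempty_iff_ne_empty.mpr (fun h => hc1 (h ▸ hT))
      have hanti : ∀ T ∈ J, ∀ T' ∈ J, T ⊆ T' → T = T' := by
        intro T hT T' hT' hsub
        by_contra hne
        exact hc3 ⟨T, hT, T', hT', hsub, hne⟩
      have hrun : ∀ u ∈ V, ∃ T ∈ J, u ∈ T := by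
        intro u hu
        by_contra hcon
        push_neg at hcon
        exact hc2 ⟨u, hu, hcon⟩
      have hinc : ∀ a ∈ V, ∀ b ∈ V, a ≠ b → ∃ T ∈ J, a ∈ T ∧ b ∉ T := by
        intro a ha b hb hab
        by_contra hcon
        push_neg at hcon
        exact hc4 ⟨b, hb, a, ha, fun h => hab h.symm, fun T hT haT => hcon T hT haT⟩
      have hsingle := terminal_singletons V J hTV hconv hanti hrun hinc
      have hgameq : gam V J = {γ : Finset ℕ | γ ⊆ V ∧ γ ≠ V} := by
        ext γ
        constructor
        · rintro ⟨hγV, T, hTJ, hγT⟩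
          refine ⟨hγV, ?_⟩
          obtain ⟨t, ht⟩ := hne' T hTJ
          intro h
          subst h
          exact Finset.eq_empty_iff_forall_notMem.mp hγT t
            (Finset.mem_inter.mpr ⟨hTV T hTJ ht, ht⟩)
        · rintro ⟨hγV, hγne⟩
          obtain ⟨u, huV, huγ⟩ : ∃ u ∈ V, u ∉ γ := by
            by_contra hcon
            push_neg at hcon
            exact hγne (Finset.Subset.antisymm hγV hcon)
          exact ⟨hγV, {u}, hsingle u huV, Finset.inter_singleton_of_notMem huγ⟩
      -- V has at least two elements
      obtain ⟨u1, hu1⟩ := hγ₀ne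
      have hu1V : u1 ∈ V := hγ₀V hu1
      have hγ₀proper : γ₀ ≠ V := by
        have : γ₀ ∈ gam V J := ⟨hγ₀V, T₀, hT₀J, hT₀⟩
        rw [hgameq] at this
        exact this.2
      obtain ⟨u2, hu2V, hu2γ⟩ : ∃ u ∈ V, u ∉ γ₀ := by
        by_contra hcon
        push_neg at hcon
        exact hγ₀proper (Finset.Subset.antisymm hγ₀V hcon)
      have hVcard : 2 ≤ V.card := by
        apply Finset.one_lt_card.mpr
        exact ⟨u1, hu1V, u2, hu2V, fun h => hu2γ (h ▸ hu1)⟩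
      right; right
      refine ⟨V.card - 2, ?_⟩
      obtain ⟨hh⟩ := boundary_homeo_sphere hk V hV (m := V.card - 2 + 1) (by omega) (by omega)
      rw [hgameq]
      exact ⟨hh.toHomotopyEquiv⟩

end ScropeAux

/-- The geometric realization of any (nontrivial) Scrope complex is empty, contractible,
or homotopy equivalent to a sphere `S^q` for some `q ≥ 0`. -/
theorem scrope_realization_contractible_or_sphere
    (k : ℕ) (hk : 2 ≤ k) (z : List (ℕ × ℕ)) (hz : z ≠ [])
    (hp : ∀ p ∈ z, 1 ≤ p.1 ∧ p.1 < p.2 ∧ p.2 ≤ k) :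
    realize k (scrope k z) = ∅ ∨
    ContractibleSpace (realize k (scrope k z)) ∨
    ∃ q : ℕ, Nonempty
      (ContinuousMap.HomotopyEquiv (realize k (scrope k z))
        (Metric.sphere (0 : EuclideanSpace ℝ (Fin (q + 1))) 1)) := by
  classical
  set V : Finset ℕ := Finset.Icc 1 (k-1) with hVdef
  set J : Finset (Finset ℕ) := (z.map (fun p => Finset.Icc p.1 (p.2 - 1))).toFinset with hJdef
  have hscr : scrope k z = ScropeAux.gam V J := by
    ext γ
    constructor
    · rintro ⟨p, hpz, hγ⟩
      obtain ⟨hp1, hp2, hp3⟩ := hp p hpz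
      refine ⟨?_, Finset.Icc p.1 (p.2 - 1), ?_, ?_⟩
      · intro a ha
        have h1 := hγ ha
        rw [Finset.mem_union, Finset.mem_Icc, Finset.mem_Icc] at h1
        rw [hVdef, Finset.mem_Icc]
        omega
      · rw [hJdef, List.mem_toFinset]
        exact List.mem_map.mpr ⟨p, hpz, rfl⟩
      · apply Finset.eq_empty_of_forall_notMem
        intro a ha
        rw [Finset.mem_inter, Finset.mem_Icc] at ha
        have h1 := hγ ha.1
        rw [Finset.mem_union, Finset.mem_Icc, Finset.mem_Icc] at h1
        omega
    · rintro ⟨hγV, T, hTJ, hγT⟩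
      rw [hJdef, List.mem_toFinset] at hTJ
      rcases List.mem_map.mp hTJ with ⟨p, hpz, rfl⟩
      obtain ⟨hp1, hp2, hp3⟩ := hp p hpz
      refine ⟨p, hpz, ?_⟩
      intro a ha
      have haV := hγV ha
      rw [hVdef, Finset.mem_Icc] at haV
      have hnotin : a ∉ Finset.Icc p.1 (p.2 - 1) := fun h =>
        Finset.eq_empty_iff_forall_notMem.mp hγT a (Finset.mem_inter.mpr ⟨ha, h⟩)
      rw [Finset.mem_Icc] at hnotin
      rw [Finset.mem_union, Finset.mem_Icc, Finset.mem_Icc]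
      omega
  have hTV : ∀ T ∈ J, T ⊆ V := by
    intro T hT
    rw [hJdef, List.mem_toFinset] at hT
    rcases List.mem_map.mp hT with ⟨p, hpz, rfl⟩
    obtain ⟨hp1, hp2, hp3⟩ := hp p hpz
    intro a ha
    rw [Finset.mem_Icc] at ha
    rw [hVdef, Finset.mem_Icc]
    omega
  have hconv : ∀ T ∈ J, ScropeAux.OrdConvex V T := by
    intro T hT
    rw [hJdef, List.mem_toFinset] at hT
    rcases List.mem_map.mp hT with ⟨p, hpz, rfl⟩
    intro a haT b hbT c hcV hac hcb
    rw [Finset.mem_Icc] at haT hbT ⊢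
    omega
  have hTri := ScropeAux.driver hk (V.card + J.card) V J (le_refl _)
    (by rw [hVdef]) hTV hconv
  rw [hscr]
  exact hTri
end

section
/- Let k ≥ 2 and let Γ be the Scrope complex on vertex set [k−1] associated to a nonempty finite list of pairs (x_1,y_1),…,(x_m,y_m) with 1 ≤ x_i < y_i ≤ k. Then the reduced Euler characteristic χ̃(Γ) = Σ_{γ∈Γ} (−1)^{|γ|−1} is equal to 0, 1, or −1. -/
namespace ScropeAux

lemma foldr_max_le_iff (l : List ℕ) (u : ℕ) :
    l.foldr max 0 ≤ u ↔ ∀ x ∈ l, x ≤ u := by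
  induction l with
  | nil => simp
  | cons a l ih => simp [max_le_iff, ih]

def scrA (z : List (ℕ × ℕ)) : ℕ := (z.map Prod.fst).foldr max 0

def scrM (z : List (ℕ × ℕ)) (t : ℕ) : ℕ :=
  ((z.filter (fun p => decide (p.2 - 1 < t))).map Prod.fst).foldr max 0

lemma scrA_le_iff (z : List (ℕ × ℕ)) (u : ℕ) :
    scrA z ≤ u ↔ ∀ p ∈ z, p.1 ≤ u := by
  simp [scrA, foldr_max_le_iff]

lemma scrM_le_iff (z : List (ℕ × ℕ)) (t u : ℕ) :
    scrM z t ≤ u ↔ ∀ p ∈ z, p.2 - 1 < t → p.1 ≤ u := by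
  simp [scrM, foldr_max_le_iff, List.mem_filter]

def scrHset (k : ℕ) (z : List (ℕ × ℕ)) (t : ℕ) : Finset (Finset ℕ) :=
  (Finset.Icc 1 (k - 1)).powerset.filter
    (fun P => P.sup id = t ∧ ∀ p ∈ z, p.2 - 1 < t → (P ∩ Finset.Icc p.1 (p.2 - 1)).Nonempty)

def scrH (k : ℕ) (z : List (ℕ × ℕ)) (t : ℕ) : ℤ := ∑ P ∈ scrHset k z t, (-1) ^ P.card

def scrG (k : ℕ) (z : List (ℕ × ℕ)) (t : ℕ) : ℤ :=
  ∑ u ∈ Finset.range (t + 1), scrH k z u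

lemma mem_scrHset {k t : ℕ} {z : List (ℕ × ℕ)} {P : Finset ℕ} :
    P ∈ scrHset k z t ↔ P ⊆ Finset.Icc 1 (k - 1) ∧ P.sup id = t ∧
      ∀ p ∈ z, p.2 - 1 < t → (P ∩ Finset.Icc p.1 (p.2 - 1)).Nonempty := by
  simp [scrHset, and_assoc]

lemma nonempty_of_mem_scrHset {k t : ℕ} {z : List (ℕ × ℕ)} {P : Finset ℕ}
    (h : P ∈ scrHset k z t) (ht : 1 ≤ t) : P.Nonempty := by
  rcases Finset.eq_empty_or_nonempty P with rfl | h'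
  · have := (mem_scrHset.mp h).2.1
    simp at this
    omega
  · exact h'

lemma sup_mem_scrHset {k t : ℕ} {z : List (ℕ × ℕ)} {P : Finset ℕ}
    (h : P ∈ scrHset k z t) (ht : 1 ≤ t) : t ∈ P := by
  obtain ⟨b, hb, hbs⟩ := Finset.exists_mem_eq_sup P (nonempty_of_mem_scrHset h ht) id
  have := (mem_scrHset.mp h).2.1
  rw [this] at hbs
  simp only [id] at hbs
  rwa [hbs]

lemma not_mem_scrHset_of_lt {k t u : ℕ} {z : List (ℕ × ℕ)} {P : Finset ℕ}
    (h : P ∈ scrHset k z u) (hut : u < t) : t ∉ P := by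
  intro hmem
  have h1 : t ≤ P.sup id := Finset.le_sup (f := id) hmem
  rw [(mem_scrHset.mp h).2.1] at h1
  omega

lemma scrHset_zero (k : ℕ) (z : List (ℕ × ℕ)) : scrHset k z 0 = {∅} := by
  ext P
  simp only [mem_scrHset, Finset.mem_singleton]
  constructor
  · rintro ⟨hsub, hsup, -⟩
    rcases Finset.eq_empty_or_nonempty P with rfl | ⟨v, hv⟩
    · rfl
    · have h1 : 1 ≤ v := (Finset.mem_Icc.mp (hsub hv)).1
      have h2 : v ≤ P.sup id := Finset.le_sup (f := id) hv
      omega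
  · rintro rfl
    simp


lemma scrHset_eq_biUnion (k : ℕ) (z : List (ℕ × ℕ))
    (hp : ∀ p ∈ z, 1 ≤ p.1 ∧ p.1 < p.2 ∧ p.2 ≤ k)
    (t : ℕ) (ht1 : 1 ≤ t) (htn : t ≤ k - 1) :
    scrHset k z t = (Finset.Icc (scrM z t) (t - 1)).biUnion
      (fun u => (scrHset k z u).image (insert t)) := by
  ext Q
  simp only [Finset.mem_biUnion, Finset.mem_image, Finset.mem_Icc]
  constructor
  · intro hQ
    obtain ⟨hQsub, hQsup, hQhit⟩ := mem_scrHset.mp hQ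
    have htQ : t ∈ Q := sup_mem_scrHset hQ ht1
    refine ⟨(Q.erase t).sup id, ⟨?_, ?_⟩, Q.erase t, ?_, Finset.insert_erase htQ⟩
    · -- scrM z t ≤ sup of erase
      rw [scrM_le_iff]
      intro p hpz hb
      obtain ⟨v, hv⟩ := hQhit p hpz hb
      rw [Finset.mem_inter, Finset.mem_Icc] at hv
      have hvt : v ≠ t := by omega
      have : v ∈ Q.erase t := Finset.mem_erase.mpr ⟨hvt, hv.1⟩
      have := Finset.le_sup (f := id) this
      simp only [id] at this
      omega
    · -- sup of erase ≤ t - 1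
      apply Finset.sup_le
      intro v hv
      rw [Finset.mem_erase] at hv
      have := Finset.le_sup (f := id) hv.2
      rw [hQsup] at this
      have : v ≠ t := hv.1
      simp only [id] at *
      omega
    · -- erase is in scrHset at its own sup
      rw [mem_scrHset]
      refine ⟨(Finset.erase_subset _ _).trans hQsub, rfl, ?_⟩
      intro p hpz hb
      have hbt : p.2 - 1 < t := by
        have h2 : (Q.erase t).sup id ≤ t - 1 := by
          apply Finset.sup_le
          intro v hv
          rw [Finset.mem_erase] at hv
          have := Finset.le_sup (f := id) hv.2
          rw [hQsup] at this
          have : v ≠ t := hv.1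
          simp only [id] at *
          omega
        omega
      obtain ⟨v, hv⟩ := hQhit p hpz hbt
      rw [Finset.mem_inter, Finset.mem_Icc] at hv
      refine ⟨v, Finset.mem_inter.mpr ⟨Finset.mem_erase.mpr ⟨by omega, hv.1⟩, Finset.mem_Icc.mpr ⟨hv.2.1, hv.2.2⟩⟩⟩
  · rintro ⟨u, ⟨hMu, hut⟩, P', hP', rfl⟩
    obtain ⟨hsub, hsup, hhit⟩ := mem_scrHset.mp hP'
    have htP' : t ∉ P' := not_mem_scrHset_of_lt hP' (by omega)
    rw [mem_scrHset]
    refine ⟨?_, ?_, ?_⟩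
    · intro v hv
      rcases Finset.mem_insert.mp hv with rfl | hv'
      · exact Finset.mem_Icc.mpr ⟨ht1, htn⟩
      · exact hsub hv'
    · rw [Finset.sup_insert, hsup]
      simp only [id]
      exact max_eq_left (by omega)
    · intro p hpz hb
      rcases lt_or_ge (p.2 - 1) u with hbu | hbu
      · obtain ⟨v, hv⟩ := hhit p hpz hbu
        rw [Finset.mem_inter] at hv
        exact ⟨v, Finset.mem_inter.mpr ⟨Finset.mem_insert_of_mem hv.1, hv.2⟩⟩
      · -- u itself hits
        have ha : p.1 ≤ scrM z t := by
          have := (scrM_le_iff z t (scrM z t)).mp le_rfl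
          exact this p hpz hb
        have h1u : 1 ≤ u := le_trans (hp p hpz).1 (le_trans ha hMu)
        have huP' : u ∈ P' := sup_mem_scrHset hP' h1u
        exact ⟨u, Finset.mem_inter.mpr ⟨Finset.mem_insert_of_mem huP',
          Finset.mem_Icc.mpr ⟨le_trans ha hMu, hbu⟩⟩⟩

lemma scrH_rec (k : ℕ) (z : List (ℕ × ℕ))
    (hp : ∀ p ∈ z, 1 ≤ p.1 ∧ p.1 < p.2 ∧ p.2 ≤ k)
    (t : ℕ) (ht1 : 1 ≤ t) (htn : t ≤ k - 1) :
    scrH k z t = -∑ u ∈ Finset.Icc (scrM z t) (t - 1), scrH k z u := by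
  have hdisj : (↑(Finset.Icc (scrM z t) (t - 1)) : Set ℕ).PairwiseDisjoint
      (fun u => (scrHset k z u).image (insert t)) := by
    intro u hu v hv huv
    simp only [Finset.coe_Icc, Set.mem_Icc] at hu hv
    rw [Function.onFun, Finset.disjoint_left]
    rintro Q hQu hQv
    obtain ⟨P₁, hP₁, rfl⟩ := Finset.mem_image.mp hQu
    obtain ⟨P₂, hP₂, hEq⟩ := Finset.mem_image.mp hQv
    have h1 : t ∉ P₁ := not_mem_scrHset_of_lt hP₁ (by omega)
    have h2 : t ∉ P₂ := not_mem_scrHset_of_lt hP₂ (by omega)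
    have : P₁ = P₂ := by
      rw [← Finset.erase_insert h1, ← Finset.erase_insert h2, hEq]
    subst this
    have e1 := (mem_scrHset.mp hP₁).2.1
    have e2 := (mem_scrHset.mp hP₂).2.1
    exact huv (e1 ▸ e2.symm ▸ rfl)
  rw [scrH, scrHset_eq_biUnion k z hp t ht1 htn, Finset.sum_biUnion hdisj]
  rw [← Finset.sum_neg_distrib]
  apply Finset.sum_congr rfl
  intro u hu
  simp only [Finset.mem_Icc] at hu
  rw [Finset.sum_image]
  · rw [scrH, ← Finset.sum_neg_distrib]
    apply Finset.sum_congr rfl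
    intro P hP
    have : t ∉ P := not_mem_scrHset_of_lt hP (by omega)
    rw [Finset.card_insert_of_notMem this, pow_succ]
    ring
  · intro P₁ h₁ P₂ h₂ hEq
    have m1 : t ∉ P₁ := not_mem_scrHset_of_lt h₁ (by omega)
    have m2 : t ∉ P₂ := not_mem_scrHset_of_lt h₂ (by omega)
    rw [← Finset.erase_insert m1, ← Finset.erase_insert m2, hEq]


lemma scrG_def (k : ℕ) (z : List (ℕ × ℕ)) (t : ℕ) :
    scrG k z t = ∑ u ∈ Finset.range (t + 1), scrH k z u := rfl

lemma scrG_mem (k : ℕ) (z : List (ℕ × ℕ))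
    (hp : ∀ p ∈ z, 1 ≤ p.1 ∧ p.1 < p.2 ∧ p.2 ≤ k) :
    ∀ t, t ≤ k - 1 → scrG k z t = 1 ∨ scrG k z t = 0 := by
  intro t
  induction t using Nat.strong_induction_on with
  | _ t ih =>
    intro htn
    match t with
    | 0 =>
      left
      simp [scrG_def, scrH, scrHset_zero]
    | (s + 1) =>
      have hrec := scrH_rec k z hp (s + 1) (by omega) htn
      simp only [Nat.add_sub_cancel] at hrec
      have hM : scrM z (s + 1) ≤ s := by
        rw [scrM_le_iff]
        intro p hpz hb
        have := hp p hpz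
        omega
      have hsplit : scrG k z (s + 1) = scrG k z s + scrH k z (s + 1) := by
        rw [scrG_def, scrG_def, Finset.sum_range_succ]
      rcases Nat.eq_zero_or_pos (scrM z (s + 1)) with hM0 | hM1
      · right
        rw [hsplit, hrec, hM0]
        have hIcc : Finset.Icc 0 s = Finset.range (s + 1) := by
          ext x; simp [Finset.mem_Icc, Finset.mem_range]
        rw [hIcc, ← scrG_def]
        ring
      · have hkey : scrG k z (s + 1) = scrG k z (scrM z (s + 1) - 1) := by
        -- sum over Icc M s = G s - G (M-1)
          have hcons := Finset.sum_Ico_consecutive (f := scrH k z)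
            (Nat.zero_le (scrM z (s + 1))) (show scrM z (s + 1) ≤ s + 1 by omega)
          have h1 : ∑ u ∈ Finset.Ico 0 (scrM z (s + 1)), scrH k z u
              = scrG k z (scrM z (s + 1) - 1) := by
            rw [scrG_def]
            congr 1
            rw [Finset.range_eq_Ico]
            congr 1
            omega
          have h2 : ∑ u ∈ Finset.Ico 0 (s + 1), scrH k z u = scrG k z s := by
            rw [scrG_def, Finset.range_eq_Ico]
          have h3 : Finset.Icc (scrM z (s + 1)) s = Finset.Ico (scrM z (s + 1)) (s + 1) :=
            (Finset.Ico_add_one_right_eq_Icc _ _).symm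
          rw [hsplit, hrec, h3]
          omega
        rw [hkey]
        exact ih (scrM z (s + 1) - 1) (by omega) (by omega)

lemma hit_eq_biUnion (k : ℕ) (z : List (ℕ × ℕ))
    (hp : ∀ p ∈ z, 1 ≤ p.1 ∧ p.1 < p.2 ∧ p.2 ≤ k) :
    (Finset.Icc 1 (k - 1)).powerset.filter
        (fun P => ∀ p ∈ z, (P ∩ Finset.Icc p.1 (p.2 - 1)).Nonempty)
      = (Finset.Icc (scrA z) (k - 1)).biUnion (fun t => scrHset k z t) := by
  ext P
  simp only [Finset.mem_filter, Finset.mem_powerset, Finset.mem_biUnion, Finset.mem_Icc,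
    mem_scrHset]
  constructor
  · rintro ⟨hsub, hhit⟩
    refine ⟨P.sup id, ⟨?_, ?_⟩, hsub, rfl, fun p hpz _ => hhit p hpz⟩
    · rw [scrA_le_iff]
      intro p hpz
      obtain ⟨v, hv⟩ := hhit p hpz
      rw [Finset.mem_inter, Finset.mem_Icc] at hv
      have := Finset.le_sup (f := id) hv.1
      simp only [id] at this
      omega
    · apply Finset.sup_le
      intro v hv
      have := Finset.mem_Icc.mp (hsub hv)
      simp only [id]
      omega
  · rintro ⟨t, ⟨hAt, htn⟩, hsub, hsup, hhit⟩
    refine ⟨hsub, fun p hpz => ?_⟩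
    rcases lt_or_ge (p.2 - 1) t with hb | hb
    · exact hhit p hpz hb
    · have ha : p.1 ≤ scrA z := (scrA_le_iff z (scrA z)).mp le_rfl p hpz
      have h1t : 1 ≤ t := le_trans (hp p hpz).1 (le_trans ha hAt)
      have htP : t ∈ P := sup_mem_scrHset (mem_scrHset.mpr ⟨hsub, hsup, hhit⟩) h1t
      exact ⟨t, Finset.mem_inter.mpr ⟨htP, Finset.mem_Icc.mpr ⟨le_trans ha hAt, hb⟩⟩⟩

end ScropeAux

open ScropeAux

/-- The Scrope complex on vertex set `{1,…,k−1}` associated to the list `z` of pairs,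
as a finite set of faces: the subsets of `{1,…,k−1}` contained in `[1,x−1] ∪ [y,k−1]`
for some pair `(x,y) ∈ z`. -/
def scropeFaces (k : ℕ) (z : List (ℕ × ℕ)) : Finset (Finset ℕ) :=
  (Finset.Icc 1 (k - 1)).powerset.filter
    (fun γ => ∃ p ∈ z, γ ⊆ Finset.Icc 1 (p.1 - 1) ∪ Finset.Icc p.2 (k - 1))

/-- The reduced Euler characteristic `χ̃(Γ) = Σ_{γ∈Γ} (−1)^{|γ|−1} = −Σ_{γ∈Γ} (−1)^{|γ|}`
of any Scrope complex equals `0`, `1`, or `−1`. -/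
theorem scrope_reduced_euler_char (k : ℕ) (hk : 2 ≤ k)
    (z : List (ℕ × ℕ)) (hz : z ≠ [])
    (hp : ∀ p ∈ z, 1 ≤ p.1 ∧ p.1 < p.2 ∧ p.2 ≤ k) :
    (-∑ γ ∈ scropeFaces k z, (-1 : ℤ) ^ γ.card) = 0 ∨
    (-∑ γ ∈ scropeFaces k z, (-1 : ℤ) ^ γ.card) = 1 ∨
    (-∑ γ ∈ scropeFaces k z, (-1 : ℤ) ^ γ.card) = -1 := by
  have hn : 1 ≤ k - 1 := by omega
  -- bounds on scrA
  have hA1 : 1 ≤ scrA z := by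
    obtain ⟨p, hpz⟩ := List.exists_mem_of_ne_nil z hz
    have h1 : p.1 ≤ scrA z := (scrA_le_iff z (scrA z)).mp le_rfl p hpz
    have := hp p hpz
    omega
  have hAn : scrA z ≤ k - 1 := by
    rw [scrA_le_iff]
    intro p hpz
    have := hp p hpz
    omega
  -- the total sum over the powerset vanishes
  have hpow : ∑ γ ∈ (Finset.Icc 1 (k - 1)).powerset, (-1 : ℤ) ^ γ.card = 0 :=
    Finset.sum_powerset_neg_one_pow_card_of_nonempty (by rw [Finset.nonempty_Icc]; omega)
  -- complement of the scrope condition is the hitting condition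
  have hcompl : (Finset.Icc 1 (k - 1)).powerset.filter
      (fun γ => ¬ ∃ p ∈ z, γ ⊆ Finset.Icc 1 (p.1 - 1) ∪ Finset.Icc p.2 (k - 1))
      = (Finset.Icc 1 (k - 1)).powerset.filter
        (fun P => ∀ p ∈ z, (P ∩ Finset.Icc p.1 (p.2 - 1)).Nonempty) := by
    apply Finset.filter_congr
    intro P hP
    rw [Finset.mem_powerset] at hP
    constructor
    · intro h p hpz
      have hns : ¬ P ⊆ Finset.Icc 1 (p.1 - 1) ∪ Finset.Icc p.2 (k - 1) :=
        fun hs => h ⟨p, hpz, hs⟩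
      rw [Finset.not_subset] at hns
      obtain ⟨v, hvP, hvU⟩ := hns
      have hv : v ∈ Finset.Icc 1 (k - 1) := hP hvP
      rw [Finset.mem_Icc] at hv
      obtain ⟨h1, h2, h3⟩ := hp p hpz
      refine ⟨v, Finset.mem_inter.mpr ⟨hvP, Finset.mem_Icc.mpr ⟨?_, ?_⟩⟩⟩
      · by_contra hlt
        exact hvU (Finset.mem_union_left _ (Finset.mem_Icc.mpr ⟨hv.1, by omega⟩))
      · by_contra hgt
        exact hvU (Finset.mem_union_right _ (Finset.mem_Icc.mpr ⟨by omega, hv.2⟩))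
    · intro h
      rintro ⟨p, hpz, hsub⟩
      obtain ⟨v, hv⟩ := h p hpz
      rw [Finset.mem_inter, Finset.mem_Icc] at hv
      have hvU := hsub hv.1
      rw [Finset.mem_union, Finset.mem_Icc, Finset.mem_Icc] at hvU
      obtain ⟨h1, h2, h3⟩ := hp p hpz
      omega
  -- disjointness of the Hsets
  have hdisj2 : (↑(Finset.Icc (scrA z) (k - 1)) : Set ℕ).PairwiseDisjoint
      (fun t => scrHset k z t) := by
    intro u _ v _ huv
    rw [Function.onFun, Finset.disjoint_left]
    intro Q h1 h2
    have e1 := (mem_scrHset.mp h1).2.1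
    have e2 := (mem_scrHset.mp h2).2.1
    exact huv (by rw [← e1, ← e2])
  -- the signed sum over hitting sets
  have hhit_sum : ∑ γ ∈ (Finset.Icc 1 (k - 1)).powerset.filter
      (fun P => ∀ p ∈ z, (P ∩ Finset.Icc p.1 (p.2 - 1)).Nonempty), (-1 : ℤ) ^ γ.card
      = ∑ t ∈ Finset.Icc (scrA z) (k - 1), scrH k z t := by
    rw [hit_eq_biUnion k z hp, Finset.sum_biUnion hdisj2]
    rfl
  -- telescoping
  have htel : ∑ t ∈ Finset.Icc (scrA z) (k - 1), scrH k z t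
      = scrG k z (k - 1) - scrG k z (scrA z - 1) := by
    have hcons := Finset.sum_Ico_consecutive (f := scrH k z)
      (Nat.zero_le (scrA z)) (show scrA z ≤ (k - 1) + 1 by omega)
    have h1 : ∑ u ∈ Finset.Ico 0 (scrA z), scrH k z u = scrG k z (scrA z - 1) := by
      rw [scrG_def]
      congr 1
      rw [Finset.range_eq_Ico]
      congr 1
      omega
    have h2 : ∑ u ∈ Finset.Ico 0 ((k - 1) + 1), scrH k z u = scrG k z (k - 1) := by
      rw [scrG_def, Finset.range_eq_Ico]
    have h3 : Finset.Icc (scrA z) (k - 1) = Finset.Ico (scrA z) ((k - 1) + 1) :=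
      (Finset.Ico_add_one_right_eq_Icc _ _).symm
    rw [h3]
    omega
  -- assemble
  have e1 : (∑ γ ∈ scropeFaces k z, (-1 : ℤ) ^ γ.card)
      + ∑ γ ∈ (Finset.Icc 1 (k - 1)).powerset.filter
          (fun γ => ¬ ∃ p ∈ z, γ ⊆ Finset.Icc 1 (p.1 - 1) ∪ Finset.Icc p.2 (k - 1)),
          (-1 : ℤ) ^ γ.card = 0 := by
    rw [scropeFaces, Finset.sum_filter_add_sum_filter_not]
    exact hpow
  have key : (-∑ γ ∈ scropeFaces k z, (-1 : ℤ) ^ γ.card)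
      = scrG k z (k - 1) - scrG k z (scrA z - 1) := by
    rw [hcompl, hhit_sum, htel] at e1
    linarith
  rcases scrG_mem k z hp (k - 1) le_rfl with h | h <;>
    rcases scrG_mem k z hp (scrA z - 1) (by omega) with h' | h' <;>
      rw [key, h, h'] <;> norm_num
end

section
/- Let n ≥ 1, let ≼ be a reflexive and transitive relation (a preposet) on [n] = {1,…,n}, and let f : [n] → ℕ be weakly increasing with respect to the usual order on [n]. Then the following are equivalent: (a) for all x, y ∈ [n], x ≼ y implies f(x) ≤ f(y); (b) for all x, y ∈ [n] with y < x and x ≼ y, f is constant on the interval {y, y+1, …, x}. -/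
theorem Monotone.forall_rel_imp_le_iff_eq_on_Icc {α β : Type*} [LinearOrder α] [PartialOrder β]
    {f : α → β} (hf : Monotone f) (r : α → α → Prop) :
    (∀ x y, r x y → f x ≤ f y) ↔
    (∀ x y, y < x → r x y → ∀ u, y ≤ u → u ≤ x → f u = f y) := by
  constructor
  · intro hr x y _ hxy u hyu hux
    exact le_antisymm ((hf hux).trans (hr x y hxy)) (hf hyu)
  · intro hconst x y hxy
    rcases le_or_gt x y with hle | hlt
    · exact hf hle
    · exact (hconst x y hlt hxy x hlt.le le_rfl).le

theorem natural_composition_in_closure_iff_general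
    (n : ℕ) (r : Fin n → Fin n → Prop)
    (f : Fin n → ℕ) (hf : Monotone f) :
    (∀ x y, r x y → f x ≤ f y) ↔
    (∀ x y, y < x → r x y → ∀ u, y ≤ u → u ≤ x → f u = f y) :=
  hf.forall_rel_imp_le_iff_eq_on_Icc r

/-- Coordinate form of the identity `C_Q ∩ C_W = C_{N_{w,Q}}`: if `≼` (given by `r`) is a
preposet on `[n]` and `f : [n] → ℕ` is weakly increasing, then `f` is order-preserving
for `≼` if and only if `f` is constant on the interval `{y,…,x}` for every unnatural
relation `x ≼ y` with `y < x`. -/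
theorem natural_composition_in_closure_iff
    (n : ℕ) (hn : 1 ≤ n) (r : Fin n → Fin n → Prop)
    (hrefl : ∀ x, r x x) (htrans : ∀ x y z, r x y → r y z → r x z)
    (f : Fin n → ℕ) (hf : Monotone f) :
    (∀ x y, r x y → f x ≤ f y) ↔
    (∀ x y, y < x → r x y → ∀ u, y ≤ u → u ≤ x → f u = f y) :=
  natural_composition_in_closure_iff_general n r f hf
end

section
/- Let φ = {a_1 < a_2 < ⋯ < a_r} ⊆ [n] with r ≥ 1, and let Γ = ⟨⟨φ⟩⟩_{[n]} be the corresponding Schubert (shifted) matroid complex. Let 1 ≤ s ≤ r ≤ t ≤ n. Then the interval minor Γ(s,t) = {γ ⊆ [s,t] : γ ∪ [1,s−1] ∈ Γ} equals the Schubert matroid complex on the linearly ordered set [s,t] = {s,…,t} with top facet ψ, i.e., Γ(s,t) consists of all subsets of the (r−s+1)-element subsets of [s,t] that are Gale-below ψ, where ψ = {b_1 < ⋯ < b_{r−s+1}} with b_i = min(a_{s+i−1}, t−r+s+i−1) for 1 ≤ i ≤ r−s+1. -/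
/-- Gale order on finite subsets of `ℕ` of the same cardinality: `s ≤_G t` iff the
`i`-th smallest element of `s` is at most the `i`-th smallest element of `t`, for all `i`. -/
def galeLE (s t : Finset ℕ) : Prop :=
  s.card = t.card ∧ ∀ i < s.card,
    (s.sort (· ≤ ·)).getD i 0 ≤ (t.sort (· ≤ ·)).getD i 0

/-- The Schubert (shifted) matroid complex on the interval `[lo,hi]` with top facet
`top`: its faces are all subsets of the sets `ψ ⊆ [lo,hi]` with `ψ ≤_G top`
(in particular `|ψ| = |top|`). -/
def schubertOn (lo hi : ℕ) (top : Finset ℕ) : Set (Finset ℕ) :=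
  {γ | ∃ ψ : Finset ℕ, ψ ⊆ Finset.Icc lo hi ∧ galeLE ψ top ∧ γ ⊆ ψ}

/-- The interval minor `Γ(s,t) = {γ ⊆ [s,t] : γ ∪ [1,s−1] ∈ Γ}`. -/
def minorC (Γ : Set (Finset ℕ)) (s t : ℕ) : Set (Finset ℕ) :=
  {γ | γ ⊆ Finset.Icc s t ∧ γ ∪ Finset.Icc 1 (s - 1) ∈ Γ}

/-!
Both complexes are described by upper counts. For `top ⊆ [lo,hi]`, a set `γ` is a face of the
Schubert complex on `[lo,hi]` with top facet `top` iff `γ ⊆ [lo,hi]`, `|γ| ≤ |top|` and, for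
every `x`, `γ` has at most as many elements above `x` as `top` has: padding `γ` with the smallest
missing elements of `[lo,hi]` gives a facet Gale-below `top`.

For `γ ⊆ [s,t]` with `q` elements above `x`, the two count conditions correspond. If at least `q`
entries `b_i` exceed `x`, so do the `a_{s+i-1} ≥ b_i`; and since `a_j ≥ j`, the prefix `[1,s-1]`
has at most as many elements above `x` as `a_1, …, a_{s-1}`. Conversely, if at least `q` of the
`a_j` exceed `x`, then `a_{r+1-q} > x`, while `γ ⊆ [s,t]` gives `q ≤ t - x`; hence the last `q`
entries of `ψ` exceed `x`.
-/

open Finset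

lemma getD_le_iff_lt_length_filter {L : List ℕ} (hL : L.Pairwise (· ≤ ·)) {i : ℕ}
    (hi : i < L.length) (x : ℕ) :
    L.getD i 0 ≤ x ↔ i < (L.filter (· ≤ x)).length := by
  induction L generalizing i with
  | nil => simp at hi
  | cons a L ih =>
    by_cases hax : a ≤ x
    · cases i with
      | zero => simp [hax]
      | succ i => simpa [hax] using ih hL.of_cons (by simpa using hi)
    · have hgt : ∀ b ∈ a :: L, x < b := by
        intro b hb
        rcases List.mem_cons.mp hb with rfl | hb
        · omega
        · have := List.rel_of_pairwise_cons hL hb; omega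
      have hnil : (a :: L).filter (· ≤ x) = [] :=
        List.filter_eq_nil_iff.2 fun b hb => by simpa using hgt b hb
      have hmem : (a :: L).getD i 0 ∈ a :: L := by
        rw [List.getD_eq_getElem _ _ hi]; exact List.getElem_mem _
      simpa [hnil] using hgt _ hmem

lemma sort_getD_le_iff_lt_card_filter (s : Finset ℕ) {i : ℕ} (hi : i < #s) (x : ℕ) :
    (s.sort (· ≤ ·)).getD i 0 ≤ x ↔ i < #{y ∈ s | y ≤ x} := by
  rw [getD_le_iff_lt_length_filter (s.pairwise_sort _) (by rwa [length_sort])]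
  have : #{y ∈ s | y ≤ x} = Multiset.card (s.val.filter (· ≤ x)) := rfl
  rw [this, ← sort_eq s (· ≤ ·), Multiset.filter_coe]
  simp

lemma card_filter_lt_add_card_filter_le (s : Finset ℕ) (x : ℕ) :
    #{y ∈ s | x < y} + #{y ∈ s | y ≤ x} = #s := by
  simpa only [not_lt] using card_filter_add_card_filter_not (s := s) (p := (x < ·))

lemma galeLE_iff_card_filter_lt {s t : Finset ℕ} :
    galeLE s t ↔ #s = #t ∧ ∀ x, #{y ∈ s | x < y} ≤ #{y ∈ t | x < y} := by
  refine and_congr_right fun hst => ?_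
  have hflip (x : ℕ) : #{y ∈ s | x < y} ≤ #{y ∈ t | x < y} ↔
      #{y ∈ t | y ≤ x} ≤ #{y ∈ s | y ≤ x} := by
    have := card_filter_lt_add_card_filter_le s x
    have := card_filter_lt_add_card_filter_le t x
    omega
  simp only [hflip]
  constructor
  · intro h x
    by_contra! hlt
    -- for `i := #{y ∈ s | y ≤ x}`, the `i`-th element of `t` is `≤ x`, so that of `s` is too
    set i := #{y ∈ s | y ≤ x}
    have hit : i < #t := hlt.trans_le (card_filter_le _ _)
    have hti := (sort_getD_le_iff_lt_card_filter t hit x).2 hlt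
    have := (sort_getD_le_iff_lt_card_filter s (hst ▸ hit) x).1 ((h i (hst ▸ hit)).trans hti)
    omega
  · intro h i hi
    have hti := (sort_getD_le_iff_lt_card_filter t (hst ▸ hi) _).1 le_rfl
    exact (sort_getD_le_iff_lt_card_filter s hi _).2 (hti.trans_le (h _))

lemma exists_subset_card_eq_forall_lt {α : Type*} [LinearOrder α] {S : Finset α} {m : ℕ}
    (hm : m ≤ #S) : ∃ F ⊆ S, #F = m ∧ ∀ y ∈ S \ F, ∀ f ∈ F, f < y := by
  induction m with
  | zero => exact ⟨∅, empty_subset _, card_empty, by simp⟩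
  | succ m ih =>
    obtain ⟨F, hFS, hFc, hF⟩ := ih (by omega)
    have hne : (S \ F).Nonempty := by
      rw [← card_pos, card_sdiff_of_subset hFS]; omega
    have hmin := min'_mem _ hne
    refine ⟨insert ((S \ F).min' hne) F, insert_subset (mem_sdiff.1 hmin).1 hFS, ?_, ?_⟩
    · rw [card_insert_of_notMem (mem_sdiff.1 hmin).2, hFc]
    · intro y hy f hf
      have hyF : y ∈ S \ F := by
        simp only [mem_sdiff, mem_insert, not_or] at hy ⊢
        exact ⟨hy.1, hy.2.2⟩
      rcases mem_insert.1 hf with rfl | hf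
      · have hne' : y ≠ (S \ F).min' hne := fun h => by simp [h] at hy
        exact lt_of_le_of_ne (min'_le _ _ hyF) hne'.symm
      · exact hF y hyF f hf

lemma mem_schubertOn_iff {lo hi : ℕ} {top : Finset ℕ} (htop : top ⊆ Icc lo hi)
    {γ : Finset ℕ} :
    γ ∈ schubertOn lo hi top ↔ γ ⊆ Icc lo hi ∧ #γ ≤ #top ∧
      ∀ x, #{y ∈ γ | x < y} ≤ #{y ∈ top | x < y} := by
  constructor
  · rintro ⟨ψ, hψ, hgale, hγψ⟩
    obtain ⟨hcard, hcount⟩ := galeLE_iff_card_filter_lt.1 hgale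
    exact ⟨hγψ.trans hψ, (card_le_card hγψ).trans hcard.le,
      fun x => (card_le_card (filter_subset_filter _ hγψ)).trans (hcount x)⟩
  rintro ⟨hγ, hcard, hcount⟩
  obtain ⟨F, hFS, hFc, hF⟩ := exists_subset_card_eq_forall_lt (S := Icc lo hi \ γ)
    (m := #top - #γ) (by rw [card_sdiff_of_subset hγ]; have := card_le_card htop; omega)
  have hdisj : Disjoint γ F := disjoint_right.2 fun z hz => (mem_sdiff.1 (hFS hz)).2
  refine ⟨γ ∪ F, union_subset hγ (hFS.trans sdiff_subset), galeLE_iff_card_filter_lt.2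
    ⟨by rw [card_union_of_disjoint hdisj]; omega, fun x => ?_⟩, subset_union_left⟩
  by_cases hFx : ∀ f ∈ F, f ≤ x
  · refine le_trans (card_le_card fun z hz => ?_) (hcount x)
    simp only [mem_filter, mem_union] at hz ⊢
    rcases hz with ⟨hz | hz, hxz⟩
    · exact ⟨hz, hxz⟩
    · exact absurd (hFx z hz) (not_le.2 hxz)
  · -- some padding element exceeds `x`, so `γ ∪ F` contains all of `[lo, x]`
    push Not at hFx
    obtain ⟨f, hfF, hxf⟩ := hFx
    have hle : #{y ∈ top | y ≤ x} ≤ #{y ∈ γ ∪ F | y ≤ x} := by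
      refine card_le_card fun z hz => ?_
      simp only [mem_filter, mem_union] at hz ⊢
      refine ⟨?_, hz.2⟩
      by_contra! hzγF
      have := hF z (mem_sdiff.2 ⟨mem_sdiff.2 ⟨htop hz.1, hzγF.1⟩, hzγF.2⟩) f hfF
      omega
    have hψ := card_filter_lt_add_card_filter_le (γ ∪ F) x
    have htop := card_filter_lt_add_card_filter_le top x
    rw [card_union_of_disjoint hdisj] at hψ
    omega

lemma mem_schubertOn_image_iff {lo hi k : ℕ} {f : ℕ → ℕ} (hf : Set.InjOn f (Set.Icc 1 k))
    (hsub : (Icc 1 k).image f ⊆ Icc lo hi) {γ : Finset ℕ} :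
    γ ∈ schubertOn lo hi ((Icc 1 k).image f) ↔ γ ⊆ Icc lo hi ∧ #γ ≤ k ∧
      ∀ x, #{y ∈ γ | x < y} ≤ #{i ∈ Icc 1 k | x < f i} := by
  rw [← coe_Icc] at hf
  have hcount (x : ℕ) : #{y ∈ (Icc 1 k).image f | x < y} = #{i ∈ Icc 1 k | x < f i} := by
    rw [filter_image, card_image_of_injOn (hf.mono (coe_subset.2 (filter_subset _ _)))]
  simp only [mem_schubertOn_iff hsub, card_image_of_injOn hf, Nat.card_Icc, hcount,
    Nat.add_sub_cancel]

lemma le_apply_of_strictMonoOn {a : ℕ → ℕ} {r : ℕ} (hmono : StrictMonoOn a (Set.Icc 1 r))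
    (h1 : 1 ≤ a 1) {i : ℕ} (hi : i ∈ Set.Icc 1 r) : i ≤ a i := by
  obtain ⟨hi1, hir⟩ := hi
  induction i, hi1 using Nat.le_induction with
  | base => exact h1
  | succ i hi1 ih =>
    have := hmono ⟨hi1, by omega⟩ ⟨by omega, hir⟩ (Nat.lt_succ_self i)
    have := ih (by omega)
    omega

lemma lt_apply_of_le_card_filter_lt {a : ℕ → ℕ} {r q x : ℕ}
    (hmono : MonotoneOn a (Set.Icc 1 r)) (hq : 1 ≤ q) (h : q ≤ #{i ∈ Icc 1 r | x < a i}) :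
    x < a (r + 1 - q) := by
  by_contra! hax
  have hsub : {i ∈ Icc 1 r | x < a i} ⊆ Icc (r + 2 - q) r := by
    intro i hi
    simp only [mem_filter, mem_Icc] at hi ⊢
    refine ⟨?_, hi.1.2⟩
    by_contra! hiq
    have := hmono ⟨hi.1.1, hi.1.2⟩ ⟨by omega, by omega⟩ (show i ≤ r + 1 - q by omega)
    omega
  have := card_le_card hsub
  rw [Nat.card_Icc] at this
  omega

lemma card_filter_lt_le_sub {γ : Finset ℕ} {t : ℕ} (hγ : γ ⊆ Iic t) (x : ℕ) :
    #{y ∈ γ | x < y} ≤ t - x := by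
  refine (card_le_card fun y hy => ?_).trans (Nat.card_Ioc x t).le
  rw [mem_filter] at hy
  exact mem_Ioc.2 ⟨hy.2, mem_Iic.1 (hγ hy.1)⟩

section IntervalMinor

variable {a : ℕ → ℕ} {r s t x : ℕ}

lemma strictMonoOn_topFacet (hmono : StrictMonoOn a (Set.Icc 1 r)) (hs : 1 ≤ s) (hsr : s ≤ r) :
    StrictMonoOn (fun i => min (a (s + i - 1)) (t - r + s + i - 1)) (Set.Icc 1 (r - s + 1)) := by
  intro i hi j hj hij
  have := hmono (show s + i - 1 ∈ Set.Icc 1 r by grind) (show s + j - 1 ∈ Set.Icc 1 r by grind)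
    (by omega)
  dsimp only
  omega

lemma image_topFacet_subset (hid : ∀ j ∈ Set.Icc 1 r, j ≤ a j) (hs : 1 ≤ s) (hsr : s ≤ r)
    (hrt : r ≤ t) :
    (Icc 1 (r - s + 1)).image (fun i => min (a (s + i - 1)) (t - r + s + i - 1)) ⊆ Icc s t := by
  intro y hy
  obtain ⟨i, hi, rfl⟩ := mem_image.1 hy
  rw [mem_Icc] at hi ⊢
  have := hid (s + i - 1) ⟨by omega, by omega⟩
  omega

lemma le_card_filter_lt_topFacet {q : ℕ} (hmono : MonotoneOn a (Set.Icc 1 r)) (hs : 1 ≤ s)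
    (hsr : s ≤ r) (hqd : q ≤ r - s + 1) (hqt : q ≤ t - x)
    (h : q ≤ #{i ∈ Icc 1 r | x < a i}) :
    q ≤ #{i ∈ Icc 1 (r - s + 1) | x < min (a (s + i - 1)) (t - r + s + i - 1)} := by
  rcases Nat.eq_zero_or_pos q with rfl | hq
  · exact Nat.zero_le _
  have hax := lt_apply_of_le_card_filter_lt hmono hq h
  have hsub : Icc (r - s + 2 - q) (r - s + 1) ⊆
      {i ∈ Icc 1 (r - s + 1) | x < min (a (s + i - 1)) (t - r + s + i - 1)} := by
    intro i hi
    rw [mem_Icc] at hi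
    have := hmono ⟨by omega, by omega⟩ ⟨by omega, by omega⟩
      (show r + 1 - q ≤ s + i - 1 by omega)
    simp only [mem_filter, mem_Icc, lt_min_iff]
    omega
  have := card_le_card hsub
  rw [Nat.card_Icc] at this
  omega

lemma card_filter_lt_add_le_of_topFacet {q : ℕ} (hid : ∀ j ∈ Set.Icc 1 r, j ≤ a j)
    (hs : 1 ≤ s) (hsr : s ≤ r)
    (h : q ≤ #{i ∈ Icc 1 (r - s + 1) | x < min (a (s + i - 1)) (t - r + s + i - 1)}) :
    q + #{y ∈ Icc 1 (s - 1) | x < y} ≤ #{i ∈ Icc 1 r | x < a i} := by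
  have htail : #{i ∈ Icc 1 (r - s + 1) | x < min (a (s + i - 1)) (t - r + s + i - 1)} ≤
      #{j ∈ Icc s r | x < a j} := by
    refine (card_le_card (monotone_filter_right _ fun i _ hi => (lt_min_iff.1 hi).1)).trans_eq ?_
    refine card_nbij' (fun i => s + i - 1) (fun j => j + 1 - s) ?_ ?_ ?_ ?_ <;>
      intro i hi <;> simp only [coe_filter, mem_Icc, Set.mem_ofPred_eq] at hi ⊢
    · exact ⟨⟨by omega, by omega⟩, hi.2⟩
    · rw [show s + (i + 1 - s) - 1 = i by omega]
      exact ⟨⟨by omega, by omega⟩, hi.2⟩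
    · omega
    · omega
  have hhead : #{y ∈ Icc 1 (s - 1) | x < y} ≤ #{j ∈ Icc 1 (s - 1) | x < a j} :=
    card_le_card <| monotone_filter_right _ fun j hj hxj =>
      hxj.trans_le (hid j (by rw [mem_Icc] at hj; exact ⟨hj.1, by omega⟩))
  have hsplit : #{i ∈ Icc 1 r | x < a i} =
      #{j ∈ Icc 1 (s - 1) | x < a j} + #{j ∈ Icc s r | x < a j} := by
    rw [← card_union_of_disjoint (disjoint_filter_filter (disjoint_left.2 fun j hj hj' => by
      rw [mem_Icc] at hj hj'; omega)), ← filter_union]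
    congr 2
    ext j
    simp only [mem_union, mem_Icc]
    omega
  omega

end IntervalMinor

theorem schubert_interval_minor_general
    (n r : ℕ)
    (a : ℕ → ℕ) (hmono : StrictMonoOn a (Set.Icc 1 r))
    (ha : ∀ i ∈ Finset.Icc 1 r, a i ∈ Finset.Icc 1 n)
    (s t : ℕ) (hs : 1 ≤ s) (hsr : s ≤ r) (hrt : r ≤ t) (htn : t ≤ n) :
    minorC (schubertOn 1 n ((Finset.Icc 1 r).image a)) s t =
      schubertOn s t ((Finset.Icc 1 (r - s + 1)).image
        (fun i => min (a (s + i - 1)) (t - r + s + i - 1))) := by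
  have hid : ∀ j ∈ Set.Icc 1 r, j ≤ a j :=
    fun j => le_apply_of_strictMonoOn hmono (mem_Icc.1 (ha 1 (mem_Icc.2 ⟨le_rfl, by omega⟩))).1
  ext γ
  simp only [minorC, Set.mem_ofPred_eq,
    mem_schubertOn_image_iff hmono.injOn (image_subset_iff.2 ha),
    mem_schubertOn_image_iff (strictMonoOn_topFacet hmono hs hsr).injOn
      (image_topFacet_subset hid hs hsr hrt)]
  refine and_congr_right fun hγ => ?_
  have hdisj : Disjoint γ (Icc 1 (s - 1)) := disjoint_left.2 fun y hy hy' => by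
    have := mem_Icc.1 (hγ hy); rw [mem_Icc] at hy'; omega
  have hcount (x : ℕ) : #{y ∈ γ ∪ Icc 1 (s - 1) | x < y} =
      #{y ∈ γ | x < y} + #{y ∈ Icc 1 (s - 1) | x < y} := by
    rw [filter_union, card_union_of_disjoint (disjoint_filter_filter hdisj)]
  simp only [card_union_of_disjoint hdisj, Nat.card_Icc, hcount]
  constructor
  · rintro ⟨-, hcard, hle⟩
    exact ⟨by omega, fun x => le_card_filter_lt_topFacet hmono.monotoneOn hs hsr
      ((card_filter_le _ _).trans (by omega))
      (card_filter_lt_le_sub (hγ.trans Icc_subset_Iic_self) x) (le_self_add.trans (hle x))⟩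
  · rintro ⟨hcard, hle⟩
    exact ⟨union_subset (hγ.trans (Icc_subset_Icc hs htn)) (Icc_subset_Icc le_rfl (by omega)),
      by omega, fun x => card_filter_lt_add_le_of_topFacet hid hs hsr (hle x)⟩

/-- Interval minors of Schubert matroids: if `Γ = ⟨⟨φ⟩⟩_{[n]}` is the Schubert matroid
with top facet `φ = {a_1 < ⋯ < a_r}` and `1 ≤ s ≤ r ≤ t ≤ n`, then `Γ(s,t)` is the
Schubert matroid complex on `[s,t]` with top facet `ψ = {b_1 < ⋯ < b_{r−s+1}}`, where
`b_i = min(a_{s+i−1}, t−r+s+i−1)`. -/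
theorem schubert_interval_minor
    (n r : ℕ) (hr : 1 ≤ r) (hrn : r ≤ n)
    (a : ℕ → ℕ) (hmono : StrictMonoOn a (Set.Icc 1 r))
    (ha : ∀ i ∈ Finset.Icc 1 r, a i ∈ Finset.Icc 1 n)
    (s t : ℕ) (hs : 1 ≤ s) (hsr : s ≤ r) (hrt : r ≤ t) (htn : t ≤ n) :
    minorC (schubertOn 1 n ((Finset.Icc 1 r).image a)) s t =
      schubertOn s t ((Finset.Icc 1 (r - s + 1)).image
        (fun i => min (a (s + i - 1)) (t - r + s + i - 1))) :=
  schubert_interval_minor_general n r a hmono ha s t hs hsr hrt htn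
end

section
/- Let 0 < r < n be integers. A nonempty set F ⊆ ℝ^n is an exposed face of the hypersimplex Δ(n,r) if and only if F = 𝔮(A,B) for some disjoint subsets A, B ⊆ [n] satisfying either (|A| = n−r and |B| = r) or (|A| < n−r and |B| < r). Moreover, every such 𝔮(A,B) is nonempty; in the case |A| = n−r and |B| = r it is a single point (the 0/1 vector with support B), and in the case |A| < n−r and |B| < r its affine span has dimension n − 1 − |A| − |B|. -/
open Finset

def hypersimplex (n r : ℕ) : Set (Fin n → ℝ) :=
  {x | (∀ i, 0 ≤ x i ∧ x i ≤ 1) ∧ ∑ i, x i = (r : ℝ)}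

def faceQ (n r : ℕ) (A B : Finset (Fin n)) : Set (Fin n → ℝ) :=
  {x ∈ hypersimplex n r | (∀ a ∈ A, x a = 0) ∧ (∀ b ∈ B, x b = 1)}

def IsExposedFaceOf {n : ℕ} (K F : Set (Fin n → ℝ)) : Prop :=
  F.Nonempty ∧ ∃ ℓ : (Fin n → ℝ) →ₗ[ℝ] ℝ, F = {x ∈ K | ∀ y ∈ K, ℓ y ≤ ℓ x}

/-!
On `Δ(n,r)` the functional `x ↦ ∑ cᵢ xᵢ` differs from `∑ (cᵢ - t) xᵢ` by the constant `t r`, and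
the latter is maximised on the cube coordinatewise: `xᵢ = 0` where `cᵢ < t`, `xᵢ = 1` where
`cᵢ > t`. Taking for `t` the `(n - r)`-th smallest weight, so that fewer than `r` weights exceed
`t` and at most `n - r` lie below it, these maximisers still meet `Δ(n,r)`, so the exposed face
is `𝔮(A,B)` with `A = {c < t}` and `B = {c > t}`; if `|A| = n - r`, the remaining `r`
coordinates are forced to be `1`. Conversely `𝔮(A,B)` is exposed by `∑_B xᵢ - ∑_A xᵢ`.
For `|A| < n - r` and `|B| < r`, the point with the constant value `(r - |B|)/(n - |A| - |B|)`
off `A ∪ B` lies strictly inside the cube in the free coordinates, so every direction with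
zero coordinate sum vanishing on `A ∪ B` can be followed a little from it inside `𝔮(A,B)`.
-/

lemma exists_card_lt_le_and_card_gt_le {α : Type*} [LinearOrder α] {n k : ℕ} (c : Fin n → α)
    (hk : k < n) : ∃ t, #{i | c i < t} ≤ k ∧ #{i | t < c i} ≤ n - 1 - k := by
  set σ := Tuple.sort c
  have hmono : Monotone (c ∘ σ) := Tuple.monotone_sort c
  set m : Fin n := ⟨k, hk⟩
  refine ⟨c (σ m), ?_, ?_⟩
  · calc #{i | c i < c (σ m)} ≤ #(Iio m) :=
          card_le_card_of_injOn σ.symm (fun i hi => by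
            simpa using hmono.reflect_lt (by simpa using hi)) σ.symm.injective.injOn
      _ = k := Fin.card_Iio m
  · calc #{i | c (σ m) < c i} ≤ #(Ioi m) :=
          card_le_card_of_injOn σ.symm (fun i hi => by
            simpa using hmono.reflect_lt (by simpa using hi)) σ.symm.injective.injOn
      _ = n - 1 - k := Fin.card_Ioi m

section

variable {n r : ℕ} {A B : Finset (Fin n)}

lemma faceQ_eq_singleton (hAB : Disjoint A B) (hcard : #A + #B = n) (hB : #B = r) :
    faceQ n r A B = {fun i => if i ∈ B then (1 : ℝ) else 0} := by
  have hcover : A ∪ B = univ := eq_univ_of_card _ (by simp [card_union_of_disjoint hAB, hcard])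
  ext x
  constructor
  · rintro ⟨-, hA0, hB1⟩
    funext i
    by_cases hiB : i ∈ B
    · simp [hiB, hB1 i hiB]
    · have hiA : i ∈ A := (mem_union.1 (by simp [hcover])).resolve_right hiB
      simp [hiB, hA0 i hiA]
  · rintro rfl
    refine ⟨⟨fun i => ?_, by simp [hB]⟩, fun a ha => ?_, fun b hb => by simp [hb]⟩
    · dsimp only
      split_ifs <;> norm_num
    · simp [disjoint_left.1 hAB ha]

lemma faceQ_eq_faceQ_compl (hrn : r ≤ n) (hAB : Disjoint A B) (hA : #A = n - r) :
    faceQ n r A B = faceQ n r A Aᶜ := by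
  have hBA : B ⊆ Aᶜ := subset_compl_iff_disjoint_left.2 hAB
  ext x
  refine ⟨fun ⟨hx, hA0, _⟩ => ⟨hx, hA0, fun i hi => ?_⟩,
    fun ⟨hx, hA0, hA1⟩ => ⟨hx, hA0, fun b hb => hA1 b (hBA hb)⟩⟩
  have hsum : ∑ i ∈ Aᶜ, x i = ∑ i ∈ Aᶜ, 1 := by
    rw [← add_zero (∑ i ∈ Aᶜ, x i), ← sum_eq_zero hA0, add_comm, sum_add_sum_compl, hx.2]
    simp [card_compl, hA, Nat.sub_sub_self hrn]
  exact (sum_eq_sum_iff_of_le fun i _ => (hx.1 i).2).1 hsum i hi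

noncomputable def faceCenter (n r : ℕ) (A B : Finset (Fin n)) : Fin n → ℝ := fun i =>
  if i ∈ B then 1 else if i ∈ A then 0 else (r - #B : ℝ) / (n - #A - #B)

lemma faceCenter_of_notMem_union {i : Fin n} (hi : i ∉ A ∪ B) :
    faceCenter n r A B i = (r - #B : ℝ) / (n - #A - #B) := by
  simp_all [faceCenter]

lemma faceCenter_mem_faceQ (hAB : Disjoint A B) (hB : #B ≤ r) (hA : #A + r ≤ n) :
    faceCenter n r A B ∈ faceQ n r A B := by
  have hB' : (#B : ℝ) ≤ r := by exact_mod_cast hB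
  have hA' : (#A + r : ℝ) ≤ n := by exact_mod_cast hA
  have hcompl : (#(A ∪ B)ᶜ : ℝ) = n - #A - #B := by
    rw [card_compl, card_union_of_disjoint hAB, Fintype.card_fin, Nat.cast_sub (by omega)]
    push_cast
    ring
  have hA0 : ∀ a ∈ A, faceCenter n r A B a = 0 := fun a ha => by
    simp [faceCenter, ha, disjoint_left.1 hAB ha]
  have hB1 : ∀ b ∈ B, faceCenter n r A B b = 1 := fun b hb => by simp [faceCenter, hb]
  refine ⟨⟨fun i => ?_, ?_⟩, hA0, hB1⟩
  · by_cases hi : i ∈ A ∪ B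
    · rcases mem_union.1 hi with hi | hi <;> simp [hA0, hB1, hi]
    · rw [faceCenter_of_notMem_union hi]
      exact ⟨div_nonneg (by linarith) (by linarith), div_le_one_of_le₀ (by linarith) (by linarith)⟩
  · rw [← sum_add_sum_compl (A ∪ B), sum_union hAB, sum_eq_zero hA0, sum_congr rfl hB1,
      sum_congr rfl fun i hi => faceCenter_of_notMem_union (mem_compl.1 hi)]
    simp only [sum_const, nsmul_eq_mul, mul_one, hcompl, zero_add]
    rw [mul_div_cancel_of_imp' fun h => by linarith]
    ring

lemma faceCenter_mem_Ioo (hB : #B < r) (hA : #A + r < n) {i : Fin n} (hi : i ∉ A ∪ B) :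
    faceCenter n r A B i ∈ Set.Ioo 0 1 := by
  have hB' : (#B : ℝ) < r := by exact_mod_cast hB
  have hA' : (#A + r : ℝ) < n := by exact_mod_cast hA
  rw [faceCenter_of_notMem_union hi]
  exact ⟨div_pos (by linarith) (by linarith), (div_lt_one (by linarith)).2 (by linarith)⟩

lemma mul_le_max_zero {d x : ℝ} (h0 : 0 ≤ x) (h1 : x ≤ 1) : d * x ≤ max d 0 := by
  rcases le_total d 0 with hd | hd
  · simpa [hd] using mul_nonpos_of_nonpos_of_nonneg hd h0
  · simpa [hd] using mul_le_of_le_one_right hd h1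

lemma mul_eq_max_zero_iff {d x : ℝ} :
    d * x = max d 0 ↔ (d < 0 → x = 0) ∧ (0 < d → x = 1) := by
  rcases lt_trichotomy d 0 with hd | rfl | hd
  · simp [hd, hd.le, hd.ne, hd.not_gt]
  · simp
  · simp [hd, hd.le, hd.ne', hd.not_gt]

lemma setOf_forall_sum_mul_le_eq_faceQ (c : Fin n → ℝ) (t : ℝ) (hA : ∀ i, i ∈ A ↔ c i < t)
    (hB : ∀ i, i ∈ B ↔ t < c i) (hBr : #B ≤ r) (hAr : #A + r ≤ n) :
    {x ∈ hypersimplex n r | ∀ y ∈ hypersimplex n r, ∑ i, c i * y i ≤ ∑ i, c i * x i} =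
      faceQ n r A B := by
  have hAB : Disjoint A B :=
    disjoint_left.2 fun i hiA hiB => ((hA i).1 hiA).not_gt ((hB i).1 hiB)
  have hshift : ∀ x ∈ hypersimplex n r, ∑ i, c i * x i = ∑ i, (c i - t) * x i + t * r := by
    intro x hx
    simp [sub_mul, sum_sub_distrib, ← mul_sum, hx.2]
  have hle : ∀ x ∈ hypersimplex n r, ∑ i, (c i - t) * x i ≤ ∑ i, max (c i - t) 0 :=
    fun x hx => sum_le_sum fun i _ => mul_le_max_zero (hx.1 i).1 (hx.1 i).2
  have heq : ∀ x ∈ hypersimplex n r,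
      ∑ i, (c i - t) * x i = ∑ i, max (c i - t) 0 ↔ x ∈ faceQ n r A B := by
    intro x hx
    rw [sum_eq_sum_iff_of_le fun i _ => mul_le_max_zero (hx.1 i).1 (hx.1 i).2]
    simp only [mem_univ, true_implies, mul_eq_max_zero_iff, sub_neg,
      sub_pos, ← hA, ← hB, faceQ, Set.mem_ofPred_eq, hx, true_and, forall_and]
  have hp := faceCenter_mem_faceQ hAB hBr hAr
  ext x
  constructor
  · rintro ⟨hx, hmax⟩
    refine (heq x hx).1 (le_antisymm (hle x hx) ?_)
    have := hmax _ hp.1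
    rw [hshift _ hp.1, hshift x hx, (heq _ hp.1).2 hp] at this
    linarith
  · intro hx
    refine ⟨hx.1, fun y hy => ?_⟩
    rw [hshift y hy, hshift x hx.1, (heq x hx.1).2 hx]
    linarith [hle y hy]

lemma isExposedFaceOf_faceQ (hAB : Disjoint A B) (hBr : #B ≤ r) (hAr : #A + r ≤ n) :
    IsExposedFaceOf (hypersimplex n r) (faceQ n r A B) := by
  set c : Fin n → ℝ := fun i => if i ∈ B then 1 else if i ∈ A then -1 else 0
  refine ⟨⟨_, faceCenter_mem_faceQ hAB hBr hAr⟩, ∑ i, c i • LinearMap.proj i, ?_⟩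
  have hA : ∀ i, i ∈ A ↔ c i < 0 := fun i => by
    by_cases hiB : i ∈ B
    · simp [c, hiB, disjoint_right.1 hAB hiB]
    · by_cases hiA : i ∈ A <;> simp [c, hiA, hiB]
  have hB : ∀ i, i ∈ B ↔ 0 < c i := fun i => by
    by_cases hiB : i ∈ B
    · simp [c, hiB]
    · by_cases hiA : i ∈ A <;> simp [c, hiA, hiB]
  simpa using (setOf_forall_sum_mul_le_eq_faceQ c 0 hA hB hBr hAr).symm

lemma IsExposedFaceOf.exists_eq_faceQ (hr : 0 < r) (hrn : r ≤ n) {F : Set (Fin n → ℝ)}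
    (hF : IsExposedFaceOf (hypersimplex n r) F) :
    ∃ A B : Finset (Fin n), Disjoint A B ∧ #A ≤ n - r ∧ #B < r ∧ F = faceQ n r A B := by
  obtain ⟨-, ℓ, rfl⟩ := hF
  set c : Fin n → ℝ := fun i => ℓ fun j => if i = j then 1 else 0
  have hℓ : ∀ x, ℓ x = ∑ i, c i * x i := fun x => by
    rw [LinearMap.pi_apply_eq_sum_univ ℓ x]
    exact sum_congr rfl fun i _ => mul_comm _ _
  obtain ⟨t, hA, hB⟩ := exists_card_lt_le_and_card_gt_le c (k := n - r) (by omega)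
  refine ⟨({i | c i < t} : Finset _), ({i | t < c i} : Finset _),
    disjoint_filter.2 fun i _ h => lt_asymm h, hA, by omega, ?_⟩
  simp only [hℓ]
  exact setOf_forall_sum_mul_le_eq_faceQ c t (by simp) (by simp) (by omega) (by omega)

def sumAndRestrict (s : Finset (Fin n)) : (Fin n → ℝ) →ₗ[ℝ] ℝ × (s → ℝ) :=
  (∑ i, LinearMap.proj i).prod (LinearMap.funLeft ℝ ℝ (↑))

lemma mem_ker_sumAndRestrict {s : Finset (Fin n)} {v : Fin n → ℝ} :
    v ∈ LinearMap.ker (sumAndRestrict s) ↔ ∑ i, v i = 0 ∧ ∀ i ∈ s, v i = 0 := by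
  simp [sumAndRestrict, funext_iff, LinearMap.funLeft_apply]

lemma sumAndRestrict_surjective {s : Finset (Fin n)} (hs : #s < n) :
    Function.Surjective (sumAndRestrict s) := by
  rintro ⟨u, g⟩
  obtain ⟨i₀, -, hi₀⟩ :=
    exists_mem_notMem_of_card_lt_card (s := s) (t := univ) (by simpa using hs)
  set w : Fin n → ℝ := fun i => if h : i ∈ s then g ⟨i, h⟩ else 0
  have hw : ∑ i, w i = ∑ j, g j := by
    rw [← sum_subset (subset_univ s) fun i _ hi => dif_neg hi, ← sum_coe_sort]
    exact sum_congr rfl fun j _ => dif_pos j.2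
  refine ⟨w + (u - ∑ j, g j) • Pi.single i₀ 1, ?_⟩
  ext j
  · simp [sumAndRestrict, sum_add_distrib, hw, Pi.single_apply]
  · simp [sumAndRestrict, LinearMap.funLeft_apply, w, j.2, ne_of_mem_of_not_mem j.2 hi₀]

lemma finrank_ker_sumAndRestrict {s : Finset (Fin n)} (hs : #s < n) :
    Module.finrank ℝ (LinearMap.ker (sumAndRestrict s)) = n - 1 - #s := by
  have h := (sumAndRestrict s).finrank_range_add_finrank_ker
  rw [LinearMap.range_eq_top.2 (sumAndRestrict_surjective hs), finrank_top] at h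
  simp only [Module.finrank_prod, Module.finrank_self, Module.finrank_fintype_fun_eq_card,
    Fintype.card_coe, Fintype.card_fin] at h
  omega

open Filter Topology in
lemma exists_add_smul_mem_faceQ {p v : Fin n → ℝ} (hp : p ∈ faceQ n r A B)
    (hint : ∀ i ∉ A ∪ B, p i ∈ Set.Ioo 0 1) (hv : v ∈ LinearMap.ker (sumAndRestrict (A ∪ B))) :
    ∃ ε ≠ (0 : ℝ), p + ε • v ∈ faceQ n r A B := by
  rw [mem_ker_sumAndRestrict] at hv
  have hcube : ∀ᶠ ε in 𝓝 (0 : ℝ), ∀ i, p i + ε * v i ∈ Set.Icc 0 1 := by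
    refine eventually_all.2 fun i => ?_
    by_cases hi : i ∈ A ∪ B
    · simpa [hv.2 i hi] using hp.1.1 i
    · have hlim : Tendsto (fun ε => p i + ε * v i) (𝓝 0) (𝓝 (p i)) := by
        simpa using ((tendsto_id (x := 𝓝 (0 : ℝ))).mul_const (v i)).const_add (p i)
      exact (hlim.eventually (Ioo_mem_nhds (hint i hi).1 (hint i hi).2)).mono
        fun _ h => Set.Ioo_subset_Icc_self h
  obtain ⟨ε, hε, hε0⟩ :=
    ((hcube.filter_mono nhdsWithin_le_nhds).and self_mem_nhdsWithin).exists (f := 𝓝[≠] 0)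
  refine ⟨ε, hε0, ⟨fun i => hε i, ?_⟩, fun a ha => ?_, fun b hb => ?_⟩
  · simp [sum_add_distrib, ← mul_sum, hv.1, hp.1.2]
  · simp [hp.2.1 a ha, hv.2 a (mem_union_left B ha)]
  · simp [hp.2.2 b hb, hv.2 b (mem_union_right A hb)]

lemma vectorSpan_faceQ (hAB : Disjoint A B) (hBr : #B < r) (hAr : #A + r < n) :
    vectorSpan ℝ (faceQ n r A B) = LinearMap.ker (sumAndRestrict (A ∪ B)) := by
  refine le_antisymm ?_ fun v hv => ?_
  · rw [vectorSpan_def, Submodule.span_le]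
    rintro _ ⟨x, hx, y, hy, rfl⟩
    refine mem_ker_sumAndRestrict.2 ⟨by simp [sum_sub_distrib, hx.1.2, hy.1.2], fun i hi => ?_⟩
    rcases mem_union.1 hi with hi | hi
    · simp [hx.2.1 i hi, hy.2.1 i hi]
    · simp [hx.2.2 i hi, hy.2.2 i hi]
  · have hp := faceCenter_mem_faceQ hAB hBr.le hAr.le
    obtain ⟨ε, hε0, hmem⟩ :=
      exists_add_smul_mem_faceQ hp (fun i hi => faceCenter_mem_Ioo hBr hAr hi) hv
    have := vsub_mem_vectorSpan ℝ hmem hp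
    rwa [vsub_eq_sub, add_sub_cancel_left, Submodule.smul_mem_iff _ hε0] at this

lemma finrank_direction_affineSpan_faceQ (hAB : Disjoint A B) (hBr : #B < r) (hAr : #A + r < n) :
    Module.finrank ℝ (affineSpan ℝ (faceQ n r A B)).direction = n - 1 - #A - #B := by
  rw [direction_affineSpan, vectorSpan_faceQ hAB hBr hAr,
    finrank_ker_sumAndRestrict (by rw [card_union_of_disjoint hAB]; omega),
    card_union_of_disjoint hAB, Nat.sub_add_eq]

end

/-- Faces of the hypersimplex: a nonempty `F ⊆ ℝ^n` is an exposed face of `Δ(n,r)` iff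
`F = 𝔮(A,B)` for disjoint `A,B ⊆ [n]` with (`|A| = n−r` and `|B| = r`) or (`|A| < n−r`
and `|B| < r`). Moreover each such `𝔮(A,B)` is nonempty; it is the single 0/1 point with
support `B` when `|A| = n−r, |B| = r`, and has affine span of dimension
`n − 1 − |A| − |B|` when `|A| < n−r, |B| < r`. -/
theorem hypersimplex_faces (n r : ℕ) (hr : 0 < r) (hrn : r < n) :
    (∀ F : Set (Fin n → ℝ),
      IsExposedFaceOf (hypersimplex n r) F ↔
      ∃ A B : Finset (Fin n), Disjoint A B ∧
        ((A.card = n - r ∧ B.card = r) ∨ (A.card < n - r ∧ B.card < r)) ∧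
        F = faceQ n r A B) ∧
    (∀ A B : Finset (Fin n), Disjoint A B →
      ((A.card = n - r ∧ B.card = r) ∨ (A.card < n - r ∧ B.card < r) →
        (faceQ n r A B).Nonempty) ∧
      (A.card = n - r ∧ B.card = r →
        faceQ n r A B = {fun i => if i ∈ B then (1 : ℝ) else 0}) ∧
      (A.card < n - r ∧ B.card < r →
        Module.finrank ℝ (affineSpan ℝ (faceQ n r A B)).direction
          = n - 1 - A.card - B.card)) := by
  refine ⟨fun F => ⟨fun hF => ?_, ?_⟩, fun A B hAB => ⟨?_, ?_, ?_⟩⟩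
  · obtain ⟨A, B, hAB, hA, hB, rfl⟩ := hF.exists_eq_faceQ hr hrn.le
    by_cases hA' : #A = n - r
    · refine ⟨A, Aᶜ, disjoint_compl_right, Or.inl ⟨hA', ?_⟩,
        faceQ_eq_faceQ_compl hrn.le hAB hA'⟩
      rw [card_compl, Fintype.card_fin, hA']
      omega
    · exact ⟨A, B, hAB, Or.inr ⟨by omega, hB⟩, rfl⟩
  · rintro ⟨A, B, hAB, hcard, rfl⟩
    exact isExposedFaceOf_faceQ hAB (by omega) (by omega)
  · intro hcard
    exact ⟨_, faceCenter_mem_faceQ hAB (by omega) (by omega)⟩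
  · rintro ⟨hA, hB⟩
    exact faceQ_eq_singleton hAB (by omega) hB
  · rintro ⟨hA, hB⟩
    exact finrank_direction_affineSpan_faceQ hAB hB (by omega)
end
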